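/- arXiv:2009.03781 — 7 statements merged into one kernel-verified Lean document; each statement's English description precedes it below -/
import Mathlib

section
/- If a group G is the product G = AB of two abelian subgroups A and B (i.e., every element of G can be written as ab with a ∈ A, b ∈ B), then G is metabelian, i.e., its derived subgroup is abelian. -/
/-!
Let `N = ⁅A, B⁆` be the subgroup generated by the commutators `⁅a, b⁆`, `a ∈ A`, `b ∈ B`.
Since `G = AB = BA` and `A`, `B` are abelian, conjugating `⁅a, b⁆` by an element of `B`
(resp. `A`) only changes its `A`-entry (resp. its `B`-entry), so `N` is normal; as the images
of `A` and `B` in `G ⧸ N` commute, `G ⧸ N` is abelian and `⁅G, G⁆ ≤ N`.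
The heart of Itô's argument is that `N` is abelian: conjugating `⁅a, b⁆` successively by
`b'⁻¹`, `a'⁻¹`, `b'`, `a'` changes and then restores its two entries, so `⁅a', b'⁆`
centralizes `⁅a, b⁆`.
-/

open scoped commutatorElement

namespace Subgroup

variable {G : Type*} [Group G]

theorem normal_closure_of_conj_mem {s : Set G} (hs : ∀ g : G, ∀ x ∈ s, g * x * g⁻¹ ∈ s) :
    (closure s).Normal := by
  have hconj : Group.conjugatesOfSet s ⊆ s := fun x hx => by
    obtain ⟨y, hy, hyx⟩ := Group.mem_conjugatesOfSet_iff.mp hx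
    obtain ⟨g, rfl⟩ := isConj_iff.mp hyx
    exact hs g y hy
  rw [le_antisymm closure_le_normalClosure (closure_mono hconj)]
  infer_instance

variable {H : Subgroup G} [IsMulCommutative H]

theorem conj_commutatorElement_eq_of_conj_left {c x x' y u : G} (hc : c ∈ H) (hy : y ∈ H)
    (hu : u ∈ H) (h : c * x * c⁻¹ = x' * u) : c * ⁅x, y⁆ * c⁻¹ = ⁅x', y⁆ := by
  have hcy : c * y * c⁻¹ = y := by rw [setLike_mul_comm hc hy, mul_inv_cancel_right]
  have huy : u * y * u⁻¹ = y := by rw [setLike_mul_comm hu hy, mul_inv_cancel_right]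
  rw [conjugate_commutatorElement, h, hcy]
  calc ⁅x' * u, y⁆ = x' * (u * y * u⁻¹) * x'⁻¹ * y⁻¹ := by group
    _ = ⁅x', y⁆ := by rw [huy, commutatorElement_def]

theorem conj_commutatorElement_eq_of_conj_right {c x y y' u : G} (hc : c ∈ H) (hx : x ∈ H)
    (hu : u ∈ H) (h : c * y * c⁻¹ = y' * u) : c * ⁅x, y⁆ * c⁻¹ = ⁅x, y'⁆ := by
  rw [← commutatorElement_inv, ← commutatorElement_inv y', ← conj_inv,
    conj_commutatorElement_eq_of_conj_left hc hx hu h]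

end Subgroup

theorem QuotientGroup.commute_mk_of_commutatorElement_mem {G : Type*} [Group G] {N : Subgroup G}
    [N.Normal] {x y : G} (h : ⁅x, y⁆ ∈ N) : Commute (x : G ⧸ N) y := by
  have h₁ := (eq_one_iff _).mpr h
  simp only [commutatorElement_def, mk_mul, mk_inv] at h₁
  rwa [← commutatorElement_def, commutatorElement_eq_one_iff_commute] at h₁

open Subgroup

section ProductOfAbelianSubgroups

variable {G : Type*} [Group G] {A B : Subgroup G}

theorem exists_mem_mul_mem_swap (hAB : ∀ g : G, ∃ a ∈ A, ∃ b ∈ B, g = a * b) (g : G) :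
    ∃ b ∈ B, ∃ a ∈ A, g = b * a := by
  obtain ⟨a, ha, b, hb, hg⟩ := hAB g⁻¹
  exact ⟨b⁻¹, inv_mem hb, a⁻¹, inv_mem ha, by rw [← mul_inv_rev, ← hg, inv_inv]⟩

variable [IsMulCommutative A] [IsMulCommutative B]
  (hAB : ∀ g : G, ∃ a ∈ A, ∃ b ∈ B, g = a * b)
include hAB

theorem normal_commutator_of_forall_exists_mul : (⁅A, B⁆ : Subgroup G).Normal := by
  refine normal_closure_of_conj_mem ?_
  rintro g _ ⟨a, ha, b, hb, rfl⟩
  obtain ⟨a', ha', b', hb', rfl⟩ := hAB g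
  obtain ⟨a₁, ha₁, b₁, hb₁, h₁⟩ := hAB (b' * a * b'⁻¹)
  obtain ⟨b₂, hb₂, a₂, ha₂, h₂⟩ := exists_mem_mul_mem_swap hAB (a' * b * a'⁻¹)
  refine ⟨a₁, ha₁, b₂, hb₂, ?_⟩
  calc ⁅a₁, b₂⁆ = a' * ⁅a₁, b⁆ * a'⁻¹ :=
        (conj_commutatorElement_eq_of_conj_right ha' ha₁ ha₂ h₂).symm
    _ = a' * (b' * ⁅a, b⁆ * b'⁻¹) * a'⁻¹ := by
      rw [conj_commutatorElement_eq_of_conj_left hb' hb hb₁ h₁]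
    _ = a' * b' * ⁅a, b⁆ * (a' * b')⁻¹ := by group

theorem commutator_le_commutator_of_forall_exists_mul [(⁅A, B⁆ : Subgroup G).Normal] :
    commutator G ≤ ⁅A, B⁆ := by
  rw [← Normal.quotient_commutative_iff_commutator_le, isMulCommutative_iff]
  intro x y
  obtain ⟨g, rfl⟩ := QuotientGroup.mk_surjective x
  obtain ⟨h, rfl⟩ := QuotientGroup.mk_surjective y
  obtain ⟨a, ha, b, hb, rfl⟩ := hAB g
  obtain ⟨a', ha', b', hb', rfl⟩ := hAB h
  have haa' : Commute (a : G ⧸ ⁅A, B⁆) a' := congrArg _ (setLike_mul_comm ha ha')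
  have hbb' : Commute (b : G ⧸ ⁅A, B⁆) b' := congrArg _ (setLike_mul_comm hb hb')
  have hab' : Commute (a : G ⧸ ⁅A, B⁆) b' :=
    QuotientGroup.commute_mk_of_commutatorElement_mem (commutator_mem_commutator ha hb')
  have hba' : Commute (b : G ⧸ ⁅A, B⁆) a' :=
    (QuotientGroup.commute_mk_of_commutatorElement_mem (commutator_mem_commutator ha' hb)).symm
  simp only [QuotientGroup.mk_mul]
  exact ((haa'.mul_right hab').mul_left (hba'.mul_right hbb')).eq

theorem commute_commutatorElement_of_forall_exists_mul {a a' b b' : G}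
    (ha : a ∈ A) (ha' : a' ∈ A) (hb : b ∈ B) (hb' : b' ∈ B) : Commute ⁅a, b⁆ ⁅a', b'⁆ := by
  obtain ⟨a₁, ha₁, b₁, hb₁, h₁⟩ := hAB (b'⁻¹ * a * b')
  obtain ⟨b₂, hb₂, a₂, ha₂, h₂⟩ := exists_mem_mul_mem_swap hAB (a'⁻¹ * b * a')
  have s₁ : b'⁻¹ * ⁅a, b⁆ * b'⁻¹⁻¹ = ⁅a₁, b⁆ :=
    conj_commutatorElement_eq_of_conj_left (inv_mem hb') hb hb₁ (by rwa [inv_inv])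
  have s₂ : a'⁻¹ * ⁅a₁, b⁆ * a'⁻¹⁻¹ = ⁅a₁, b₂⁆ :=
    conj_commutatorElement_eq_of_conj_right (inv_mem ha') ha₁ ha₂ (by rwa [inv_inv])
  have s₃ : b' * ⁅a₁, b₂⁆ * b'⁻¹ = ⁅a, b₂⁆ := by
    refine conj_commutatorElement_eq_of_conj_left hb' hb₂
      (mul_mem (mul_mem hb' (inv_mem hb₁)) (inv_mem hb')) ?_
    rw [eq_mul_inv_of_mul_eq h₁.symm]
    group
  have s₄ : a' * ⁅a, b₂⁆ * a'⁻¹ = ⁅a, b⁆ := by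
    refine conj_commutatorElement_eq_of_conj_right ha' ha
      (mul_mem (mul_mem ha' (inv_mem ha₂)) (inv_mem ha')) ?_
    rw [eq_mul_inv_of_mul_eq h₂.symm]
    group
  have hconj : ⁅a', b'⁆ * ⁅a, b⁆ * ⁅a', b'⁆⁻¹ = ⁅a, b⁆ :=
    calc ⁅a', b'⁆ * ⁅a, b⁆ * ⁅a', b'⁆⁻¹
        = a' * (b' * (a'⁻¹ * (b'⁻¹ * ⁅a, b⁆ * b'⁻¹⁻¹) * a'⁻¹⁻¹) * b'⁻¹) * a'⁻¹ := by group
      _ = ⁅a, b⁆ := by rw [s₁, s₂, s₃, s₄]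
  rw [mul_inv_eq_iff_eq_mul] at hconj
  exact hconj.symm

theorem isMulCommutative_commutator_of_forall_exists_mul :
    IsMulCommutative (⁅A, B⁆ : Subgroup G) := by
  refine isMulCommutative_closure ?_
  rintro _ ⟨a, ha, b, hb, rfl⟩ _ ⟨a', ha', b', hb', rfl⟩
  exact (commute_commutatorElement_of_forall_exists_mul hAB ha ha' hb hb').eq

end ProductOfAbelianSubgroups

/-- Itô's theorem: a product of two abelian subgroups is metabelian. -/
theorem ito_metabelian {G : Type*} [Group G] (A B : Subgroup G)
    (hA : ∀ x ∈ A, ∀ y ∈ A, x * y = y * x)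
    (hB : ∀ x ∈ B, ∀ y ∈ B, x * y = y * x)
    (hprod : ∀ g : G, ∃ a ∈ A, ∃ b ∈ B, g = a * b) :
    ∀ x ∈ commutator G, ∀ y ∈ commutator G, x * y = y * x := by
  have := IsMulCommutative.of_setLike_mul_comm hA
  have := IsMulCommutative.of_setLike_mul_comm hB
  have := normal_commutator_of_forall_exists_mul hprod
  have hle := commutator_le_commutator_of_forall_exists_mul hprod
  have hcomm := isMulCommutative_commutator_of_forall_exists_mul hprod
  intro x hx y hy
  exact setLike_mul_comm (hle hx) (hle hy)
end

section
/- If a periodic group G is the product G = AB of two abelian subgroups A and B, then G is locally finite. -/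
/-!
Itô's argument. Since `G = AB = BA`, write `a' * b * a'⁻¹ = b₁ * a₁` and `b' * a * b'⁻¹ = a₂ * b₂`;
as `A` and `B` are abelian, conjugating `⁅a, b⁆` by `a' * b'` or by `b' * a'` gives `⁅a₂, b₁⁆`
either way. So the commutators `⁅a, b⁆` are permuted by conjugation and commute with every
`(b' * a')⁻¹ * (a' * b') = ⁅a'⁻¹, b'⁻¹⁆`: `⁅A, B⁆` is an abelian normal subgroup with abelian
quotient, and `G` is metabelian. A periodic abelian group is locally finite, and local finiteness
passes to extensions since a finite-index subgroup of a finitely generated group is finitely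
generated (Schreier).
-/

open scoped commutatorElement

section Commutator

variable {G : Type*} [Group G] {x y z : G}

theorem commutatorElement_mul_right_of_commute (h : Commute x z) : ⁅x, y * z⁆ = ⁅x, y⁆ := by
  rw [commutatorElement_mul_right_eq_mul_conj, commutatorElement_eq_one_iff_commute.2 h, mul_one,
    mul_inv_cancel_right]

theorem commutatorElement_mul_left_of_commute (h : Commute y z) : ⁅x * y, z⁆ = ⁅x, z⁆ := by
  rw [commutatorElement_mul_left_eq_conj_mul, commutatorElement_eq_one_iff_commute.2 h, mul_one,
    mul_inv_cancel, one_mul]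

end Commutator

namespace Subgroup

variable {G : Type*} [Group G]

theorem closure_normal_of_conj_mem {S : Set G} (hS : ∀ g, ∀ s ∈ S, g * s * g⁻¹ ∈ S) :
    (closure S).Normal :=
  ⟨fun _ hn g ↦ (closure_le ((closure S).comap (MulAut.conj g).toMonoidHom)).2
    (fun s hs ↦ subset_closure (hS g s hs)) hn⟩

variable {A B : Subgroup G} (hAB : ∀ g : G, ∃ a ∈ A, ∃ b ∈ B, g = a * b)
include hAB

theorem exists_eq_mul_swap_of_forall_eq_mul (g : G) : ∃ b ∈ B, ∃ a ∈ A, g = b * a := by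
  obtain ⟨a, ha, b, hb, h⟩ := hAB g⁻¹
  exact ⟨b⁻¹, inv_mem hb, a⁻¹, inv_mem ha, by rw [← mul_inv_rev, ← h, inv_inv]⟩

theorem exists_conj_commutatorElement_eq_of_mem_left [IsMulCommutative A] {a' : G} (ha' : a' ∈ A)
    (b : G) :
    ∃ b₁ ∈ B, ∀ a ∈ A, a' * ⁅a, b⁆ * a'⁻¹ = ⁅a, b₁⁆ := by
  obtain ⟨b₁, hb₁, a₁, ha₁, h⟩ := exists_eq_mul_swap_of_forall_eq_mul hAB (a' * b * a'⁻¹)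
  refine ⟨b₁, hb₁, fun a ha ↦ ?_⟩
  rw [conjugate_commutatorElement, setLike_mul_comm ha' ha, mul_inv_cancel_right, h,
    commutatorElement_mul_right_of_commute (setLike_mul_comm ha ha₁)]

theorem exists_conj_commutatorElement_eq_of_mem_right [IsMulCommutative B] {b' : G} (hb' : b' ∈ B)
    (a : G) :
    ∃ a₁ ∈ A, ∀ b ∈ B, b' * ⁅a, b⁆ * b'⁻¹ = ⁅a₁, b⁆ := by
  obtain ⟨a₁, ha₁, b₁, hb₁, h⟩ := hAB (b' * a * b'⁻¹)
  refine ⟨a₁, ha₁, fun b hb ↦ ?_⟩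
  rw [conjugate_commutatorElement, setLike_mul_comm hb' hb, mul_inv_cancel_right, h,
    commutatorElement_mul_left_of_commute (setLike_mul_comm hb₁ hb)]

variable [IsMulCommutative A] [IsMulCommutative B]

theorem commutator_normal_of_forall_eq_mul : (⁅A, B⁆ : Subgroup G).Normal := by
  refine closure_normal_of_conj_mem ?_
  rintro g - ⟨a, ha, b, hb, rfl⟩
  obtain ⟨a', ha', b', hb', rfl⟩ := hAB g
  obtain ⟨a₁, ha₁, hb'⟩ := exists_conj_commutatorElement_eq_of_mem_right hAB hb' a
  obtain ⟨b₁, hb₁, ha'⟩ := exists_conj_commutatorElement_eq_of_mem_left hAB ha' b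
  refine ⟨a₁, ha₁, b₁, hb₁, ?_⟩
  rw [← ha' a₁ ha₁, ← hb' b hb]
  group

theorem conj_commutatorElement_mul_eq_conj_mul_swap {a a' b b' : G} (ha : a ∈ A) (ha' : a' ∈ A)
    (hb : b ∈ B) (hb' : b' ∈ B) :
    (a' * b') * ⁅a, b⁆ * (a' * b')⁻¹ = (b' * a') * ⁅a, b⁆ * (b' * a')⁻¹ := by
  obtain ⟨a₁, ha₁, hb'⟩ := exists_conj_commutatorElement_eq_of_mem_right hAB hb' a
  obtain ⟨b₁, hb₁, ha'⟩ := exists_conj_commutatorElement_eq_of_mem_left hAB ha' b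
  calc (a' * b') * ⁅a, b⁆ * (a' * b')⁻¹ = a' * (b' * ⁅a, b⁆ * b'⁻¹) * a'⁻¹ := by group
    _ = ⁅a₁, b₁⁆ := by rw [hb' b hb, ha' a₁ ha₁]
    _ = b' * (a' * ⁅a, b⁆ * a'⁻¹) * b'⁻¹ := by rw [ha' a ha, hb' b₁ hb₁]
    _ = (b' * a') * ⁅a, b⁆ * (b' * a')⁻¹ := by group

theorem commute_commutatorElement_of_forall_eq_mul {a b c d : G} (ha : a ∈ A) (hb : b ∈ B)
    (hc : c ∈ A) (hd : d ∈ B) : Commute ⁅a, b⁆ ⁅c, d⁆ := by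
  have h := conj_commutatorElement_mul_eq_conj_mul_swap hAB ha (inv_mem hc) hb (inv_mem hd)
  have hconj : ⁅c, d⁆ * ⁅a, b⁆ * ⁅c, d⁆⁻¹ = ⁅a, b⁆ := by
    calc ⁅c, d⁆ * ⁅a, b⁆ * ⁅c, d⁆⁻¹
        = (d⁻¹ * c⁻¹)⁻¹ * ((c⁻¹ * d⁻¹) * ⁅a, b⁆ * (c⁻¹ * d⁻¹)⁻¹) * (d⁻¹ * c⁻¹) := by group
      _ = ⁅a, b⁆ := by rw [h]; group
  exact (mul_inv_eq_iff_eq_mul.1 hconj).symm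

theorem isMulCommutative_commutator_of_forall_eq_mul : IsMulCommutative (⁅A, B⁆ : Subgroup G) :=
  isMulCommutative_closure <| by
    rintro - ⟨a, ha, b, hb, rfl⟩ - ⟨c, hc, d, hd, rfl⟩
    exact commute_commutatorElement_of_forall_eq_mul hAB ha hb hc hd

theorem commutator_le_commutator_of_forall_eq_mul : _root_.commutator G ≤ ⁅A, B⁆ := by
  have := commutator_normal_of_forall_eq_mul hAB
  let π := QuotientGroup.mk' (⁅A, B⁆ : Subgroup G)
  have hπ : ∀ a ∈ A, ∀ b ∈ B, Commute (π a) (π b) := fun a ha b hb ↦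
    commutatorElement_eq_one_iff_commute.1 <| by
      rw [← map_commutatorElement, QuotientGroup.mk'_apply, QuotientGroup.eq_one_iff]
      exact commutator_mem_commutator ha hb
  refine Normal.quotient_commutative_iff_commutator_le.1 ⟨⟨fun u v ↦ ?_⟩⟩
  obtain ⟨g, rfl⟩ := QuotientGroup.mk'_surjective _ u
  obtain ⟨h, rfl⟩ := QuotientGroup.mk'_surjective _ v
  obtain ⟨a, ha, b, hb, rfl⟩ := hAB g
  obtain ⟨c, hc, d, hd, rfl⟩ := hAB h
  simp only [map_mul]
  exact Commute.mul_left ((Commute.map (setLike_mul_comm ha hc) π).mul_right (hπ a ha d hd))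
    (((hπ c hc b hb).symm).mul_right (Commute.map (setLike_mul_comm hb hd) π))

end Subgroup

theorem isMulCommutative_commutator_of_forall_eq_mul {G : Type*} [Group G] {A B : Subgroup G}
    [IsMulCommutative A] [IsMulCommutative B] (hAB : ∀ g : G, ∃ a ∈ A, ∃ b ∈ B, g = a * b) :
    IsMulCommutative (commutator G) := by
  have hle := Subgroup.commutator_le_commutator_of_forall_eq_mul hAB
  have := Subgroup.isMulCommutative_commutator_of_forall_eq_mul hAB
  exact Subgroup.le_centralizer_iff_isMulCommutative.1 <|
    hle.trans <| (Subgroup.le_centralizer _).trans <| Subgroup.centralizer_le hle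

namespace Group

def IsLocallyFinite (G : Type*) [Group G] : Prop :=
  ∀ H : Subgroup G, H.FG → Finite H

variable {G Q : Type*} [Group G] [Group Q]

open scoped IsMulCommutative in
theorem isLocallyFinite_of_isMulTorsion [IsMulCommutative G] (hG : IsMulTorsion G) :
    IsLocallyFinite G := fun H hH ↦
  have : Group.FG H := (fg_iff_subgroup_fg H).2 hH
  CommGroup.finite_of_fg_isMulTorsion _ (hG.subgroup H)

theorem IsLocallyFinite.of_ker (f : G →* Q) (hQ : IsLocallyFinite Q)
    (hK : IsLocallyFinite f.ker) : IsLocallyFinite G := by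
  intro H hH
  have : Group.FG H := (fg_iff_subgroup_fg H).2 hH
  let φ := f.comp H.subtype
  have : Finite φ.range := hQ _ ((fg_iff_subgroup_fg _).1 inferInstance)
  -- Schreier: `φ.ker` has finite index in `H`, hence is finitely generated.
  let ψ : φ.ker →* f.ker := (H.subtype.comp φ.ker.subtype).codRestrict f.ker fun x ↦ x.2
  have hψ : Function.Injective ψ := fun x y hxy ↦ Subtype.ext <| Subtype.ext <|
    congrArg (fun z : f.ker ↦ (z : G)) hxy
  have : Finite ψ.range := hK _ ((fg_iff_subgroup_fg _).1 inferInstance)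
  have : Finite φ.ker := Finite.of_injective ψ.rangeRestrict
    (MonoidHom.rangeRestrict_injective_iff.2 hψ)
  exact φ.finite_iff_finite_ker_range.2 ⟨‹_›, ‹_›⟩

theorem isLocallyFinite_of_isMulTorsion_of_isMulCommutative_commutator
    [IsMulCommutative (commutator G)] (hG : IsMulTorsion G) : IsLocallyFinite G :=
  IsLocallyFinite.of_ker Abelianization.of
    (isLocallyFinite_of_isMulTorsion <|
      hG.of_surjective (f := Abelianization.of) (QuotientGroup.mk'_surjective _))
    (Abelianization.ker_of (G := G) ▸ isLocallyFinite_of_isMulTorsion (hG.subgroup _))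

end Group

/-- A periodic product of two abelian subgroups is locally finite. -/
theorem periodic_product_of_abelians_locallyFinite {G : Type*} [Group G]
    (hper : ∀ g : G, IsOfFinOrder g) (A B : Subgroup G)
    (hA : ∀ x ∈ A, ∀ y ∈ A, x * y = y * x)
    (hB : ∀ x ∈ B, ∀ y ∈ B, x * y = y * x)
    (hprod : ∀ g : G, ∃ a ∈ A, ∃ b ∈ B, g = a * b) :
    ∀ H : Subgroup G, H.FG → Finite H := by
  have : IsMulCommutative A := .of_setLike_mul_comm hA
  have : IsMulCommutative B := .of_setLike_mul_comm hB
  have := isMulCommutative_commutator_of_forall_eq_mul hprod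
  exact Group.isLocallyFinite_of_isMulTorsion_of_isMulCommutative_commutator hper
end

section
/- If G is a p-group that is the product G = AB of two locally cyclic subgroups A and B, and C ≤ A, D ≤ B are subgroups, then CD = DC, so CD is a subgroup of G. -/
open scoped Pointwise
/-- A group is locally cyclic if every finitely generated subgroup is cyclic. -/
def IsLocallyCyclic (G : Type*) [Group G] : Prop :=
  ∀ H : Subgroup G, H.FG → IsCyclic H

open Subgroup

section Part1
variable {G : Type*} [Group G] {p : ℕ}

lemma pg_orderOf_eq_pow (hp : p.Prime) (hG : IsPGroup p G) (g : G) :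
    ∃ k : ℕ, orderOf g = p ^ k := by
  obtain ⟨k, hk⟩ := hG g
  have := orderOf_dvd_of_pow_eq_one hk
  obtain ⟨j, hj, h⟩ := (Nat.dvd_prime_pow hp).mp this
  exact ⟨j, h⟩

lemma pg_isOfFinOrder (hp : p.Prime) (hG : IsPGroup p G) (g : G) : IsOfFinOrder g := by
  obtain ⟨k, hk⟩ := pg_orderOf_eq_pow hp hG g
  refine orderOf_pos_iff.mp ?_
  rw [hk]
  exact pow_pos hp.pos _

lemma mem_zpowers_of_orderOf_dvd {g x y : G} (hg : IsOfFinOrder g)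
    (hx : x ∈ zpowers g) (hy : y ∈ zpowers g) (hdvd : orderOf x ∣ orderOf y) :
    x ∈ zpowers y := by
  by_cases hx1 : x = 1
  · rw [hx1]; exact one_mem _
  have hy1 : y ≠ 1 := by
    rintro rfl
    simp only [orderOf_one, Nat.dvd_one, orderOf_eq_one_iff] at hdvd
    exact hx1 hdvd
  obtain ⟨i, hi⟩ : ∃ i : ℕ, g ^ i = x := by
    obtain ⟨i, hi⟩ := (hg.mem_powers_iff_mem_zpowers.mpr hx)
    exact ⟨i, hi⟩
  obtain ⟨j, hj⟩ : ∃ j : ℕ, g ^ j = y := by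
    obtain ⟨j, hj⟩ := (hg.mem_powers_iff_mem_zpowers.mpr hy)
    exact ⟨j, hj⟩
  have hi0 : i ≠ 0 := by rintro rfl; simp at hi; exact hx1 hi.symm
  have hj0 : j ≠ 0 := by rintro rfl; simp at hj; exact hy1 hj.symm
  set m := orderOf g with hm
  have hmpos : 0 < m := hg.orderOf_pos
  have hordx : orderOf x = m / Nat.gcd m i := by
    rw [← hi, orderOf_pow' g hi0]
  have hordy : orderOf y = m / Nat.gcd m j := by
    rw [← hj, orderOf_pow' g hj0]
  set g₁ := Nat.gcd m i with hg₁
  set g₂ := Nat.gcd m j with hg₂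
  have hg₁m : g₁ ∣ m := Nat.gcd_dvd_left m i
  have hg₂m : g₂ ∣ m := Nat.gcd_dvd_left m j
  have hg21 : g₂ ∣ g₁ := by
    rw [hordx, hordy] at hdvd
    obtain ⟨t, ht⟩ := hdvd
    have h1 : g₁ * (m / g₁) = m := Nat.mul_div_cancel' hg₁m
    have h2 : g₂ * (m / g₂) = m := Nat.mul_div_cancel' hg₂m
    have hpos : 0 < m / g₁ := Nat.div_pos (Nat.le_of_dvd hmpos hg₁m) (Nat.pos_of_dvd_of_pos hg₁m hmpos)
    refine ⟨t, ?_⟩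
    have : g₁ * (m / g₁) = (g₂ * t) * (m / g₁) := by
      rw [h1, mul_assoc, mul_comm t, ← ht, h2]
    exact Nat.eq_of_mul_eq_mul_right hpos this
  -- g ^ g₂ ∈ zpowers y via Bezout
  have key : g ^ (g₂ : ℤ) ∈ zpowers y := by
    have hbez : (g₂ : ℤ) = m * Nat.gcdA m j + j * Nat.gcdB m j := Nat.gcd_eq_gcd_ab m j
    have : g ^ (g₂ : ℤ) = (g ^ (m : ℤ)) ^ Nat.gcdA m j * (g ^ (j : ℤ)) ^ Nat.gcdB m j := by
      rw [← zpow_mul, ← zpow_mul, ← zpow_add, ← hbez]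
    rw [this]
    have hgm : g ^ (m : ℤ) = 1 := by
      rw [zpow_natCast, pow_orderOf_eq_one]
    rw [hgm, one_zpow, one_mul]
    have : g ^ (j : ℤ) = y := by rw [zpow_natCast, hj]
    rw [this]
    exact zpow_mem (mem_zpowers y) _
  have hdvd_i : g₂ ∣ i := hg21.trans (Nat.gcd_dvd_right m i)
  obtain ⟨s, hs⟩ := hdvd_i
  have : x = (g ^ (g₂ : ℤ)) ^ (s : ℤ) := by
    rw [← zpow_mul, ← Nat.cast_mul, ← hs, zpow_natCast, hi]
  rw [this]
  exact zpow_mem key _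

lemma zpowers_comparable (hp : p.Prime) (hG : IsPGroup p G) {g x y : G}
    (hx : x ∈ zpowers g) (hy : y ∈ zpowers g) :
    x ∈ zpowers y ∨ y ∈ zpowers x := by
  have hg : IsOfFinOrder g := pg_isOfFinOrder hp hG g
  obtain ⟨a, ha⟩ := pg_orderOf_eq_pow hp hG x
  obtain ⟨b, hb⟩ := pg_orderOf_eq_pow hp hG y
  rcases le_total a b with h | h
  · exact Or.inl (mem_zpowers_of_orderOf_dvd hg hx hy (by rw [ha, hb]; exact pow_dvd_pow p h))
  · exact Or.inr (mem_zpowers_of_orderOf_dvd hg hy hx (by rw [ha, hb]; exact pow_dvd_pow p h))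

/-- Comparability of cyclic subgroups generated by elements of a locally cyclic subgroup. -/
lemma lc_comparable (hp : p.Prime) (hG : IsPGroup p G) {A : Subgroup G}
    (hA : IsLocallyCyclic A) {x y : G} (hx : x ∈ A) (hy : y ∈ A) :
    x ∈ zpowers y ∨ y ∈ zpowers x := by
  set x' : A := ⟨x, hx⟩
  set y' : A := ⟨y, hy⟩
  set H := Subgroup.closure ({x', y'} : Set A) with hH
  have hFG : H.FG := by
    rw [Subgroup.fg_iff]
    exact ⟨{x', y'}, rfl, Set.toFinite _⟩
  have hcyc := hA H hFG
  obtain ⟨g, hgen⟩ := hcyc.exists_generator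
  have hx'H : x' ∈ H := Subgroup.subset_closure (by simp)
  have hy'H : y' ∈ H := Subgroup.subset_closure (by simp)
  set g₀ : G := ((g : A) : G) with hg₀
  have hxz : x ∈ zpowers g₀ := by
    obtain ⟨k, hk⟩ := hgen ⟨x', hx'H⟩
    refine ⟨k, ?_⟩
    have := congrArg (fun t : H => ((t : A) : G)) hk
    simpa using this
  have hyz : y ∈ zpowers g₀ := by
    obtain ⟨k, hk⟩ := hgen ⟨y', hy'H⟩
    refine ⟨k, ?_⟩
    have := congrArg (fun t : H => ((t : A) : G)) hk
    simpa using this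
  exact zpowers_comparable hp hG hxz hyz

end Part1

section Part2
variable {G : Type*} [Group G] {p : ℕ}

/-- In a `p`-group, any nontrivial element has an element of order `p` among its powers. -/
lemma pg_exists_orderp (hp : p.Prime) (hG : IsPGroup p G) {x : G} (hx1 : x ≠ 1) :
    ∃ z ∈ zpowers x, orderOf z = p := by
  obtain ⟨k, hk⟩ := pg_orderOf_eq_pow hp hG x
  have hk0 : k ≠ 0 := by
    rintro rfl
    rw [pow_zero, orderOf_eq_one_iff] at hk
    exact hx1 hk
  refine ⟨x ^ (p ^ (k-1)), pow_mem (mem_zpowers x) _, ?_⟩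
  have hne : p ^ (k-1) ≠ 0 := pow_ne_zero _ hp.ne_zero
  rw [orderOf_pow' x hne, hk]
  have hdvd : p ^ (k-1) ∣ p ^ k := pow_dvd_pow p (Nat.sub_le k 1)
  rw [Nat.gcd_eq_right hdvd]
  have : p ^ k = p ^ (k-1) * p := by
    rw [← pow_succ]
    congr 1
    omega
  rw [this, Nat.mul_div_cancel_left _ (pow_pos hp.pos _)]

/-- Elements of a locally cyclic subgroup commute. -/
lemma lc_commute (hp : p.Prime) (hG : IsPGroup p G) {A : Subgroup G}
    (hA : IsLocallyCyclic A) {x y : G} (hx : x ∈ A) (hy : y ∈ A) : Commute x y := by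
  rcases lc_comparable hp hG hA hx hy with h | h
  · obtain ⟨k, hk⟩ := h
    rw [← hk]
    exact (Commute.refl y).zpow_left k
  · obtain ⟨k, hk⟩ := h
    rw [← hk]
    exact (Commute.refl x).zpow_right k

/-- An order-`p` element of `A` lies in the cyclic subgroup generated by any
nontrivial element of `A`. -/
lemma lc_orderp_mem (hp : p.Prime) (hG : IsPGroup p G) {A : Subgroup G}
    (hA : IsLocallyCyclic A) {c x : G} (hc : c ∈ A) (hc1 : c ≠ 1)
    (hx : x ∈ A) (hxp : orderOf x = p) : x ∈ zpowers c := by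
  rcases lc_comparable hp hG hA hx hc with h | h
  · exact h
  · -- c ∈ zpowers x
    have hcx : orderOf c ∣ p := by
      obtain ⟨k, hk⟩ := h
      have : c ^ p  = 1 := by
        rw [← hk, ← zpow_natCast, ← zpow_mul, mul_comm, zpow_mul, zpow_natCast,
          ← hxp, pow_orderOf_eq_one, one_zpow]
      exact orderOf_dvd_of_pow_eq_one this
    have hoc : orderOf c = p := by
      rcases (Nat.dvd_prime hp).mp hcx with h1 | h1
      · exact absurd (orderOf_eq_one_iff.mp h1) hc1
      · exact h1
    have hfin : IsOfFinOrder x := pg_isOfFinOrder hp hG x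
    exact mem_zpowers_of_orderOf_dvd hfin (mem_zpowers x) h (by rw [hoc, hxp])

/-- The set of elements killed by `p` in a locally cyclic `p`-subgroup is finite. -/
lemma lc_ppow_finite (hp : p.Prime) (hG : IsPGroup p G) {A : Subgroup G}
    (hA : IsLocallyCyclic A) : {x : G | x ∈ A ∧ x ^ p = 1}.Finite := by
  by_cases hv : ∃ v ∈ A, orderOf v = p
  · obtain ⟨v, hvA, hvp⟩ := hv
    have hv1 : v ≠ 1 := by
      intro h
      rw [h, orderOf_one] at hvp
      exact hp.one_lt.ne hvp
    have hsub : {x : G | x ∈ A ∧ x ^ p = 1} ⊆ ↑(zpowers v) := by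
      rintro x ⟨hxA, hxp⟩
      by_cases hx1 : x = 1
      · rw [hx1]; exact one_mem _
      · have hox : orderOf x = p := by
          have := orderOf_dvd_of_pow_eq_one hxp
          rcases (Nat.dvd_prime hp).mp this with h1 | h1
          · exact absurd (orderOf_eq_one_iff.mp h1) hx1
          · exact h1
        exact lc_orderp_mem hp hG hA hvA hv1 hxA hox
    exact Set.Finite.subset ((pg_isOfFinOrder hp hG v).finite_zpowers) hsub
  · have : {x : G | x ∈ A ∧ x ^ p = 1} ⊆ {1} := by
      rintro x ⟨hxA, hxp⟩
      by_contra hx1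
      simp only [Set.mem_singleton_iff] at hx1
      obtain ⟨z, hz, hzp⟩ := pg_exists_orderp hp hG (hx1 : x ≠ 1)
      exact hv ⟨z, (zpowers_le.mpr hxA) hz, hzp⟩
    exact Set.Finite.subset (Set.finite_singleton 1) this

/-- Subgroups contained in a locally cyclic `p`-subgroup are comparable. -/
lemma lc_subgroup_comparable (hp : p.Prime) (hG : IsPGroup p G) {A : Subgroup G}
    (hA : IsLocallyCyclic A) {H K : Subgroup G} (hHA : H ≤ A) (hKA : K ≤ A) :
    H ≤ K ∨ K ≤ H := by
  by_cases h : H ≤ K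
  · exact Or.inl h
  · right
    rw [SetLike.le_def] at h
    push_neg at h
    obtain ⟨x, hxH, hxK⟩ := h
    intro k hk
    rcases lc_comparable hp hG hA (hHA hxH) (hKA hk) with h1 | h1
    · exact absurd ((zpowers_le.mpr hk) h1) hxK
    · exact (zpowers_le.mpr hxH) h1

/-- A subgroup of a locally cyclic `p`-subgroup avoiding some element of it is finite. -/
lemma lc_proper_finite (hp : p.Prime) (hG : IsPGroup p G) {A : Subgroup G}
    (hA : IsLocallyCyclic A) {H : Subgroup G} (hHA : H ≤ A) {x : G}
    (hx : x ∈ A) (hxH : x ∉ H) : ((H : Set G)).Finite := by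
  have hsub : (H : Set G) ⊆ ↑(zpowers x) := by
    intro h hh
    rcases lc_comparable hp hG hA (hHA hh) hx with h1 | h1
    · exact h1
    · exact absurd ((zpowers_le.mpr hh) h1) hxH
  exact Set.Finite.subset ((pg_isOfFinOrder hp hG x).finite_zpowers) hsub

/-- An infinite subgroup of a locally cyclic `p`-subgroup is the whole thing. -/
lemma lc_eq_of_infinite (hp : p.Prime) (hG : IsPGroup p G) {A : Subgroup G}
    (hA : IsLocallyCyclic A) {H : Subgroup G} (hHA : H ≤ A)
    (hinf : ((H : Set G)).Infinite) : A ≤ H := by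
  intro x hx
  by_contra hxH
  exact hinf (lc_proper_finite hp hG hA hHA hx hxH)

end Part2

section Part3
variable {G : Type*} [Group G] {p : ℕ}

/-- Conjugating a cross-commutator by an element commuting with the `A`-side. -/
lemma conjK_byA {a c c₁ b b₁ : G} (hac : a * c = c * a) (hac₁ : a * c₁ = c₁ * a)
    (h : b * c = c₁ * b₁) :
    c⁻¹ * (a⁻¹ * b⁻¹ * a * b) * c = a⁻¹ * b₁⁻¹ * a * b₁ := by
  have h1 : c⁻¹ * a⁻¹ = a⁻¹ * c⁻¹ := by
    have := congrArg (·⁻¹) hac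
    simpa [mul_inv_rev] using this
  have hinv : c⁻¹ * b⁻¹ = b₁⁻¹ * c₁⁻¹ := by
    have := congrArg (·⁻¹) h
    simpa [mul_inv_rev] using this
  have h2 : c₁⁻¹ * a * c₁ = a := by
    rw [mul_assoc, hac₁, ← mul_assoc, inv_mul_cancel, one_mul]
  calc c⁻¹ * (a⁻¹ * b⁻¹ * a * b) * c
      = (c⁻¹ * a⁻¹) * b⁻¹ * a * (b * c) := by group
    _ = (a⁻¹ * c⁻¹) * b⁻¹ * a * (b * c) := by rw [h1]
    _ = a⁻¹ * (c⁻¹ * b⁻¹) * a * (b * c) := by group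
    _ = a⁻¹ * (b₁⁻¹ * c₁⁻¹) * a * (c₁ * b₁) := by rw [hinv, h]
    _ = a⁻¹ * b₁⁻¹ * (c₁⁻¹ * a * c₁) * b₁ := by group
    _ = a⁻¹ * b₁⁻¹ * a * b₁ := by rw [h2]

/-- Conjugating a cross-commutator by an element commuting with the `B`-side. -/
lemma conjK_byB {a b d d₂ a₂ : G} (hbd : b * d = d * b) (hbd₂ : b * d₂ = d₂ * b)
    (h : a * d = d₂ * a₂) :
    d⁻¹ * (a⁻¹ * b⁻¹ * a * b) * d = a₂⁻¹ * b⁻¹ * a₂ * b := by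
  have hinv : d⁻¹ * a⁻¹ = a₂⁻¹ * d₂⁻¹ := by
    have := congrArg (·⁻¹) h
    simpa [mul_inv_rev] using this
  have h1 : b * d = d * b := hbd
  have h2 : d₂⁻¹ * b⁻¹ * d₂ = b⁻¹ := by
    have hcomm : Commute b d₂ := hbd₂
    have hbi : b⁻¹ * d₂ = d₂ * b⁻¹ := (hcomm.inv_left).eq
    rw [mul_assoc, hbi, ← mul_assoc, inv_mul_cancel, one_mul]
  calc d⁻¹ * (a⁻¹ * b⁻¹ * a * b) * d
      = (d⁻¹ * a⁻¹) * b⁻¹ * a * (b * d) := by group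
    _ = (d⁻¹ * a⁻¹) * b⁻¹ * a * (d * b) := by rw [h1]
    _ = (d⁻¹ * a⁻¹) * b⁻¹ * (a * d) * b := by group
    _ = (a₂⁻¹ * d₂⁻¹) * b⁻¹ * (d₂ * a₂) * b := by rw [hinv, h]
    _ = a₂⁻¹ * (d₂⁻¹ * b⁻¹ * d₂) * a₂ * b := by group
    _ = a₂⁻¹ * b⁻¹ * a₂ * b := by rw [h2]

end Part3

section Part4
variable {G : Type*} [Group G] {p : ℕ}

lemma hprodBA {A B : Subgroup G} (hprod : ∀ g : G, ∃ a ∈ A, ∃ b ∈ B, g = a * b) :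
    ∀ g : G, ∃ b ∈ B, ∃ a ∈ A, g = b * a := by
  intro g
  obtain ⟨a, ha, b, hb, h⟩ := hprod g⁻¹
  exact ⟨b⁻¹, inv_mem hb, a⁻¹, inv_mem ha, by rw [← mul_inv_rev, ← h, inv_inv]⟩

/-- Itô's commutation: cross-commutators commute pairwise (trivial intersection case). -/
lemma ito_comm (hp : p.Prime) (hG : IsPGroup p G) {A B : Subgroup G}
    (hA : IsLocallyCyclic A) (hB : IsLocallyCyclic B)
    (hprod : ∀ g : G, ∃ a ∈ A, ∃ b ∈ B, g = a * b) (hbot : A ⊓ B = ⊥)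
    {a b x y : G} (ha : a ∈ A) (hb : b ∈ B) (hx : x ∈ A) (hy : y ∈ B) :
    Commute (a⁻¹ * b⁻¹ * a * b) (x⁻¹ * y⁻¹ * x * y) := by
  obtain ⟨γ₁, hγ₁, b₁, hb₁, hw1⟩ := hprod (b * x⁻¹)
  obtain ⟨δ₁, hδ₁, a₂, ha₂, hw2⟩ := hprodBA hprod (a * y⁻¹)
  obtain ⟨γ₂, hγ₂, b₂, hb₂, hw3⟩ := hprod (b₁ * x)
  obtain ⟨δ₂, hδ₂, a₃, ha₃, hw4⟩ := hprodBA hprod (a₂ * y)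
  have commA : ∀ {u v : G}, u ∈ A → v ∈ A → u * v = v * u := by
    intro u v hu hv
    exact (lc_commute hp hG hA hu hv).eq
  have commB : ∀ {u v : G}, u ∈ B → v ∈ B → u * v = v * u := by
    intro u v hu hv
    exact (lc_commute hp hG hB hu hv).eq
  have step1 : (x⁻¹)⁻¹ * (a⁻¹ * b⁻¹ * a * b) * (x⁻¹) = a⁻¹ * b₁⁻¹ * a * b₁ :=
    conjK_byA ((lc_commute hp hG hA ha hx).inv_right.eq) (commA ha hγ₁) hw1
  have step2 : (y⁻¹)⁻¹ * (a⁻¹ * b₁⁻¹ * a * b₁) * (y⁻¹) = a₂⁻¹ * b₁⁻¹ * a₂ * b₁ :=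
    conjK_byB ((lc_commute hp hG hB hb₁ hy).inv_right.eq) (commB hb₁ hδ₁) hw2
  have step3 : x⁻¹ * (a₂⁻¹ * b₁⁻¹ * a₂ * b₁) * x = a₂⁻¹ * b₂⁻¹ * a₂ * b₂ :=
    conjK_byA (commA ha₂ hx) (commA ha₂ hγ₂) hw3
  have step4 : y⁻¹ * (a₂⁻¹ * b₂⁻¹ * a₂ * b₂) * y = a₃⁻¹ * b₂⁻¹ * a₃ * b₂ :=
    conjK_byB (commB hb₂ hy) (commB hb₂ hδ₂) hw4
  have ha₃a : a₃ = a := by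
    have heq : a * a₃⁻¹ = δ₁ * δ₂ := by
      have : a = δ₁ * (δ₂ * a₃) := by
        calc a = (a * y⁻¹) * y := by group
          _ = (δ₁ * a₂) * y := by rw [hw2]
          _ = δ₁ * (a₂ * y) := by group
          _ = δ₁ * (δ₂ * a₃) := by rw [hw4]
      rw [this]; group
    have hmem : a * a₃⁻¹ ∈ A ⊓ B := by
      rw [Subgroup.mem_inf]
      exact ⟨mul_mem ha (inv_mem ha₃), by rw [heq]; exact mul_mem hδ₁ hδ₂⟩
    rw [hbot, Subgroup.mem_bot] at hmem
    have := mul_inv_eq_one.mp hmem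
    exact this.symm
  have hb₂b : b₂ = b := by
    have heq : b * b₂⁻¹ = γ₁ * γ₂ := by
      have : b = γ₁ * (γ₂ * b₂) := by
        calc b = (b * x⁻¹) * x := by group
          _ = (γ₁ * b₁) * x := by rw [hw1]
          _ = γ₁ * (b₁ * x) := by group
          _ = γ₁ * (γ₂ * b₂) := by rw [hw3]
      rw [this]; group
    have hmem : b * b₂⁻¹ ∈ A ⊓ B := by
      rw [Subgroup.mem_inf]
      exact ⟨by rw [heq]; exact mul_mem hγ₁ hγ₂, mul_mem hb (inv_mem hb₂)⟩
    rw [hbot, Subgroup.mem_bot] at hmem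
    exact (mul_inv_eq_one.mp hmem).symm
  set s := a⁻¹ * b⁻¹ * a * b with hs
  set t := x⁻¹ * y⁻¹ * x * y with ht
  have hconj : t⁻¹ * s * t = a₃⁻¹ * b₂⁻¹ * a₃ * b₂ := by
    calc t⁻¹ * s * t
        = y⁻¹ * (x⁻¹ * ((y⁻¹)⁻¹ * ((x⁻¹)⁻¹ * s * x⁻¹) * y⁻¹) * x) * y := by
          rw [ht]; group
      _ = y⁻¹ * (x⁻¹ * ((y⁻¹)⁻¹ * (a⁻¹ * b₁⁻¹ * a * b₁) * y⁻¹) * x) * y := by rw [step1]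
      _ = y⁻¹ * (x⁻¹ * (a₂⁻¹ * b₁⁻¹ * a₂ * b₁) * x) * y := by rw [step2]
      _ = y⁻¹ * (a₂⁻¹ * b₂⁻¹ * a₂ * b₂) * y := by rw [step3]
      _ = a₃⁻¹ * b₂⁻¹ * a₃ * b₂ := step4
  have hfix : t⁻¹ * s * t = s := by rw [hconj, ha₃a, hb₂b]
  have : s * t = t * (t⁻¹ * s * t) := by group
  rw [hfix] at this
  exact this

end Part4

section Part5
variable {G : Type*} [Group G] {p : ℕ}

def itoSet (A B : Subgroup G) : Set G := {g | ∃ a ∈ A, ∃ b ∈ B, g = a⁻¹ * b⁻¹ * a * b}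

lemma itoSet_conj (hp : p.Prime) (hG : IsPGroup p G) {A B : Subgroup G}
    (hA : IsLocallyCyclic A) (hB : IsLocallyCyclic B)
    (hprod : ∀ g : G, ∃ a ∈ A, ∃ b ∈ B, g = a * b) :
    ∀ s ∈ itoSet A B, ∀ g : G, g⁻¹ * s * g ∈ itoSet A B := by
  rintro s ⟨a, ha, b, hb, rfl⟩ g
  obtain ⟨α, hα, β, hβ, hg⟩ := hprod g
  obtain ⟨γ₁, hγ₁, b₁, hb₁, hw1⟩ := hprod (b * α)
  obtain ⟨δ₂, hδ₂, a₂, ha₂, hw2⟩ := hprodBA hprod (a * β)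
  have step1 : α⁻¹ * (a⁻¹ * b⁻¹ * a * b) * α = a⁻¹ * b₁⁻¹ * a * b₁ :=
    conjK_byA (lc_commute hp hG hA ha hα).eq (lc_commute hp hG hA ha hγ₁).eq hw1
  have step2 : β⁻¹ * (a⁻¹ * b₁⁻¹ * a * b₁) * β = a₂⁻¹ * b₁⁻¹ * a₂ * b₁ :=
    conjK_byB (lc_commute hp hG hB hb₁ hβ).eq (lc_commute hp hG hB hb₁ hδ₂).eq hw2
  have : g⁻¹ * (a⁻¹ * b⁻¹ * a * b) * g = a₂⁻¹ * b₁⁻¹ * a₂ * b₁ := by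
    calc g⁻¹ * (a⁻¹ * b⁻¹ * a * b) * g
        = β⁻¹ * (α⁻¹ * (a⁻¹ * b⁻¹ * a * b) * α) * β := by rw [hg]; group
      _ = β⁻¹ * (a⁻¹ * b₁⁻¹ * a * b₁) * β := by rw [step1]
      _ = a₂⁻¹ * b₁⁻¹ * a₂ * b₁ := step2
  rw [this]
  exact ⟨a₂, ha₂, b₁, hb₁, rfl⟩

lemma itoM_normal (hp : p.Prime) (hG : IsPGroup p G) {A B : Subgroup G}
    (hA : IsLocallyCyclic A) (hB : IsLocallyCyclic B)
    (hprod : ∀ g : G, ∃ a ∈ A, ∃ b ∈ B, g = a * b) :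
    (Subgroup.closure (itoSet A B)).Normal := by
  constructor
  intro n hn g
  revert g
  refine Subgroup.closure_induction ?_ ?_ ?_ ?_ hn
  · intro s hs g
    have := itoSet_conj hp hG hA hB hprod s hs g⁻¹
    rw [inv_inv] at this
    exact Subgroup.subset_closure this
  · intro g; simpa using one_mem _
  · intro x y _ _ hx hy g
    have : g * (x * y) * g⁻¹ = (g * x * g⁻¹) * (g * y * g⁻¹) := by group
    rw [this]
    exact mul_mem (hx g) (hy g)
  · intro x _ hx g
    have : g * x⁻¹ * g⁻¹ = (g * x * g⁻¹)⁻¹ := by group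
    rw [this]
    exact inv_mem (hx g)

lemma itoM_comm (hp : p.Prime) (hG : IsPGroup p G) {A B : Subgroup G}
    (hA : IsLocallyCyclic A) (hB : IsLocallyCyclic B)
    (hprod : ∀ g : G, ∃ a ∈ A, ∃ b ∈ B, g = a * b) (hbot : A ⊓ B = ⊥) :
    ∀ x ∈ Subgroup.closure (itoSet A B), ∀ y ∈ Subgroup.closure (itoSet A B),
      Commute x y := by
  have base : ∀ s ∈ itoSet A B, ∀ y ∈ Subgroup.closure (itoSet A B), Commute s y := by
    rintro s hs y hy
    revert hy
    refine Subgroup.closure_induction ?_ ?_ ?_ ?_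
    · rintro t ⟨x', hx', y', hy', rfl⟩
      obtain ⟨a, ha, b, hb, rfl⟩ := hs
      exact ito_comm hp hG hA hB hprod hbot ha hb hx' hy'
    · exact Commute.one_right s
    · intro u v _ _ hu hv; exact hu.mul_right hv
    · intro u _ hu; exact hu.inv_right
  intro x hx y hy
  revert hx
  refine Subgroup.closure_induction ?_ ?_ ?_ ?_
  · intro s hs; exact base s hs y hy
  · exact Commute.one_left y
  · intro u v _ _ hu hv; exact hu.mul_left hv
  · intro u _ hu; exact hu.inv_left

lemma itoSet_all_comm (hp : p.Prime) (hG : IsPGroup p G) {A B : Subgroup G}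
    (hA : IsLocallyCyclic A) (hB : IsLocallyCyclic B)
    (hprod : ∀ g : G, ∃ a ∈ A, ∃ b ∈ B, g = a * b)
    (htriv : ∀ s ∈ itoSet A B, s = 1) : ∀ g h : G, Commute g h := by
  have cross : ∀ {a b : G}, a ∈ A → b ∈ B → Commute a b := by
    intro a b ha hb
    have h1 := htriv _ ⟨a, ha, b, hb, rfl⟩
    have : a * b = b * a := by
      have := congrArg (fun t => b * a * t) h1
      simpa [mul_assoc] using this
    exact this
  intro g h
  obtain ⟨a, ha, b, hb, rfl⟩ := hprod g
  obtain ⟨x, hx, y, hy, rfl⟩ := hprod h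
  have c1 : Commute a x := lc_commute hp hG hA ha hx
  have c2 : Commute a y := cross ha hy
  have c3 : Commute b x := (cross hx hb).symm
  have c4 : Commute b y := lc_commute hp hG hB hb hy
  exact (c1.mul_right c2).mul_left (c3.mul_right c4)

end Part5

section Part6
variable {G : Type*} [Group G] {p : ℕ}

lemma factor_le_centralizer (hp : p.Prime) (hG : IsPGroup p G) {A : Subgroup G}
    (hA : IsLocallyCyclic A) (hAinf : (A : Set G).Infinite) {N : Subgroup G}
    (hN : N.Normal) (hfin : (N : Set G).Finite) :
    A ≤ Subgroup.centralizer (N : Set G) := by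
  haveI : Infinite ↥(A : Set G) := hAinf.to_subtype
  haveI : Finite ↥(N : Set G) := hfin.to_subtype
  set f : ↥(A : Set G) → (↥(N : Set G) → ↥(N : Set G)) :=
    fun a n => ⟨(a : G) * (n : G) * (a : G)⁻¹, hN.conj_mem (n : G) n.2 (a : G)⟩ with hf
  obtain ⟨f₀, hf₀⟩ := Finite.exists_infinite_fiber f
  haveI := hf₀
  obtain ⟨a₀, ha₀⟩ : Nonempty ↥(f ⁻¹' {f₀}) := inferInstance
  set K := Subgroup.centralizer (N : Set G) ⊓ A with hK
  have hconj : ∀ a : ↥(A : Set G), a ∈ f ⁻¹' {f₀} →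
      (a₀ : G)⁻¹ * (a : G) ∈ K := by
    intro a ha
    have heq : f a = f a₀ := by
      rw [Set.mem_preimage, Set.mem_singleton_iff] at ha
      rw [Set.mem_preimage, Set.mem_singleton_iff] at ha₀
      rw [ha, ha₀]
    have ha₀A : (a₀ : G) ∈ A := a₀.2
    have haA : (a : G) ∈ A := a.2
    refine Subgroup.mem_inf.mpr ⟨?_, mul_mem (inv_mem ha₀A) haA⟩
    rw [Subgroup.mem_centralizer_iff]
    intro n hn
    have := congrFun heq ⟨n, hn⟩
    rw [Subtype.ext_iff] at this
    simp only [hf] at this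
    -- this : a * n * a⁻¹ = a₀ * n * a₀⁻¹
    set x : G := (a : G) with hx
    set y : G := (a₀ : G) with hy
    have h1 : x * n * x⁻¹ = y * n * y⁻¹ := this
    have : y⁻¹ * (x * n * x⁻¹) * x = y⁻¹ * (y * n * y⁻¹) * x := by rw [h1]
    calc n * (y⁻¹ * x) = y⁻¹ * (y * n * y⁻¹) * x := by group
      _ = y⁻¹ * (x * n * x⁻¹) * x := by rw [h1]
      _ = (y⁻¹ * x) * n := by group
  have hKinf : (K : Set G).Infinite := by
    have himg : ((fun a : ↥(A : Set G) => (a₀ : G)⁻¹ * (a : G)) ''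
        (f ⁻¹' {f₀})) ⊆ (K : Set G) := by
      rintro _ ⟨a, ha, rfl⟩
      exact hconj a ha
    have hpre : (f ⁻¹' {f₀}).Infinite := Set.infinite_coe_iff.mp hf₀
    have hinj : Set.InjOn (fun a : ↥(A : Set G) => (a₀ : G)⁻¹ * (a : G)) (f ⁻¹' {f₀}) := by
      intro u _ v _ huv
      exact Subtype.ext (mul_left_cancel huv)
    exact (hpre.image hinj).mono himg
  have := lc_eq_of_infinite hp hG hA (inf_le_right : K ≤ A) hKinf
  exact fun a ha => (Subgroup.mem_inf.mp (this ha)).1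

/-- If both factors are infinite, elements of finite normal subgroups are central. -/
lemma finite_normal_central (hp : p.Prime) (hG : IsPGroup p G) {A B : Subgroup G}
    (hA : IsLocallyCyclic A) (hB : IsLocallyCyclic B)
    (hprod : ∀ g : G, ∃ a ∈ A, ∃ b ∈ B, g = a * b)
    (hAinf : (A : Set G).Infinite) (hBinf : (B : Set G).Infinite)
    {N : Subgroup G} (hN : N.Normal) (hfin : (N : Set G).Finite) :
    ∀ n ∈ N, ∀ g : G, Commute n g := by
  intro n hn g
  obtain ⟨a, ha, b, hb, rfl⟩ := hprod g
  have hca := factor_le_centralizer hp hG hA hAinf hN hfin ha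
  have hcb := factor_le_centralizer hp hG hB hBinf hN hfin hb
  rw [Subgroup.mem_centralizer_iff] at hca hcb
  have h1 : Commute n a := hca n hn
  have h2 : Commute n b := hcb n hn
  exact h1.mul_right h2

end Part6

section Part7
variable {G : Type*} [Group G] {p : ℕ}

lemma B_normal_of_A_finite (hp : p.Prime) (hG : IsPGroup p G) {A B : Subgroup G}
    (hA : IsLocallyCyclic A) (hB : IsLocallyCyclic B)
    (hprod : ∀ g : G, ∃ a ∈ A, ∃ b ∈ B, g = a * b)
    (hAfin : (A : Set G).Finite) (hBinf : (B : Set G).Infinite) : B.Normal := by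
  have key : ∀ g : G, ∀ b ∈ B, g * b * g⁻¹ ∈ B := by
    intro g
    haveI : Finite ↥(A : Set G) := hAfin.to_subtype
    have hsurj : Function.Surjective
        (fun a : ↥(A : Set G) => (QuotientGroup.mk (a : G) : G ⧸ B)) := by
      intro q
      obtain ⟨x, rfl⟩ := QuotientGroup.mk_surjective q
      obtain ⟨a, ha, b, hb, rfl⟩ := hprod x
      refine ⟨⟨a, ha⟩, ?_⟩
      show (QuotientGroup.mk a : G ⧸ B) = QuotientGroup.mk (a * b)
      rw [QuotientGroup.eq]
      have : a⁻¹ * (a * b) = b := by group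
      rw [this]; exact hb
    haveI : Finite (G ⧸ B) := Finite.of_surjective _ hsurj
    haveI : Infinite ↥(B : Set G) := hBinf.to_subtype
    set ψ : ↥(B : Set G) → G ⧸ B :=
      fun b => (QuotientGroup.mk (g * (b : G) * g⁻¹) : G ⧸ B) with hψ
    obtain ⟨q₀, hq₀⟩ := Finite.exists_infinite_fiber ψ
    haveI := hq₀
    obtain ⟨b₀, hb₀⟩ : Nonempty ↥(ψ ⁻¹' {q₀}) := inferInstance
    set D := B ⊓ Subgroup.comap ((MulAut.conj g).toMonoidHom) B with hD
    have hDmem : ∀ b' : ↥(B : Set G), b' ∈ ψ ⁻¹' {q₀} → (b₀ : G)⁻¹ * (b' : G) ∈ D := by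
      intro b' hb'
      have heq : ψ b' = ψ b₀ := by
        rw [Set.mem_preimage, Set.mem_singleton_iff] at hb'
        rw [Set.mem_preimage, Set.mem_singleton_iff] at hb₀
        rw [hb', hb₀]
      have hmem : (g * (b₀ : G) * g⁻¹)⁻¹ * (g * (b' : G) * g⁻¹) ∈ B := by
        rw [← QuotientGroup.eq]
        exact heq.symm
      have hsimp : (g * (b₀ : G) * g⁻¹)⁻¹ * (g * (b' : G) * g⁻¹)
          = g * ((b₀ : G)⁻¹ * (b' : G)) * g⁻¹ := by group
      rw [hsimp] at hmem
      refine Subgroup.mem_inf.mpr ⟨mul_mem (inv_mem b₀.2) b'.2, ?_⟩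
      rw [Subgroup.mem_comap]
      simpa using hmem
    have hDinf : (D : Set G).Infinite := by
      have hpre : (ψ ⁻¹' {q₀}).Infinite := Set.infinite_coe_iff.mp hq₀
      have hinj : Set.InjOn (fun b' : ↥(B : Set G) => (b₀ : G)⁻¹ * (b' : G)) (ψ ⁻¹' {q₀}) := by
        intro u _ v _ huv
        exact Subtype.ext (mul_left_cancel huv)
      refine (hpre.image hinj).mono ?_
      rintro _ ⟨b', hb', rfl⟩
      exact hDmem b' hb'
    have hBD := lc_eq_of_infinite hp hG hB (inf_le_left : D ≤ B) hDinf
    intro b hb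
    have := Subgroup.mem_inf.mp (hBD hb)
    have h2 := this.2
    rw [Subgroup.mem_comap] at h2
    simpa using h2
  exact ⟨fun b hb g => key g b hb⟩

end Part7

section Part8
variable {G : Type*} [Group G] {p : ℕ}

def omegaSub (p : ℕ) (M : Subgroup G) (hM : ∀ x ∈ M, ∀ y ∈ M, Commute x y) : Subgroup G where
  carrier := {x | x ∈ M ∧ x ^ p = 1}
  one_mem' := ⟨one_mem M, one_pow p⟩
  mul_mem' := by
    rintro x y ⟨hxM, hxp⟩ ⟨hyM, hyp⟩
    exact ⟨mul_mem hxM hyM, by rw [(hM x hxM y hyM).mul_pow, hxp, hyp, one_mul]⟩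
  inv_mem' := by
    rintro x ⟨hxM, hxp⟩
    exact ⟨inv_mem hxM, by rw [inv_pow, hxp, inv_one]⟩

lemma omegaSub_mem {M : Subgroup G} {hM : ∀ x ∈ M, ∀ y ∈ M, Commute x y} {x : G} :
    x ∈ omegaSub p M hM ↔ x ∈ M ∧ x ^ p = 1 := Iff.rfl

lemma omegaSub_le {M : Subgroup G} {hM : ∀ x ∈ M, ∀ y ∈ M, Commute x y} :
    omegaSub p M hM ≤ M := fun _ hx => hx.1

lemma omegaSub_normal {M : Subgroup G} {hM : ∀ x ∈ M, ∀ y ∈ M, Commute x y}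
    (hMn : M.Normal) : (omegaSub p M hM).Normal := by
  constructor
  rintro n ⟨hnM, hnp⟩ g
  refine ⟨hMn.conj_mem n hnM g, ?_⟩
  rw [conj_pow, hnp, mul_one, mul_inv_cancel]

lemma omegaSub_exists_ne_one (hp : p.Prime) (hG : IsPGroup p G) {M : Subgroup G}
    {hM : ∀ x ∈ M, ∀ y ∈ M, Commute x y} {x : G} (hx : x ∈ M) (hx1 : x ≠ 1) :
    ∃ z, z ∈ omegaSub p M hM ∧ z ≠ 1 := by
  obtain ⟨z, hz, hzp⟩ := pg_exists_orderp hp hG hx1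
  refine ⟨z, ⟨(zpowers_le.mpr hx) hz, by rw [← hzp]; exact pow_orderOf_eq_one z⟩, ?_⟩
  intro h
  rw [h, orderOf_one] at hzp
  exact hp.one_lt.ne hzp

lemma closure_finite_of_comm : ∀ (s : Set G), s.Finite →
    (∀ x ∈ s, ∀ y ∈ s, Commute x y) → (∀ x ∈ s, IsOfFinOrder x) →
    ((Subgroup.closure s : Subgroup G) : Set G).Finite := by
  intro s hs
  refine Set.Finite.induction_on s hs ?_ ?_
  · intro _ _
    rw [Subgroup.closure_empty]
    simpa using Set.finite_singleton (1 : G)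
  · intro a s ha hsfin IH hcomm hord
    have hcomm' : ∀ x ∈ s, ∀ y ∈ s, Commute x y := fun x hx y hy =>
      hcomm x (Set.mem_insert_of_mem a hx) y (Set.mem_insert_of_mem a hy)
    have hord' : ∀ x ∈ s, IsOfFinOrder x := fun x hx => hord x (Set.mem_insert_of_mem a hx)
    have hfinclos := IH hcomm' hord'
    have hacomm : ∀ y ∈ Subgroup.closure s, Commute a y := by
      intro y hy
      refine Subgroup.closure_induction ?_ ?_ ?_ ?_ hy
      · intro x hx
        exact hcomm a (Set.mem_insert a s) x (Set.mem_insert_of_mem a hx)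
      · exact Commute.one_right a
      · intro u v _ _ hu hv; exact hu.mul_right hv
      · intro u _ hu; exact hu.inv_right
    set T : Subgroup G :=
      { carrier := (zpowers a : Set G) * ((Subgroup.closure s : Subgroup G) : Set G)
        one_mem' := ⟨1, one_mem _, 1, one_mem _, one_mul 1⟩
        mul_mem' := by
          rintro z₁ z₂ ⟨x₁, hx₁, y₁, hy₁, rfl⟩ ⟨x₂, hx₂, y₂, hy₂, rfl⟩
          refine ⟨x₁ * x₂, mul_mem hx₁ hx₂, y₁ * y₂, mul_mem hy₁ hy₂, ?_⟩
          have hc : Commute x₂ y₁ := by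
            obtain ⟨k, rfl⟩ := hx₂
            exact ((hacomm y₁ hy₁).zpow_left k)
          calc x₁ * x₂ * (y₁ * y₂) = x₁ * (x₂ * y₁) * y₂ := by group
            _ = x₁ * (y₁ * x₂) * y₂ := by rw [hc.eq]
            _ = x₁ * y₁ * (x₂ * y₂) := by group
        inv_mem' := by
          rintro z ⟨x, hx, y, hy, rfl⟩
          refine ⟨x⁻¹, inv_mem hx, y⁻¹, inv_mem hy, ?_⟩
          have hc : Commute x y := by
            obtain ⟨k, rfl⟩ := hx
            exact ((hacomm y hy).zpow_left k)
          show x⁻¹ * y⁻¹ = (x * y)⁻¹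
          rw [mul_inv_rev]
          exact hc.inv_inv.eq } with hT
    have hle : Subgroup.closure (insert a s) ≤ T := by
      rw [Subgroup.closure_le]
      rintro x (rfl | hx)
      · exact ⟨x, mem_zpowers x, 1, one_mem _, mul_one x⟩
      · exact ⟨1, one_mem _, x, Subgroup.subset_closure hx, one_mul x⟩
    have hTfin : (T : Set G).Finite := by
      have h1 : ((zpowers a : Subgroup G) : Set G).Finite :=
        (hord a (Set.mem_insert a s)).finite_zpowers
      exact h1.mul hfinclos
    exact hTfin.subset hle

/-- In a `p`-group, a nontrivial abelian normal subgroup has, for any `b`,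
a nontrivial element commuting with `b`. -/
lemma exists_fixed (hp : p.Prime) (hG : IsPGroup p G) {W : Subgroup G} (hWn : W.Normal)
    (hWcomm : ∀ x ∈ W, ∀ y ∈ W, Commute x y) {w₀ : G} (hw₀ : w₀ ∈ W) (hw₀1 : w₀ ≠ 1)
    (b : G) : ∃ w ∈ W, w ≠ 1 ∧ Commute w b := by
  set o := orderOf b with ho
  have hopos : 0 < o := (pg_isOfFinOrder hp hG b).orderOf_pos
  set O : Set G := (fun i : ℕ => b ^ i * w₀ * (b ^ i)⁻¹) '' (Set.Iio o) with hO
  have hOfin : O.Finite := (Set.finite_Iio o).image _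
  have hOW : O ⊆ (W : Set G) := by
    rintro _ ⟨i, _, rfl⟩
    exact hWn.conj_mem w₀ hw₀ (b ^ i)
  have hw₀O : w₀ ∈ O := ⟨0, hopos, by simp⟩
  have hOcomm : ∀ x ∈ O, ∀ y ∈ O, Commute x y := fun x hx y hy =>
    hWcomm x (hOW hx) y (hOW hy)
  have hOord : ∀ x ∈ O, IsOfFinOrder x := fun x _ => pg_isOfFinOrder hp hG x
  set V := Subgroup.closure O with hV
  have hVfin : (V : Set G).Finite := closure_finite_of_comm O hOfin hOcomm hOord
  have hVW : V ≤ W := (Subgroup.closure_le W).mpr hOW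
  have hObinv : ∀ x ∈ O, b * x * b⁻¹ ∈ O := by
    rintro _ ⟨i, hi, rfl⟩
    by_cases hi1 : i + 1 < o
    · refine ⟨i + 1, hi1, ?_⟩
      show b ^ (i+1) * w₀ * (b ^ (i+1))⁻¹ = b * (b ^ i * w₀ * (b ^ i)⁻¹) * b⁻¹
      rw [pow_succ']
      group
    · have hio : i + 1 = o := by
        simp only [Set.mem_Iio] at hi
        omega
      refine ⟨0, hopos, ?_⟩
      have hbo : b ^ (i + 1) = 1 := by rw [hio, ho]; exact pow_orderOf_eq_one b
      have h1 : b * (b ^ i * w₀ * (b ^ i)⁻¹) * b⁻¹ = b ^ (i+1) * w₀ * (b ^ (i+1))⁻¹ := by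
        rw [pow_succ']
        group
      rw [h1, hbo]
      simp
  have hVb : ∀ k : ℕ, ∀ v ∈ V, b ^ k * v * (b ^ k)⁻¹ ∈ V := by
    intro k
    induction k with
    | zero => intro v hv; simpa using hv
    | succ n IH =>
      intro v hv
      have h1 : b ^ (n+1) * v * (b ^ (n+1))⁻¹ = b * (b ^ n * v * (b ^ n)⁻¹) * b⁻¹ := by
        rw [pow_succ']
        group
      rw [h1]
      set v' := b ^ n * v * (b ^ n)⁻¹ with hv'
      have hv'V : v' ∈ V := IH v hv
      -- conj by b preserves V
      revert hv'V
      refine Subgroup.closure_induction ?_ ?_ ?_ ?_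
      · intro x hx
        exact Subgroup.subset_closure (hObinv x hx)
      · simpa using one_mem V
      · intro u w _ _ hu hw
        have : b * (u * w) * b⁻¹ = (b * u * b⁻¹) * (b * w * b⁻¹) := by group
        rw [this]; exact mul_mem hu hw
      · intro u _ hu
        have : b * u⁻¹ * b⁻¹ = (b * u * b⁻¹)⁻¹ := by group
        rw [this]; exact inv_mem hu
  have hVconj : ∀ g ∈ zpowers b, ∀ v ∈ V, g * v * g⁻¹ ∈ V := by
    intro g hg v hv
    obtain ⟨k, rfl⟩ : ∃ k : ℕ, b ^ k = g := by
      obtain ⟨k, hk⟩ := (pg_isOfFinOrder hp hG b).mem_powers_iff_mem_zpowers.mpr hg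
      exact ⟨k, hk⟩
    exact hVb k v hv
  -- set up the action of zpowers b on V
  haveI : Fact p.Prime := ⟨hp⟩
  haveI hVfinite : Finite ↥V := hVfin.to_subtype
  letI : SMul ↥(zpowers b) ↥V :=
    ⟨fun g v => ⟨(g : G) * (v : G) * (g : G)⁻¹, hVconj (g : G) g.2 (v : G) v.2⟩⟩
  letI : MulAction ↥(zpowers b) ↥V :=
    { one_smul := by
        intro v
        apply Subtype.ext
        show (1 : G) * v * (1 : G)⁻¹ = v
        group
      mul_smul := by
        intro g h v
        apply Subtype.ext
        show ((g : G) * h) * v * ((g : G) * h)⁻¹ = (g : G) * ((h : G) * v * (h : G)⁻¹) * (g : G)⁻¹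
        group }
  have hPp : IsPGroup p ↥(zpowers b) := hG.to_subgroup (zpowers b)
  have key := hPp.card_modEq_card_fixedPoints ↥V
  have hVp : IsPGroup p ↥V := hG.to_subgroup V
  have hw₀V : w₀ ∈ V := Subgroup.subset_closure hw₀O
  haveI : Nontrivial ↥V := ⟨⟨⟨w₀, hw₀V⟩, 1, by
    intro h
    rw [Subtype.ext_iff] at h
    exact hw₀1 h⟩⟩
  have hcard : ∃ n, Nat.card ↥V = p ^ n := IsPGroup.iff_card.mp hVp
  obtain ⟨n, hn⟩ := hcard
  have hn0 : n ≠ 0 := by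
    intro h
    rw [h, pow_zero] at hn
    have := Finite.one_lt_card_iff_nontrivial.mpr (inferInstance : Nontrivial ↥V)
    omega
  have hpdvd : p ∣ Nat.card ↥V := by
    rw [hn]
    exact dvd_pow_self p hn0
  have hfixdvd : p ∣ Nat.card ↥(MulAction.fixedPoints ↥(zpowers b) ↥V) := by
    have h1 : Nat.card ↥V % p = 0 := by
      obtain ⟨t, ht⟩ := hpdvd
      rw [ht]
      exact Nat.mul_mod_right p t
    have h2 := key
    unfold Nat.ModEq at h2
    rw [h1] at h2
    exact Nat.dvd_of_mod_eq_zero h2.symm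
  have hfix1 : (1 : ↥V) ∈ MulAction.fixedPoints ↥(zpowers b) ↥V := by
    intro g
    apply Subtype.ext
    show (g : G) * (1 : G) * (g : G)⁻¹ = 1
    group
  haveI : Nonempty ↥(MulAction.fixedPoints ↥(zpowers b) ↥V) := ⟨⟨1, hfix1⟩⟩
  have hfixpos : 0 < Nat.card ↥(MulAction.fixedPoints ↥(zpowers b) ↥V) := Nat.card_pos
  have hfixge : p ≤ Nat.card ↥(MulAction.fixedPoints ↥(zpowers b) ↥V) :=
    Nat.le_of_dvd hfixpos hfixdvd
  have : Nontrivial ↥(MulAction.fixedPoints ↥(zpowers b) ↥V) := by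
    rw [← Finite.one_lt_card_iff_nontrivial]
    have := hp.two_le
    omega
  obtain ⟨x, y, hxy⟩ := this
  have hne1 : ∃ v : ↥(MulAction.fixedPoints ↥(zpowers b) ↥V), ((v : ↥V) : G) ≠ 1 := by
    by_cases hx1 : ((x : ↥V) : G) = 1
    · refine ⟨y, ?_⟩
      intro hy1
      apply hxy
      apply Subtype.ext; apply Subtype.ext
      rw [hx1, hy1]
    · exact ⟨x, hx1⟩
  obtain ⟨v, hv1⟩ := hne1
  refine ⟨((v : ↥V) : G), hVW (v : ↥V).2, hv1, ?_⟩
  have hfixed := v.2 ⟨b, mem_zpowers b⟩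
  rw [Subtype.ext_iff] at hfixed
  have : b * ((v : ↥V) : G) * b⁻¹ = ((v : ↥V) : G) := hfixed
  calc ((v : ↥V) : G) * b = (b * ((v : ↥V) : G) * b⁻¹) * b := by rw [this]
    _ = b * ((v : ↥V) : G) := by group

/-- If `X` is an infinite normal subgroup of exponent `p`, then `G = X * B`. -/
lemma cover_univ (hp : p.Prime) (hG : IsPGroup p G) {A B : Subgroup G}
    (hA : IsLocallyCyclic A) (hB : IsLocallyCyclic B)
    (hprod : ∀ g : G, ∃ a ∈ A, ∃ b ∈ B, g = a * b)
    {X : Subgroup G} (hXn : X.Normal) (hXinf : (X : Set G).Infinite)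
    (hXp : ∀ x ∈ X, x ^ p = 1) :
    ∀ g : G, ∃ w ∈ X, ∃ b ∈ B, g = w * b := by
  by_cases hAH : A ≤ X ⊔ B
  · intro g
    obtain ⟨a, ha, b, hb, rfl⟩ := hprod g
    have haH : a ∈ X ⊔ B := hAH ha
    have : a ∈ ((X : Set G) * (B : Set G)) := by
      rw [← Subgroup.normal_mul X B]
      exact haH
    obtain ⟨w, hw, b', hb', hab⟩ := this
    exact ⟨w, hw, b' * b, mul_mem hb' hb, by rw [← hab]; group⟩
  · exfalso
    rw [SetLike.le_def] at hAH
    push_neg at hAH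
    obtain ⟨a₀, ha₀A, ha₀H⟩ := hAH
    have ha₀S : a₀ ∉ (X ⊔ B) ⊓ A := fun h => ha₀H (Subgroup.mem_inf.mp h).1
    have hS'fin : (((X ⊔ B) ⊓ A : Subgroup G) : Set G).Finite :=
      lc_proper_finite hp hG hA (inf_le_right) ha₀A ha₀S
    have hEB : {x : G | x ∈ B ∧ x ^ p = 1}.Finite := lc_ppow_finite hp hG hB
    have hsub : (X : Set G) ⊆
        ⋃ a ∈ (((X ⊔ B) ⊓ A : Subgroup G) : Set G), {w : G | w ∈ X ∧ a⁻¹ * w ∈ B} := by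
      intro w hw
      obtain ⟨a, ha, b, hb, hdec⟩ := hprod w
      have haS : a ∈ (X ⊔ B) ⊓ A := by
        refine Subgroup.mem_inf.mpr ⟨?_, ha⟩
        have : a = w * b⁻¹ := by rw [hdec]; group
        rw [this]
        exact mul_mem (Subgroup.mem_sup_left hw) (Subgroup.mem_sup_right (inv_mem hb))
      refine Set.mem_biUnion haS ⟨hw, ?_⟩
      have : a⁻¹ * w = b := by rw [hdec]; group
      rw [this]; exact hb
    have hfibs : ∀ a ∈ (((X ⊔ B) ⊓ A : Subgroup G) : Set G),
        {w : G | w ∈ X ∧ a⁻¹ * w ∈ B}.Finite := by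
      intro a _
      by_cases hne : {w : G | w ∈ X ∧ a⁻¹ * w ∈ B}.Nonempty
      · obtain ⟨w₁, hw₁⟩ := hne
        refine Set.Finite.subset (hEB.image (fun e => w₁ * e)) ?_
        rintro w ⟨hwX, hwB⟩
        refine ⟨w₁⁻¹ * w, ⟨?_, ?_⟩, by group⟩
        · have h1 : w₁⁻¹ * w = (a⁻¹ * w₁)⁻¹ * (a⁻¹ * w) := by group
          rw [h1]
          exact mul_mem (inv_mem hw₁.2) hwB
        · exact hXp _ (mul_mem (inv_mem hw₁.1) hwX)
      · rw [Set.not_nonempty_iff_eq_empty] at hne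
        rw [hne]; exact Set.finite_empty
    exact hXinf (Set.Finite.subset (Set.Finite.biUnion hS'fin hfibs) hsub)

lemma exists_max_of_finite {α : Type*} (f : α → Subgroup G) :
    ∀ (T : Set α), T.Finite → T.Nonempty →
    (∀ x ∈ T, ∀ y ∈ T, f x ≤ f y ∨ f y ≤ f x) →
    ∃ x₀ ∈ T, ∀ x ∈ T, f x ≤ f x₀ := by
  intro T hT
  refine Set.Finite.induction_on T hT ?_ ?_
  · intro hne _
    exact absurd hne (by simp)
  · intro a s _ _ IH _ hcomp
    by_cases hs : s.Nonempty
    · obtain ⟨x₀, hx₀s, hmax⟩ := IH hs (fun x hx y hy =>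
        hcomp x (Set.mem_insert_of_mem a hx) y (Set.mem_insert_of_mem a hy))
      rcases hcomp a (Set.mem_insert a s) x₀ (Set.mem_insert_of_mem a hx₀s) with h | h
      · refine ⟨x₀, Set.mem_insert_of_mem a hx₀s, ?_⟩
        rintro x (rfl | hx)
        · exact h
        · exact hmax x hx
      · refine ⟨a, Set.mem_insert a s, ?_⟩
        rintro x (rfl | hx)
        · exact le_refl _
        · exact (hmax x hx).trans h
    · rw [Set.not_nonempty_iff_eq_empty] at hs
      subst hs
      refine ⟨a, Set.mem_insert a ∅, ?_⟩
      rintro x (rfl | hx)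
      · exact le_refl _
      · exact absurd hx (by simp)
end Part8

section Part10
variable {G : Type*} [Group G] {p : ℕ}

lemma I3_contradiction (hp : p.Prime) (hG : IsPGroup p G) {A B : Subgroup G}
    (hA : IsLocallyCyclic A) (hB : IsLocallyCyclic B)
    (hprod : ∀ g : G, ∃ a ∈ A, ∃ b ∈ B, g = a * b) (hbot : A ⊓ B = ⊥)
    (hAinf : (A : Set G).Infinite) (hBinf : (B : Set G).Infinite)
    (hZ : ∀ z : G, (∀ g : G, Commute z g) → z = 1) : False := by
  have hFinNormal : ∀ N : Subgroup G, N.Normal → ((N : Set G)).Finite → N = ⊥ := by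
    intro N hN hfin
    rw [eq_bot_iff]
    intro n hn
    have := finite_normal_central hp hG hA hB hprod hAinf hBinf hN hfin n hn
    rw [Subgroup.mem_bot]
    exact hZ n this
  have hexA : ∃ a ∈ A, a ≠ (1 : G) := by
    have h2 : ((A : Set G) \ {1}).Infinite := hAinf.diff (Set.finite_singleton 1)
    obtain ⟨a, ha⟩ := h2.nonempty
    exact ⟨a, ha.1, ha.2⟩
  obtain ⟨a₀, ha₀A, ha₀1⟩ := hexA
  set M := Subgroup.closure (itoSet A B) with hMdef
  haveI hMn : M.Normal := itoM_normal hp hG hA hB hprod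
  have hMcomm : ∀ x ∈ M, ∀ y ∈ M, Commute x y := itoM_comm hp hG hA hB hprod hbot
  have hMne : M ≠ ⊥ := by
    intro h
    have htriv : ∀ s ∈ itoSet A B, s = 1 := by
      intro s hs
      have h2 : s ∈ M := Subgroup.subset_closure hs
      rw [h, Subgroup.mem_bot] at h2
      exact h2
    have hall := itoSet_all_comm hp hG hA hB hprod htriv
    exact ha₀1 (hZ a₀ (fun g => hall a₀ g))
  obtain ⟨m₀, hm₀M, hm₀1⟩ : ∃ m ∈ M, m ≠ (1 : G) := by
    by_contra h
    push_neg at h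
    exact hMne (eq_bot_iff.mpr (fun m hm => Subgroup.mem_bot.mpr (h m hm)))
  have hEA : {x : G | x ∈ A ∧ x ^ p = 1}.Finite := lc_ppow_finite hp hG hA
  have hEB : {x : G | x ∈ B ∧ x ^ p = 1}.Finite := lc_ppow_finite hp hG hB
  by_cases hMA : ((M ⊓ A : Subgroup G) : Set G).Infinite
  · have hAM : A ≤ M := by
      have h2 := lc_eq_of_infinite hp hG hA (inf_le_right : M ⊓ A ≤ A) hMA
      exact fun x hx => (Subgroup.mem_inf.mp (h2 hx)).1
    by_cases hMB : ((M ⊓ B : Subgroup G) : Set G).Infinite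
    · have hBM : B ≤ M := by
        have h2 := lc_eq_of_infinite hp hG hB (inf_le_right : M ⊓ B ≤ B) hMB
        exact fun x hx => (Subgroup.mem_inf.mp (h2 hx)).1
      have hcent : ∀ g : G, Commute a₀ g := by
        intro g
        obtain ⟨a, ha, b, hb, rfl⟩ := hprod g
        exact hMcomm a₀ (hAM ha₀A) _ (mul_mem (hAM ha) (hBM hb))
      exact ha₀1 (hZ a₀ hcent)
    · rw [Set.not_infinite] at hMB
      set Ω := omegaSub p M hMcomm with hΩdef
      haveI hΩn : Ω.Normal := omegaSub_normal hMn
      obtain ⟨z, hzΩ, hz1⟩ :=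
        omegaSub_exists_ne_one hp hG (M := M) (hM := hMcomm) (hAM ha₀A) ha₀1
      have hΩfin : (Ω : Set G).Finite := by
        have hsub : (Ω : Set G) ⊆ ⋃ f ∈ ((M ⊓ B : Subgroup G) : Set G),
            {ω : G | ω ∈ Ω ∧ ω * f⁻¹ ∈ A} := by
          intro ω hω
          obtain ⟨aa, haa, bb, hbb, hdec⟩ := hprod ω
          have hωM : ω ∈ M := omegaSub_le hω
          have hbbM : bb ∈ M := by
            have : bb = aa⁻¹ * ω := by rw [hdec]; group
            rw [this]
            exact mul_mem (inv_mem (hAM haa)) hωM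
          refine Set.mem_biUnion (Subgroup.mem_inf.mpr ⟨hbbM, hbb⟩ :
            bb ∈ ((M ⊓ B : Subgroup G) : Set G)) ⟨hω, ?_⟩
          have : ω * bb⁻¹ = aa := by rw [hdec]; group
          rw [this]; exact haa
        have hfibs : ∀ f ∈ ((M ⊓ B : Subgroup G) : Set G),
            {ω : G | ω ∈ Ω ∧ ω * f⁻¹ ∈ A}.Finite := by
          intro f _
          by_cases hne : {ω : G | ω ∈ Ω ∧ ω * f⁻¹ ∈ A}.Nonempty
          · obtain ⟨ω₁, hω₁⟩ := hne
            refine Set.Finite.subset (hEA.image (fun e => e * ω₁)) ?_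
            rintro ω ⟨hωΩ, hωA⟩
            refine ⟨ω * ω₁⁻¹, ⟨?_, ?_⟩, by group⟩
            · have h1 : ω * ω₁⁻¹ = (ω * f⁻¹) * (ω₁ * f⁻¹)⁻¹ := by group
              rw [h1]
              exact mul_mem hωA (inv_mem hω₁.2)
            · exact (mul_mem hωΩ (inv_mem hω₁.1)).2
          · rw [Set.not_nonempty_iff_eq_empty] at hne
            rw [hne]; exact Set.finite_empty
        exact Set.Finite.subset (Set.Finite.biUnion hMB hfibs) hsub
      have hbotΩ := hFinNormal Ω hΩn hΩfin
      have hz' : z ∈ (⊥ : Subgroup G) := by rw [← hbotΩ]; exact hzΩ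
      exact hz1 (Subgroup.mem_bot.mp hz')
  · rw [Set.not_infinite] at hMA
    by_cases hMB : ((M ⊓ B : Subgroup G) : Set G).Infinite
    · have hBM : B ≤ M := by
        have h2 := lc_eq_of_infinite hp hG hB (inf_le_right : M ⊓ B ≤ B) hMB
        exact fun x hx => (Subgroup.mem_inf.mp (h2 hx)).1
      set Ω := omegaSub p M hMcomm with hΩdef
      haveI hΩn : Ω.Normal := omegaSub_normal hMn
      obtain ⟨z, hzΩ, hz1⟩ :=
        omegaSub_exists_ne_one hp hG (M := M) (hM := hMcomm) hm₀M hm₀1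
      have hΩfin : (Ω : Set G).Finite := by
        have hsub : (Ω : Set G) ⊆ ⋃ a ∈ ((M ⊓ A : Subgroup G) : Set G),
            {ω : G | ω ∈ Ω ∧ a⁻¹ * ω ∈ B} := by
          intro ω hω
          obtain ⟨aa, haa, bb, hbb, hdec⟩ := hprod ω
          have hωM : ω ∈ M := omegaSub_le hω
          have haaM : aa ∈ M := by
            have : aa = ω * bb⁻¹ := by rw [hdec]; group
            rw [this]
            exact mul_mem hωM (inv_mem (hBM hbb))
          refine Set.mem_biUnion (Subgroup.mem_inf.mpr ⟨haaM, haa⟩ :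
            aa ∈ ((M ⊓ A : Subgroup G) : Set G)) ⟨hω, ?_⟩
          have : aa⁻¹ * ω = bb := by rw [hdec]; group
          rw [this]; exact hbb
        have hfibs : ∀ a ∈ ((M ⊓ A : Subgroup G) : Set G),
            {ω : G | ω ∈ Ω ∧ a⁻¹ * ω ∈ B}.Finite := by
          intro a _
          by_cases hne : {ω : G | ω ∈ Ω ∧ a⁻¹ * ω ∈ B}.Nonempty
          · obtain ⟨ω₁, hω₁⟩ := hne
            refine Set.Finite.subset (hEB.image (fun e => ω₁ * e)) ?_
            rintro ω ⟨hωΩ, hωB⟩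
            refine ⟨ω₁⁻¹ * ω, ⟨?_, ?_⟩, by group⟩
            · have h1 : ω₁⁻¹ * ω = (a⁻¹ * ω₁)⁻¹ * (a⁻¹ * ω) := by group
              rw [h1]
              exact mul_mem (inv_mem hω₁.2) hωB
            · exact (mul_mem (inv_mem hω₁.1) hωΩ).2
          · rw [Set.not_nonempty_iff_eq_empty] at hne
            rw [hne]; exact Set.finite_empty
        exact Set.Finite.subset (Set.Finite.biUnion hMA hfibs) hsub
      have hbotΩ := hFinNormal Ω hΩn hΩfin
      have hz' : z ∈ (⊥ : Subgroup G) := by rw [← hbotΩ]; exact hzΩ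
      exact hz1 (Subgroup.mem_bot.mp hz')
    · rw [Set.not_infinite] at hMB
      set W := omegaSub p M hMcomm with hWdef
      haveI hWn : W.Normal := omegaSub_normal hMn
      have hWcomm : ∀ x ∈ W, ∀ y ∈ W, Commute x y := fun x hx y hy =>
        hMcomm x hx.1 y hy.1
      have hWp : ∀ x ∈ W, x ^ p = 1 := fun x hx => hx.2
      obtain ⟨w₀, hw₀W, hw₀1⟩ :=
        omegaSub_exists_ne_one hp hG (M := M) (hM := hMcomm) hm₀M hm₀1
      have hWinf : (W : Set G).Infinite := by
        by_contra hfin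
        rw [Set.not_infinite] at hfin
        have hbotW := hFinNormal W hWn hfin
        have hw' : w₀ ∈ (⊥ : Subgroup G) := by rw [← hbotW]; exact hw₀W
        exact hw₀1 (Subgroup.mem_bot.mp hw')
      have hcoverW := cover_univ hp hG hA hB hprod hWn hWinf hWp
      obtain ⟨u, huz, hup⟩ := pg_exists_orderp hp hG ha₀1
      have huA : u ∈ A := (zpowers_le.mpr ha₀A) huz
      have hu1 : u ≠ 1 := by
        intro h
        rw [h, orderOf_one] at hup
        exact hp.one_lt.ne hup
      have hVb : ∀ b : G, b ∈ B → ∃ w ∈ W, w⁻¹ * u ∈ B ∧ Commute w b := by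
        intro b hb
        set V := W ⊓ Subgroup.centralizer {b} with hVdef
        have hVle : V ≤ W := inf_le_left
        have hVn : V.Normal := by
          constructor
          intro v hv g
          obtain ⟨w', hw', β, hβ, rfl⟩ := hcoverW g
          have hvW : v ∈ W := (Subgroup.mem_inf.mp hv).1
          have hvb : b * v = v * b := by
            have := (Subgroup.mem_inf.mp hv).2
            rw [Subgroup.mem_centralizer_iff] at this
            exact this b rfl
          have hv1 : β * v * β⁻¹ ∈ V := by
            refine Subgroup.mem_inf.mpr ⟨hWn.conj_mem v hvW β, ?_⟩
            rw [Subgroup.mem_centralizer_iff]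
            intro h hh
            rw [Set.mem_singleton_iff] at hh
            rw [hh]
            have hcbβ : b * β = β * b := (lc_commute hp hG hB hb hβ).eq
            have hcbβ' : β⁻¹ * b = b * β⁻¹ := ((lc_commute hp hG hB hb hβ).inv_right.eq).symm
            calc b * (β * v * β⁻¹) = (b * β) * v * β⁻¹ := by group
              _ = β * (b * v) * β⁻¹ := by rw [hcbβ]; group
              _ = β * (v * b) * β⁻¹ := by rw [hvb]
              _ = β * v * (b * β⁻¹) := by group
              _ = β * v * (β⁻¹ * b) := by rw [hcbβ']
              _ = β * v * β⁻¹ * b := by group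
          have hv2 : w' * (β * v * β⁻¹) * w'⁻¹ = β * v * β⁻¹ := by
            have hc := hWcomm w' hw' _ ((Subgroup.mem_inf.mp hv1).1)
            calc w' * (β * v * β⁻¹) * w'⁻¹ = (w' * (β * v * β⁻¹)) * w'⁻¹ := by group
              _ = ((β * v * β⁻¹) * w') * w'⁻¹ := by rw [hc.eq]
              _ = β * v * β⁻¹ := by group
          have heq : (w' * β) * v * (w' * β)⁻¹ = w' * (β * v * β⁻¹) * w'⁻¹ := by group
          rw [heq, hv2]
          exact hv1
        have hVne : ∃ w ∈ V, w ≠ (1 : G) := by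
          obtain ⟨w, hwW, hw1, hwb⟩ := exists_fixed hp hG hWn hWcomm hw₀W hw₀1 b
          refine ⟨w, Subgroup.mem_inf.mpr ⟨hwW, ?_⟩, hw1⟩
          rw [Subgroup.mem_centralizer_iff]
          intro h hh
          rw [Set.mem_singleton_iff] at hh
          rw [hh]
          exact hwb.symm.eq
        obtain ⟨wv, hwvV, hwv1⟩ := hVne
        have hVinf : (V : Set G).Infinite := by
          by_contra hfin
          rw [Set.not_infinite] at hfin
          have hbotV := hFinNormal V hVn hfin
          have hwv' : wv ∈ (⊥ : Subgroup G) := by rw [← hbotV]; exact hwvV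
          exact hwv1 (Subgroup.mem_bot.mp hwv')
        have hVp : ∀ x ∈ V, x ^ p = 1 := fun x hx => hWp x (hVle hx)
        have hcoverV := cover_univ hp hG hA hB hprod hVn hVinf hVp
        obtain ⟨w, hwV, β, hβ, hdecomp⟩ := hcoverV u
        refine ⟨w, (Subgroup.mem_inf.mp hwV).1, ?_, ?_⟩
        · have : w⁻¹ * u = β := by rw [hdecomp]; group
          rw [this]; exact hβ
        · have := (Subgroup.mem_inf.mp hwV).2
          rw [Subgroup.mem_centralizer_iff] at this
          exact (this b rfl).symm
      set T : Set G := {w : G | w ∈ W ∧ w⁻¹ * u ∈ B} with hTdef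
      have hTne : T.Nonempty := by
        obtain ⟨w, hwW, hwu, _⟩ := hVb 1 (one_mem B)
        exact ⟨w, hwW, hwu⟩
      have hTfin : T.Finite := by
        obtain ⟨w₁, hw₁⟩ := hTne
        refine Set.Finite.subset (hEB.image (fun e => w₁ * e)) ?_
        rintro w ⟨hwW, hwB⟩
        refine ⟨w₁⁻¹ * w, ⟨?_, ?_⟩, by group⟩
        · have h1 : w₁⁻¹ * w = (w₁⁻¹ * u) * (w⁻¹ * u)⁻¹ := by group
          rw [h1]
          exact mul_mem hw₁.2 (inv_mem hwB)
        · exact hWp _ (mul_mem (inv_mem hw₁.1) hwW)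
      have hcomp : ∀ x ∈ T, ∀ y ∈ T,
          (fun ω => B ⊓ Subgroup.centralizer {ω}) x ≤ (fun ω => B ⊓ Subgroup.centralizer {ω}) y ∨
          (fun ω => B ⊓ Subgroup.centralizer {ω}) y ≤ (fun ω => B ⊓ Subgroup.centralizer {ω}) x := by
        intro x _ y _
        exact lc_subgroup_comparable hp hG hB inf_le_left inf_le_left
      obtain ⟨ω₀, hω₀T, hmax⟩ :=
        exists_max_of_finite (fun ω => B ⊓ Subgroup.centralizer {ω}) T hTfin hTne hcomp
      have hω₀W : ω₀ ∈ W := hω₀T.1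
      have hBc : ∀ b ∈ B, b ∈ Subgroup.centralizer {ω₀} := by
        intro b hb
        obtain ⟨w, hwW, hwu, hwb⟩ := hVb b hb
        have hwT : w ∈ T := ⟨hwW, hwu⟩
        have hbmem : b ∈ B ⊓ Subgroup.centralizer {w} := by
          refine Subgroup.mem_inf.mpr ⟨hb, ?_⟩
          rw [Subgroup.mem_centralizer_iff]
          intro h hh
          rw [Set.mem_singleton_iff] at hh
          rw [hh]
          exact hwb.eq
        exact (Subgroup.mem_inf.mp (hmax w hwT hbmem)).2
      have hcentral : ∀ g : G, Commute ω₀ g := by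
        intro g
        obtain ⟨w', hw', β, hβ, rfl⟩ := hcoverW g
        have h1 : Commute ω₀ w' := hWcomm _ hω₀W _ hw'
        have h2 : Commute ω₀ β := by
          have := hBc β hβ
          rw [Subgroup.mem_centralizer_iff] at this
          exact this ω₀ rfl
        exact h1.mul_right h2
      have hω₀1 : ω₀ = 1 := hZ ω₀ hcentral
      have huB : u ∈ B := by
        have h2 := hω₀T.2
        rw [hω₀1, inv_one, one_mul] at h2
        exact h2
      have : u ∈ A ⊓ B := Subgroup.mem_inf.mpr ⟨huA, huB⟩
      rw [hbot, Subgroup.mem_bot] at this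
      exact hu1 this
end Part10

section Part11
variable {G : Type*} [Group G] {p : ℕ}

lemma exists_ne_one_of_ne_bot {N : Subgroup G} (h : N ≠ ⊥) : ∃ x ∈ N, x ≠ (1 : G) := by
  by_contra hna
  push_neg at hna
  exact h (eq_bot_iff.mpr fun x hx => Subgroup.mem_bot.mpr (hna x hx))

/-- Image of a locally cyclic subgroup is locally cyclic. -/
lemma lc_map {H : Type*} [Group H] (f : G →* H) {A : Subgroup G}
    (hA : IsLocallyCyclic A) : IsLocallyCyclic (A.map f) := by
  intro K hK
  obtain ⟨S, hScl, hSfin⟩ := (Subgroup.fg_iff K).mp hK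
  have hsurj := f.subgroupMap_surjective A
  set f' : ↥A →* ↥(A.map f) := f.subgroupMap A with hf'
  have hlift : ∀ s : ↥(A.map f), ∃ t : ↥A, f' t = s := hsurj
  classical
  set S' : Set ↥A := (fun s => Classical.choose (hlift s)) '' S with hS'
  have hS'img : f' '' S' = S := by
    ext x
    constructor
    · rintro ⟨_, ⟨s, hs, rfl⟩, rfl⟩
      rw [Classical.choose_spec (hlift s)]
      exact hs
    · intro hx
      exact ⟨Classical.choose (hlift x), ⟨x, hx, rfl⟩, Classical.choose_spec (hlift x)⟩
  set L := Subgroup.closure S' with hL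
  have hLfg : L.FG := (Subgroup.fg_iff L).mpr ⟨S', rfl, hSfin.image _⟩
  have hLcyc : IsCyclic ↥L := hA L hLfg
  have hmap : L.map f' = K := by
    rw [hL, MonoidHom.map_closure, hS'img, hScl]
  have hsurj2 : Function.Surjective (f'.subgroupMap L) := f'.subgroupMap_surjective L
  haveI := hLcyc
  have : IsCyclic ↥(L.map f') := isCyclic_of_surjective _ hsurj2
  rw [hmap] at this
  exact this

/-- `A ⊓ B` is central. -/
lemma inf_central (hp : p.Prime) (hG : IsPGroup p G) {A B : Subgroup G}
    (hA : IsLocallyCyclic A) (hB : IsLocallyCyclic B)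
    (hprod : ∀ g : G, ∃ a ∈ A, ∃ b ∈ B, g = a * b) {z : G} (hz : z ∈ A ⊓ B) :
    ∀ g : G, Commute z g := by
  intro g
  obtain ⟨a, ha, b, hb, rfl⟩ := hprod g
  exact (lc_commute hp hG hA (Subgroup.mem_inf.mp hz).1 ha).mul_right
    (lc_commute hp hG hB (Subgroup.mem_inf.mp hz).2 hb)

lemma zpowers_normal_of_central {z : G} (hz : ∀ g : G, Commute z g) :
    (zpowers z).Normal := by
  constructor
  intro n hn g
  obtain ⟨k, rfl⟩ := hn
  have hzk : ∀ g : G, Commute (z ^ k) g := fun g => (hz g).zpow_left k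
  have : g * z ^ k * g⁻¹ = z ^ k := by
    rw [(hzk g).symm.eq]
    group
  rw [this]
  exact zpow_mem (mem_zpowers z) k

/-- The cyclic subgroup generated by an order-`p` element of a normal locally
cyclic subgroup is normal. -/
lemma minimal_normal (hp : p.Prime) (hG : IsPGroup p G) {B : Subgroup G}
    (hB : IsLocallyCyclic B) (hBn : B.Normal) {v : G} (hv : v ∈ B)
    (hvp : orderOf v = p) : (zpowers v).Normal := by
  have hv1 : v ≠ 1 := by
    intro h
    rw [h, orderOf_one] at hvp
    exact hp.one_lt.ne hvp
  constructor
  intro n hn g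
  obtain ⟨k, rfl⟩ := hn
  have hconj : g * v * g⁻¹ ∈ zpowers v := by
    have h1 : g * v * g⁻¹ ∈ B := hBn.conj_mem v hv g
    have h2 : orderOf (g * v * g⁻¹) = p := by
      have := orderOf_injective ((MulAut.conj g).toMonoidHom)
        (MulEquiv.injective (MulAut.conj g)) v
      rw [← hvp]
      rw [← this]
      congr 1
    exact lc_orderp_mem hp hG hB hv hv1 h1 h2
  have : g * v ^ k * g⁻¹ = (g * v * g⁻¹) ^ k := by
    rw [conj_zpow]
  rw [this]
  exact zpow_mem hconj k

lemma pow_ord_div_mem (hp : p.Prime) (hG : IsPGroup p G) {c z : G} (hc1 : c ≠ 1)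
    (hz : z ∈ zpowers c) (hzp : orderOf z = p) :
    c ^ (orderOf c / p) ∈ zpowers z := by
  obtain ⟨k, hk⟩ := pg_orderOf_eq_pow hp hG c
  have hk0 : k ≠ 0 := by
    rintro rfl
    rw [pow_zero, orderOf_eq_one_iff] at hk
    exact hc1 hk
  have hm : orderOf c / p = p ^ (k - 1) := by
    rw [hk]
    have : p ^ k = p ^ (k - 1) * p := by
      rw [← pow_succ]; congr 1; omega
    rw [this, Nat.mul_div_cancel _ hp.pos]
  have hordm : orderOf (c ^ (orderOf c / p)) = p := by
    rw [hm, orderOf_pow' c (pow_ne_zero _ hp.ne_zero), hk]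
    have hdvd : p ^ (k - 1) ∣ p ^ k := pow_dvd_pow p (Nat.sub_le k 1)
    rw [Nat.gcd_eq_right hdvd]
    have : p ^ k = p ^ (k - 1) * p := by
      rw [← pow_succ]; congr 1; omega
    rw [this, Nat.mul_div_cancel_left _ (pow_pos hp.pos _)]
  exact mem_zpowers_of_orderOf_dvd (pg_isOfFinOrder hp hG c)
    (pow_mem (mem_zpowers c) _) hz (by rw [hordm, hzp])

end Part11

section Part12
variable {G : Type*} [Group G]

lemma quot_pullback {N : Subgroup G} [hN : N.Normal] {c d : G}
    (h : (QuotientGroup.mk' N) c * (QuotientGroup.mk' N) d ∈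
      ((zpowers ((QuotientGroup.mk' N) d) : Subgroup (G ⧸ N)) : Set (G ⧸ N)) *
      ((zpowers ((QuotientGroup.mk' N) c) : Subgroup (G ⧸ N)) : Set (G ⧸ N))) :
    ∃ i j : ℤ, ∃ nr ∈ N, c * d = d ^ i * c ^ j * nr := by
  obtain ⟨x, hx, y, hy, hxy⟩ := h
  rw [SetLike.mem_coe] at hx hy
  obtain ⟨i, hi⟩ := hx
  obtain ⟨j, hj⟩ := hy
  set f := QuotientGroup.mk' N with hf
  have hi' : f d ^ i = x := hi
  have hj' : f c ^ j = y := hj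
  have hxy' : x * y = f c * f d := hxy
  have heq : f (c * d) = f (d ^ i * c ^ j) := by
    rw [map_mul, map_mul, map_zpow, map_zpow, hi', hj', hxy']
  have hker : (d ^ i * c ^ j)⁻¹ * (c * d) ∈ N := by
    have h1 : f ((d ^ i * c ^ j)⁻¹ * (c * d)) = 1 := by
      rw [map_mul, map_inv, heq]
      group
    exact (QuotientGroup.eq_one_iff _).mp h1
  refine ⟨i, j, (d ^ i * c ^ j)⁻¹ * (c * d), hker, by group⟩

end Part12

section Part13
universe u

lemma master (n : ℕ) : ∀ {G : Type u} [instG : Group G] (p : ℕ) (hp : p.Prime)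
    (hG : IsPGroup p G) (A B : Subgroup G) (hA : IsLocallyCyclic A)
    (hB : IsLocallyCyclic B) (hprod : ∀ g : G, ∃ a ∈ A, ∃ b ∈ B, g = a * b)
    (c d : G), c ∈ A → d ∈ B → ∀ e : ℕ, (A ⊓ B = ⊥ → 1 ≤ e) →
    2 * (orderOf c * orderOf d) + e ≤ n →
    c * d ∈ ((zpowers d : Subgroup G) : Set G) * ((zpowers c : Subgroup G) : Set G) := by
  induction n using Nat.strong_induction_on with
  | _ n IH =>
  intro G instG p hp hG A B hA hB hprod c d hc hd e he hbound
  by_cases hc1 : c = 1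
  · subst hc1
    exact ⟨d, SetLike.mem_coe.mpr (mem_zpowers d), 1,
      SetLike.mem_coe.mpr (one_mem _), by group⟩
  by_cases hd1 : d = 1
  · subst hd1
    exact ⟨1, SetLike.mem_coe.mpr (one_mem _), c,
      SetLike.mem_coe.mpr (mem_zpowers c), by group⟩
  by_cases hccent : ∀ g : G, Commute c g
  · exact ⟨d, SetLike.mem_coe.mpr (mem_zpowers d), c,
      SetLike.mem_coe.mpr (mem_zpowers c), (hccent d).eq.symm⟩
  by_cases hdcent : ∀ g : G, Commute d g
  · exact ⟨d, SetLike.mem_coe.mpr (mem_zpowers d), c,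
      SetLike.mem_coe.mpr (mem_zpowers c), (hdcent c).eq⟩
  have hordc := (pg_isOfFinOrder hp hG c).orderOf_pos
  have hordd := (pg_isOfFinOrder hp hG d).orderOf_pos
  have hordc2 : 2 ≤ orderOf c := by
    have h1 : orderOf c ≠ 1 := fun h => hc1 (orderOf_eq_one_iff.mp h)
    omega
  have hordd2 : 2 ≤ orderOf d := by
    have h1 : orderOf d ≠ 1 := fun h => hd1 (orderOf_eq_one_iff.mp h)
    omega
  have hpdvd_c : p ∣ orderOf c := by
    obtain ⟨k, hk⟩ := pg_orderOf_eq_pow hp hG c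
    have hk0 : k ≠ 0 := by
      rintro rfl
      rw [pow_zero, orderOf_eq_one_iff] at hk
      exact hc1 hk
    rw [hk]
    exact dvd_pow_self p hk0
  have hpdvd_d : p ∣ orderOf d := by
    obtain ⟨k, hk⟩ := pg_orderOf_eq_pow hp hG d
    have hk0 : k ≠ 0 := by
      rintro rfl
      rw [pow_zero, orderOf_eq_one_iff] at hk
      exact hd1 hk
    rw [hk]
    exact dvd_pow_self p hk0
  -- dispatch: a normal order-p subgroup inside ⟨c⟩
  have dispatchC : ∀ z : G, orderOf z = p → z ∈ zpowers c → (zpowers z).Normal →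
      c * d ∈ ((zpowers d : Subgroup G) : Set G) * ((zpowers c : Subgroup G) : Set G) := by
    intro z hzp hzc hzn
    haveI := hzn
    set f := QuotientGroup.mk' (zpowers z) with hf
    have hGQ := hG.to_quotient (zpowers z)
    have hAQ := lc_map f hA
    have hBQ := lc_map f hB
    have hprodQ : ∀ q : G ⧸ zpowers z, ∃ a ∈ A.map f, ∃ b ∈ B.map f, q = a * b := by
      intro q
      obtain ⟨g, rfl⟩ := QuotientGroup.mk'_surjective (zpowers z) q
      obtain ⟨a, ha, b, hb, rfl⟩ := hprod g
      exact ⟨f a, mem_map_of_mem f ha, f b, mem_map_of_mem f hb, (map_mul f a b).symm⟩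
    have hfc : orderOf (f c) ∣ orderOf c / p := by
      apply orderOf_dvd_of_pow_eq_one
      rw [← map_pow]
      rw [show ((f (c ^ (orderOf c / p)) : G ⧸ zpowers z)) = QuotientGroup.mk (c ^ (orderOf c / p)) from rfl]
      rw [QuotientGroup.eq_one_iff]
      exact pow_ord_div_mem hp hG hc1 hzc hzp
    have hfd : orderOf (f d) ∣ orderOf d := orderOf_map_dvd f d
    set m := 2 * (orderOf (f c) * orderOf (f d)) + 1 with hm
    have hmlt : m < n := by
      have hdivpos : 0 < orderOf c / p := Nat.div_pos (Nat.le_of_dvd hordc hpdvd_c) hp.pos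
      have h1 : orderOf (f c) ≤ orderOf c / p := Nat.le_of_dvd hdivpos hfc
      have h2 : orderOf (f d) ≤ orderOf d := Nat.le_of_dvd hordd hfd
      have h3 : p * (orderOf c / p) = orderOf c := Nat.mul_div_cancel' hpdvd_c
      have h4 : 2 * (orderOf c / p) ≤ orderOf c := by
        calc 2 * (orderOf c / p) ≤ p * (orderOf c / p) :=
              Nat.mul_le_mul_right _ hp.two_le
          _ = orderOf c := h3
      have h5 : orderOf (f c) * orderOf (f d) ≤ (orderOf c / p) * orderOf d :=
        Nat.mul_le_mul h1 h2
      have h6 : 2 * ((orderOf c / p) * orderOf d) ≤ orderOf c * orderOf d := by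
        calc 2 * ((orderOf c / p) * orderOf d) = (2 * (orderOf c / p)) * orderOf d := by ring
          _ ≤ orderOf c * orderOf d := Nat.mul_le_mul_right _ h4
      have h7 : 2 ≤ orderOf c * orderOf d := by
        calc 2 ≤ orderOf c := hordc2
          _ ≤ orderOf c * orderOf d := Nat.le_mul_of_pos_right _ hordd
      have h8 : 1 < orderOf c * orderOf d := lt_of_lt_of_le Nat.one_lt_two h7
      calc m = 2 * (orderOf (f c) * orderOf (f d)) + 1 := rfl
        _ ≤ 2 * ((orderOf c / p) * orderOf d) + 1 :=
            Nat.add_le_add_right (Nat.mul_le_mul_left 2 h5) 1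
        _ ≤ orderOf c * orderOf d + 1 := Nat.add_le_add_right h6 1
        _ < orderOf c * orderOf d + orderOf c * orderOf d :=
            Nat.add_lt_add_left h8 _
        _ = 2 * (orderOf c * orderOf d) := (two_mul _).symm
        _ ≤ 2 * (orderOf c * orderOf d) + e := Nat.le_add_right _ _
        _ ≤ n := hbound
    have memQ := IH m hmlt p hp hGQ (A.map f) (B.map f) hAQ hBQ hprodQ (f c) (f d)
      (mem_map_of_mem f hc) (mem_map_of_mem f hd) 1 (fun _ => le_refl 1) (le_refl m)
    obtain ⟨i, j, nr, hnr, hdecomp⟩ := quot_pullback memQ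
    have hnrc : nr ∈ zpowers c := (zpowers_le.mpr hzc) hnr
    exact ⟨d ^ i, SetLike.mem_coe.mpr (zpow_mem (mem_zpowers d) i), c ^ j * nr,
      SetLike.mem_coe.mpr (mul_mem (zpow_mem (mem_zpowers c) j) hnrc),
      by rw [hdecomp]; group⟩
  -- dispatch: a normal order-p subgroup inside ⟨d⟩
  have dispatchD : ∀ z : G, orderOf z = p → z ∈ zpowers d → (zpowers z).Normal →
      c * d ∈ ((zpowers d : Subgroup G) : Set G) * ((zpowers c : Subgroup G) : Set G) := by
    intro z hzp hzd hzn
    haveI := hzn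
    set f := QuotientGroup.mk' (zpowers z) with hf
    have hGQ := hG.to_quotient (zpowers z)
    have hAQ := lc_map f hA
    have hBQ := lc_map f hB
    have hprodQ : ∀ q : G ⧸ zpowers z, ∃ a ∈ A.map f, ∃ b ∈ B.map f, q = a * b := by
      intro q
      obtain ⟨g, rfl⟩ := QuotientGroup.mk'_surjective (zpowers z) q
      obtain ⟨a, ha, b, hb, rfl⟩ := hprod g
      exact ⟨f a, mem_map_of_mem f ha, f b, mem_map_of_mem f hb, (map_mul f a b).symm⟩
    have hfd : orderOf (f d) ∣ orderOf d / p := by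
      apply orderOf_dvd_of_pow_eq_one
      rw [← map_pow]
      rw [show ((f (d ^ (orderOf d / p)) : G ⧸ zpowers z)) = QuotientGroup.mk (d ^ (orderOf d / p)) from rfl]
      rw [QuotientGroup.eq_one_iff]
      exact pow_ord_div_mem hp hG hd1 hzd hzp
    have hfc : orderOf (f c) ∣ orderOf c := orderOf_map_dvd f c
    set m := 2 * (orderOf (f c) * orderOf (f d)) + 1 with hm
    have hmlt : m < n := by
      have hdivpos : 0 < orderOf d / p := Nat.div_pos (Nat.le_of_dvd hordd hpdvd_d) hp.pos
      have h1 : orderOf (f d) ≤ orderOf d / p := Nat.le_of_dvd hdivpos hfd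
      have h2 : orderOf (f c) ≤ orderOf c := Nat.le_of_dvd hordc hfc
      have h3 : p * (orderOf d / p) = orderOf d := Nat.mul_div_cancel' hpdvd_d
      have h4 : 2 * (orderOf d / p) ≤ orderOf d := by
        calc 2 * (orderOf d / p) ≤ p * (orderOf d / p) :=
              Nat.mul_le_mul_right _ hp.two_le
          _ = orderOf d := h3
      have h5 : orderOf (f c) * orderOf (f d) ≤ orderOf c * (orderOf d / p) :=
        Nat.mul_le_mul h2 h1
      have h6 : 2 * (orderOf c * (orderOf d / p)) ≤ orderOf c * orderOf d := by
        calc 2 * (orderOf c * (orderOf d / p)) = orderOf c * (2 * (orderOf d / p)) := by ring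
          _ ≤ orderOf c * orderOf d := Nat.mul_le_mul_left _ h4
      have h7 : 2 ≤ orderOf c * orderOf d := by
        calc 2 ≤ orderOf c := hordc2
          _ ≤ orderOf c * orderOf d := Nat.le_mul_of_pos_right _ hordd
      have h8 : 1 < orderOf c * orderOf d := lt_of_lt_of_le Nat.one_lt_two h7
      calc m = 2 * (orderOf (f c) * orderOf (f d)) + 1 := rfl
        _ ≤ 2 * (orderOf c * (orderOf d / p)) + 1 :=
            Nat.add_le_add_right (Nat.mul_le_mul_left 2 h5) 1
        _ ≤ orderOf c * orderOf d + 1 := Nat.add_le_add_right h6 1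
        _ < orderOf c * orderOf d + orderOf c * orderOf d :=
            Nat.add_lt_add_left h8 _
        _ = 2 * (orderOf c * orderOf d) := (two_mul _).symm
        _ ≤ 2 * (orderOf c * orderOf d) + e := Nat.le_add_right _ _
        _ ≤ n := hbound
    have memQ := IH m hmlt p hp hGQ (A.map f) (B.map f) hAQ hBQ hprodQ (f c) (f d)
      (mem_map_of_mem f hc) (mem_map_of_mem f hd) 1 (fun _ => le_refl 1) (le_refl m)
    obtain ⟨i, j, nr, hnr, hdecomp⟩ := quot_pullback memQ
    have hnm : c ^ j * nr * (c ^ j)⁻¹ ∈ zpowers z := hzn.conj_mem nr hnr (c ^ j)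
    have hnmd : c ^ j * nr * (c ^ j)⁻¹ ∈ zpowers d := (zpowers_le.mpr hzd) hnm
    refine ⟨d ^ i * (c ^ j * nr * (c ^ j)⁻¹),
      SetLike.mem_coe.mpr (mul_mem (zpow_mem (mem_zpowers d) i) hnmd), c ^ j,
      SetLike.mem_coe.mpr (zpow_mem (mem_zpowers c) j), ?_⟩
    rw [hdecomp]; group
  -- dispatch: central split element
  have dispatchS : ∀ z a b : G, (∀ g : G, Commute z g) → z = a * b →
      a ∈ zpowers c → b ∈ zpowers d → a * b = b * a → a ∉ zpowers z →
      A ⊓ B = ⊥ →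
      c * d ∈ ((zpowers d : Subgroup G) : Set G) * ((zpowers c : Subgroup G) : Set G) := by
    intro z a b hzcent hzab hac hbd hab hanotz hABbot
    have hzn : (zpowers z).Normal := zpowers_normal_of_central hzcent
    haveI := hzn
    set f := QuotientGroup.mk' (zpowers z) with hf
    have hGQ := hG.to_quotient (zpowers z)
    have hAQ := lc_map f hA
    have hBQ := lc_map f hB
    have hprodQ : ∀ q : G ⧸ zpowers z, ∃ a' ∈ A.map f, ∃ b' ∈ B.map f, q = a' * b' := by
      intro q
      obtain ⟨g, rfl⟩ := QuotientGroup.mk'_surjective (zpowers z) q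
      obtain ⟨a', ha', b', hb', rfl⟩ := hprod g
      exact ⟨f a', mem_map_of_mem f ha', f b', mem_map_of_mem f hb', (map_mul f a' b').symm⟩
    -- the flag drops in the quotient
    have hflag : ¬ ((A.map f) ⊓ (B.map f) = ⊥) := by
      intro hbotq
      have haA : a ∈ A := (zpowers_le.mpr hc) hac
      have hbB : b ∈ B := (zpowers_le.mpr hd) hbd
      have hfz : f z = 1 := by
        rw [show (f z : G ⧸ zpowers z) = QuotientGroup.mk z from rfl, QuotientGroup.eq_one_iff]
        exact mem_zpowers z
      have hfab : f a * f b = 1 := by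
        rw [← map_mul, ← hzab, hfz]
      have hfa_mem : f a ∈ (A.map f) ⊓ (B.map f) := by
        refine Subgroup.mem_inf.mpr ⟨mem_map_of_mem f haA, ?_⟩
        have h1 : f a = f b⁻¹ := by
          rw [map_inv]
          rw [eq_inv_iff_mul_eq_one]
          exact hfab
        rw [h1]
        exact mem_map_of_mem f (inv_mem hbB)
      rw [hbotq, Subgroup.mem_bot] at hfa_mem
      have : a ∈ zpowers z := by
        rw [show (f a : G ⧸ zpowers z) = QuotientGroup.mk a from rfl, QuotientGroup.eq_one_iff] at hfa_mem
        exact hfa_mem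
      exact hanotz this
    have hfc : orderOf (f c) ∣ orderOf c := orderOf_map_dvd f c
    have hfd : orderOf (f d) ∣ orderOf d := orderOf_map_dvd f d
    set m := 2 * (orderOf (f c) * orderOf (f d)) + 0 with hm
    have hmlt : m < n := by
      have h1 : orderOf (f c) ≤ orderOf c := Nat.le_of_dvd hordc hfc
      have h2 : orderOf (f d) ≤ orderOf d := Nat.le_of_dvd hordd hfd
      have h5 : orderOf (f c) * orderOf (f d) ≤ orderOf c * orderOf d :=
        Nat.mul_le_mul h1 h2
      have he1 : 1 ≤ e := he hABbot
      calc m = 2 * (orderOf (f c) * orderOf (f d)) + 0 := rfl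
        _ ≤ 2 * (orderOf c * orderOf d) + 0 :=
            Nat.add_le_add_right (Nat.mul_le_mul_left 2 h5) 0
        _ < 2 * (orderOf c * orderOf d) + e := by omega
        _ ≤ n := hbound
    have memQ := IH m hmlt p hp hGQ (A.map f) (B.map f) hAQ hBQ hprodQ (f c) (f d)
      (mem_map_of_mem f hc) (mem_map_of_mem f hd) 0
      (fun hbotq => absurd hbotq hflag) (le_refl m)
    obtain ⟨i, j, nr, hnr, hdecomp⟩ := quot_pullback memQ
    obtain ⟨k, hk⟩ := hnr
    have hk' : z ^ k = nr := hk
    have hcab : Commute a b := hab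
    have hzk : z ^ k = b ^ k * a ^ k := by
      rw [hzab, hcab.mul_zpow]
      exact (hcab.zpow_zpow k k).eq
    have hzkcent : ∀ g : G, Commute (z ^ k) g := fun g => (hzcent g).zpow_left k
    have hfinal : c * d = (d ^ i * b ^ k) * (a ^ k * c ^ j) := by
      calc c * d = d ^ i * c ^ j * nr := hdecomp
        _ = d ^ i * (c ^ j * z ^ k) := by rw [hk']; group
        _ = d ^ i * (z ^ k * c ^ j) := by rw [(hzkcent (c ^ j)).symm.eq]
        _ = d ^ i * ((b ^ k * a ^ k) * c ^ j) := by rw [hzk]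
        _ = (d ^ i * b ^ k) * (a ^ k * c ^ j) := by group
    exact ⟨d ^ i * b ^ k,
      SetLike.mem_coe.mpr (mul_mem (zpow_mem (mem_zpowers d) i) (zpow_mem hbd k)),
      a ^ k * c ^ j,
      SetLike.mem_coe.mpr (mul_mem (zpow_mem hac k) (zpow_mem (mem_zpowers c) j)),
      hfinal.symm⟩
  -- produce a "win"
  by_cases hABbot : A ⊓ B = ⊥
  · -- central element machinery
    by_cases hZex : ∃ z₀ : G, (∀ g : G, Commute z₀ g) ∧ z₀ ≠ 1
    · obtain ⟨z₀, hz₀cent, hz₀1⟩ := hZex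
      obtain ⟨z, hzz₀, hzp⟩ := pg_exists_orderp hp hG hz₀1
      have hzcent : ∀ g : G, Commute z g := by
        obtain ⟨k, hk⟩ := hzz₀
        have hk' : z₀ ^ k = z := hk
        rw [← hk']
        exact fun g => (hz₀cent g).zpow_left k
      have hz1 : z ≠ 1 := by
        intro h
        rw [h, orderOf_one] at hzp
        exact hp.one_lt.ne hzp
      obtain ⟨a, ha, b, hb, hzab⟩ := hprod z
      have hcomm_ab : Commute a b := by
        have hba : b = a⁻¹ * z := by rw [hzab]; group
        rw [hba]
        exact Commute.mul_right (Commute.refl a).inv_right (hzcent a).symm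
      have habp : a ^ p * b ^ p = 1 := by
        rw [← hcomm_ab.mul_pow, ← hzab, ← hzp, pow_orderOf_eq_one]
      have hap1 : a ^ p = 1 ∧ b ^ p = 1 := by
        have hmem : a ^ p ∈ A ⊓ B := by
          refine Subgroup.mem_inf.mpr ⟨pow_mem ha p, ?_⟩
          have h1 : a ^ p = (b ^ p)⁻¹ := by
            rw [eq_inv_iff_mul_eq_one]
            exact habp
          rw [h1]
          exact inv_mem (pow_mem hb p)
        rw [hABbot, Subgroup.mem_bot] at hmem
        constructor
        · exact hmem
        · rw [hmem, one_mul] at habp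
          exact habp
      by_cases hae : a = 1
      · have hzb : z = b := by rw [hzab, hae, one_mul]
        have hbB : z ∈ B := hzb ▸ hb
        have hzd : z ∈ zpowers d := lc_orderp_mem hp hG hB hd hd1 hbB hzp
        exact dispatchD z hzp hzd (zpowers_normal_of_central hzcent)
      by_cases hbe : b = 1
      · have hza : z = a := by rw [hzab, hbe, mul_one]
        have haA : z ∈ A := hza ▸ ha
        have hzc : z ∈ zpowers c := lc_orderp_mem hp hG hA hc hc1 haA hzp
        exact dispatchC z hzp hzc (zpowers_normal_of_central hzcent)
      have horda : orderOf a = p := by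
        have h1 := orderOf_dvd_of_pow_eq_one hap1.1
        rcases (Nat.dvd_prime hp).mp h1 with h | h
        · exact absurd (orderOf_eq_one_iff.mp h) hae
        · exact h
      have hordb : orderOf b = p := by
        have h1 := orderOf_dvd_of_pow_eq_one hap1.2
        rcases (Nat.dvd_prime hp).mp h1 with h | h
        · exact absurd (orderOf_eq_one_iff.mp h) hbe
        · exact h
      have hac : a ∈ zpowers c := lc_orderp_mem hp hG hA hc hc1 ha horda
      have hbd : b ∈ zpowers d := lc_orderp_mem hp hG hB hd hd1 hb hordb
      by_cases hacent : ∀ g : G, Commute a g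
      · exact dispatchC a horda hac (zpowers_normal_of_central hacent)
      by_cases hbcent : ∀ g : G, Commute b g
      · exact dispatchD b hordb hbd (zpowers_normal_of_central hbcent)
      have hanotz : a ∉ zpowers z := by
        intro hmem
        apply hacent
        obtain ⟨k, hk⟩ := hmem
        have hk' : z ^ k = a := hk
        rw [← hk']
        exact fun g => (hzcent g).zpow_left k
      exact dispatchS z a b hzcent hzab hac hbd hcomm_ab.eq hanotz hABbot
    · push_neg at hZex
      by_cases hAfin : (A : Set G).Finite
      · by_cases hBfin : (B : Set G).Finite
        · exfalso
          have huniv : (Set.univ : Set G) ⊆ (A : Set G) * (B : Set G) := by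
            intro g _
            obtain ⟨a, ha, b, hb, rfl⟩ := hprod g
            exact ⟨a, ha, b, hb, rfl⟩
          haveI : Finite G := Set.finite_univ_iff.mp ((hAfin.mul hBfin).subset huniv)
          haveI : Nontrivial G := ⟨⟨c, 1, hc1⟩⟩
          haveI : Fact p.Prime := ⟨hp⟩
          haveI := hG.center_nontrivial
          obtain ⟨z₀, hz₀mem, hz₀1⟩ :=
            (Subgroup.nontrivial_iff_exists_ne_one (Subgroup.center G)).mp inferInstance
          have hz₀cent : ∀ g : G, Commute z₀ g := by
            intro g
            exact (Subgroup.mem_center_iff.mp hz₀mem g).symm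
          exact hz₀1 (hZex z₀ hz₀cent)
        · have hBinf : (B : Set G).Infinite := hBfin
          have hBn := B_normal_of_A_finite hp hG hA hB hprod hAfin hBinf
          obtain ⟨v, hvd, hvp⟩ := pg_exists_orderp hp hG hd1
          exact dispatchD v hvp hvd
            (minimal_normal hp hG hB hBn ((zpowers_le.mpr hd) hvd) hvp)
      · by_cases hBfin : (B : Set G).Finite
        · have hAinf : (A : Set G).Infinite := hAfin
          have hAn := B_normal_of_A_finite hp hG hB hA (hprodBA hprod) hBfin hAinf
          obtain ⟨u, huc, hup⟩ := pg_exists_orderp hp hG hc1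
          exact dispatchC u hup huc
            (minimal_normal hp hG hA hAn ((zpowers_le.mpr hc) huc) hup)
        · exfalso
          have hAinf : (A : Set G).Infinite := hAfin
          have hBinf : (B : Set G).Infinite := hBfin
          exact I3_contradiction hp hG hA hB hprod hABbot hAinf hBinf
            (fun z hz => hZex z hz)
  · -- A ⊓ B nontrivial: central order-p element inside it
    obtain ⟨x, hxAB, hx1⟩ := exists_ne_one_of_ne_bot hABbot
    obtain ⟨z, hzx, hzp⟩ := pg_exists_orderp hp hG hx1
    have hzAB : z ∈ A ⊓ B := (zpowers_le.mpr hxAB) hzx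
    have hzcent := inf_central hp hG hA hB hprod hzAB
    have hzA : z ∈ A := (Subgroup.mem_inf.mp hzAB).1
    have hzc : z ∈ zpowers c := lc_orderp_mem hp hG hA hc hc1 hzA hzp
    exact dispatchC z hzp hzc (zpowers_normal_of_central hzcent)
end Part13

theorem subgroups_permute_in_pGroup_product' {G : Type*} [Group G] {p : ℕ}
    (hp : p.Prime) (hG : IsPGroup p G)
    (A B : Subgroup G) (hA : IsLocallyCyclic A) (hB : IsLocallyCyclic B)
    (hprod : ∀ g : G, ∃ a ∈ A, ∃ b ∈ B, g = a * b)
    (C D : Subgroup G) (hC : C ≤ A) (hD : D ≤ B) :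
    (C : Set G) * (D : Set G) = (D : Set G) * (C : Set G) := by
  ext g
  constructor
  · rintro ⟨x, hx, y, hy, rfl⟩
    rw [SetLike.mem_coe] at hx hy
    have hmem := master (2 * (orderOf x * orderOf y) + 1) p hp hG A B hA hB hprod x y
      (hC hx) (hD hy) 1 (fun _ => le_refl 1) (le_refl _)
    obtain ⟨u, hu, v, hv, huv⟩ := hmem
    rw [SetLike.mem_coe] at hu hv
    exact ⟨u, SetLike.mem_coe.mpr ((zpowers_le.mpr hy) hu),
      v, SetLike.mem_coe.mpr ((zpowers_le.mpr hx) hv), huv⟩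
  · rintro ⟨y, hy, x, hx, rfl⟩
    rw [SetLike.mem_coe] at hx hy
    have hmem := master (2 * (orderOf y * orderOf x) + 1) p hp hG B A hB hA
      (hprodBA hprod) y x (hD hy) (hC hx) 1 (fun _ => le_refl 1) (le_refl _)
    obtain ⟨u, hu, v, hv, huv⟩ := hmem
    rw [SetLike.mem_coe] at hu hv
    exact ⟨u, SetLike.mem_coe.mpr ((zpowers_le.mpr hx) hu),
      v, SetLike.mem_coe.mpr ((zpowers_le.mpr hy) hv), huv⟩


/-- In a `p`-group which is a product of two locally cyclic subgroups `A` and `B`,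
any subgroups `C ≤ A` and `D ≤ B` permute: `CD = DC`. -/
theorem subgroups_permute_in_pGroup_product {G : Type*} [Group G] {p : ℕ}
    (hp : p.Prime) (hG : IsPGroup p G)
    (A B : Subgroup G) (hA : IsLocallyCyclic A) (hB : IsLocallyCyclic B)
    (hprod : ∀ g : G, ∃ a ∈ A, ∃ b ∈ B, g = a * b)
    (C D : Subgroup G) (hC : C ≤ A) (hD : D ≤ B) :
    (C : Set G) * (D : Set G) = (D : Set G) * (C : Set G) := by
  exact subgroups_permute_in_pGroup_product' hp hG A B hA hB hprod C D hC hD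
end

section
/- Let G be a non-abelian 2-group that is the product G = AB where A is a quasicyclic 2-group (Prüfer 2-group) and B = ⟨b⟩ is cyclic, with A normal in G. Then the automorphism induced by b on A inverts every element of A, i.e., a^b = a^{-1} for all a ∈ A. -/
/-- A quasicyclic (Prüfer) `p`-group: an infinite locally cyclic `p`-group. -/
def IsQuasicyclic (p : ℕ) (G : Type*) [Group G] : Prop :=
  IsPGroup p G ∧ Infinite G ∧ IsLocallyCyclic G

/-!
Conjugation by `b` is an automorphism `Φ` of `A` with `Φ ^ 2 ^ m = 1`. Finitely many elements of
`A`, together with an element of large order, lie in a `Φ`-invariant cyclic subgroup `⟨g⟩` of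
order `2 ^ s`, on which `Φ` is `z ↦ z ^ u`. Then `u ^ 2 ^ m ≡ 1 [ZMOD 2 ^ s]`, and since each
squaring of an odd number gains exactly one factor `2` in `u ^ 2 - 1`, this forces `u ≡ ±1`
modulo `2 ^ (s - m)`: `Φ` is the identity or inversion on any two given elements. The identity
is excluded because then `b` would centralize the abelian group `A`, making `G = A⟨b⟩` abelian.
-/

namespace Int

/-- `u ^ 2 - 1 = (u - 1) * (u + 1)`, and for odd `u` one of the two factors is twice an odd
number. -/
theorem two_pow_dvd_sub_one_or_add_one_of_sq {u : ℤ} {t : ℕ} (h : 2 ^ (t + 1) ∣ u ^ 2 - 1) :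
    2 ^ t ∣ u - 1 ∨ 2 ^ t ∣ u + 1 := by
  rcases t with _ | t
  · simp
  obtain ⟨k, rfl⟩ : Odd u := by
    rcases Int.even_or_odd' u with ⟨k, rfl | rfl⟩
    · have : (2 : ℤ) ∣ (2 * k) ^ 2 - 1 := (dvd_pow_self 2 (Nat.succ_ne_zero (t + 1))).trans h
      rw [show (2 * k) ^ 2 - 1 = 2 * (2 * k ^ 2 - 1) + 1 by ring] at this
      omega
    · exact ⟨k, rfl⟩
  have hk : 2 ^ t ∣ k * (k + 1) := by
    rw [show (2 * k + 1) ^ 2 - 1 = 2 ^ 2 * (k * (k + 1)) by ring,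
      show (2 : ℤ) ^ (t + 1 + 1) = 2 ^ 2 * 2 ^ t by ring] at h
    exact (mul_dvd_mul_iff_left (by norm_num)).mp h
  rcases Int.even_or_odd k with hk_even | hk_odd
  · have hcop : IsCoprime ((2 : ℤ) ^ t) (k + 1) :=
      (Int.isCoprime_two_left.mpr hk_even.add_one).pow_left
    left
    rw [show 2 * k + 1 - 1 = 2 * k by ring, pow_succ']
    exact mul_dvd_mul_left 2 (hcop.dvd_of_dvd_mul_right hk)
  · have hcop : IsCoprime ((2 : ℤ) ^ t) k := (Int.isCoprime_two_left.mpr hk_odd).pow_left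
    right
    rw [show 2 * k + 1 + 1 = 2 * (k + 1) by ring, pow_succ']
    exact mul_dvd_mul_left 2 (hcop.dvd_of_dvd_mul_left hk)

theorem not_four_dvd_sq_add_one (u : ℤ) : ¬ 4 ∣ u ^ 2 + 1 := by
  rcases Int.even_or_odd' u with ⟨k, rfl | rfl⟩
  · rw [show (2 * k) ^ 2 + 1 = 4 * k ^ 2 + 1 by ring]
    omega
  · rw [show (2 * k + 1) ^ 2 + 1 = 4 * (k ^ 2 + k) + 2 by ring]
    omega

theorem two_pow_dvd_sub_one_or_add_one {u : ℤ} (t m : ℕ) (h : 2 ^ (t + m) ∣ u ^ 2 ^ m - 1) :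
    2 ^ t ∣ u - 1 ∨ 2 ^ t ∣ u + 1 := by
  induction m generalizing t u with
  | zero => simpa using Or.inl h
  | succ m ih =>
    have h' : 2 ^ (t + 1 + m) ∣ (u ^ 2) ^ 2 ^ m - 1 := by
      rwa [← pow_mul, ← pow_succ', add_right_comm, add_assoc]
    rcases ih (t + 1) h' with h1 | h1
    · exact two_pow_dvd_sub_one_or_add_one_of_sq h1
    · rcases t with _ | t
      · simp
      · refine absurd ?_ (not_four_dvd_sq_add_one u)
        simpa using (pow_dvd_pow (2 : ℤ) (show 2 ≤ t + 1 + 1 by omega)).trans h1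

end Int

theorem IsPGroup.isMulTorsion {p : ℕ} {G : Type*} [Group G] (hp : 0 < p) (hG : IsPGroup p G) :
    IsMulTorsion G := fun g ↦
  let ⟨k, hk⟩ := hG g
  isOfFinOrder_iff_pow_eq_one.mpr ⟨p ^ k, pow_pos hp k, hk⟩

namespace IsLocallyCyclic

variable {G : Type*} [Group G]

theorem exists_zpowers_eq_closure (hG : IsLocallyCyclic G) {S : Set G} (hS : S.Finite) :
    ∃ g : G, Subgroup.zpowers g = Subgroup.closure S :=
  (Subgroup.isCyclic_iff_exists_zpowers_eq_top _).mp (hG _ ((Subgroup.fg_iff _).mpr ⟨S, rfl, hS⟩))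

theorem exists_subset_zpowers (hG : IsLocallyCyclic G) {S : Set G} (hS : S.Finite) :
    ∃ g : G, S ⊆ Subgroup.zpowers g :=
  let ⟨g, hg⟩ := hG.exists_zpowers_eq_closure hS
  ⟨g, hg ▸ Subgroup.subset_closure⟩

theorem commute (hG : IsLocallyCyclic G) (x y : G) : Commute x y := by
  obtain ⟨g, hg⟩ := hG.exists_subset_zpowers (Set.toFinite {x, y})
  obtain ⟨i, rfl⟩ := hg (Set.mem_insert x {y})
  obtain ⟨j, rfl⟩ := hg (Set.mem_insert_of_mem _ rfl)
  exact Commute.zpow_zpow_self g i j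

theorem exists_le_orderOf [Infinite G] (hG : IsLocallyCyclic G) (htors : IsMulTorsion G)
    (n : ℕ) : ∃ g : G, n ≤ orderOf g := by
  obtain ⟨S, hS⟩ := Infinite.exists_subset_card_eq G n
  obtain ⟨g, hg⟩ := hG.exists_subset_zpowers S.finite_toSet
  refine ⟨g, ?_⟩
  calc n = (S : Set G).ncard := by rw [Set.ncard_coe_finset, hS]
    _ ≤ (Subgroup.zpowers g : Set G).ncard := Set.ncard_le_ncard hg (htors g).finite_zpowers
    _ = orderOf g := by rw [← Nat.card_coe_set_eq]; exact Nat.card_zpowers g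

/-- The subgroup generated by the orbit of `S` under `⟨Φ⟩` is finitely generated and
`Φ`-invariant. -/
theorem exists_subset_zpowers_apply_mem (hG : IsLocallyCyclic G) {Φ : MulAut G}
    (hΦ : IsOfFinOrder Φ) {S : Set G} (hS : S.Finite) :
    ∃ g : G, S ⊆ Subgroup.zpowers g ∧ Φ g ∈ Subgroup.zpowers g := by
  set T := Set.image2 (fun (ψ : MulAut G) x ↦ ψ x) (Subgroup.zpowers Φ) S
  obtain ⟨g, hg⟩ := hG.exists_zpowers_eq_closure (hΦ.finite_zpowers.image2 _ hS)
  have hST : S ⊆ T := fun x hx ↦ ⟨1, one_mem _, x, hx, rfl⟩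
  have hΦT : Subgroup.closure T ≤ (Subgroup.closure T).comap Φ.toMonoidHom := by
    rw [Subgroup.closure_le]
    rintro _ ⟨ψ, hψ, x, hx, rfl⟩
    exact Subgroup.subset_closure ⟨Φ * ψ, mul_mem (Subgroup.mem_zpowers Φ) hψ, x, hx, rfl⟩
  rw [← hg] at hΦT
  exact ⟨g, hg ▸ hST.trans Subgroup.subset_closure, hΦT (Subgroup.mem_zpowers g)⟩

end IsLocallyCyclic

theorem map_eq_zpow_of_mem_zpowers {G F : Type*} [Group G] [FunLike F G G] [MonoidHomClass F G G]
    {f : F} {g z : G} {u : ℤ} (hu : f g = g ^ u) (hz : z ∈ Subgroup.zpowers g) :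
    f z = z ^ u := by
  obtain ⟨k, rfl⟩ := hz
  simp only [map_zpow, hu, ← zpow_mul, mul_comm]

namespace MulAut

variable {G : Type*} [Group G] {Φ : MulAut G} {g : G} {u : ℤ}

theorem pow_apply_eq_zpow (hu : Φ g = g ^ u) (n : ℕ) : (Φ ^ n) g = g ^ u ^ n := by
  induction n with
  | zero => simp
  | succ n ih => rw [pow_succ', mul_apply, ih, map_zpow, hu, ← zpow_mul, pow_succ']

theorem orderOf_dvd_pow_sub_one (hu : Φ g = g ^ u) {n : ℕ} (hΦ : Φ ^ n = 1) :
    (orderOf g : ℤ) ∣ u ^ n - 1 := by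
  have hpow : g ^ u ^ n = g ^ (1 : ℤ) := by
    rw [← pow_apply_eq_zpow hu, hΦ, zpow_one, one_apply]
  exact Int.modEq_iff_dvd.mp (zpow_eq_zpow_iff_modEq.mp hpow).symm

end MulAut

theorem IsQuasicyclic.apply_eq_self_or_inv {A : Type*} [Group A] (hA : IsQuasicyclic 2 A)
    {Φ : MulAut A} {m : ℕ} (hΦ : Φ ^ 2 ^ m = 1) (x y : A) :
    (Φ x = x ∧ Φ y = y) ∨ (Φ x = x⁻¹ ∧ Φ y = y⁻¹) := by
  obtain ⟨h2, hinf, hLC⟩ := hA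
  obtain ⟨i, hxi⟩ := IsPGroup.iff_orderOf.mp h2 x
  obtain ⟨j, hyj⟩ := IsPGroup.iff_orderOf.mp h2 y
  obtain ⟨d, hd⟩ := hLC.exists_le_orderOf (h2.isMulTorsion two_pos) (2 ^ (i + j + m))
  obtain ⟨g, hsub, ⟨u, hu⟩⟩ := hLC.exists_subset_zpowers_apply_mem
    (isOfFinOrder_iff_pow_eq_one.mpr ⟨2 ^ m, pow_pos two_pos m, hΦ⟩) (Set.toFinite {x, y, d})
  have hdvd : 2 ^ (i + j + m) ∣ u ^ 2 ^ m - 1 := by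
    obtain ⟨k, hk⟩ := IsPGroup.iff_orderOf.mp h2 d
    have hdg : (2 : ℤ) ^ k ∣ orderOf g := by
      exact_mod_cast hk ▸ orderOf_dvd_of_mem_zpowers (hsub (by simp))
    refine dvd_trans ?_ (hdg.trans (MulAut.orderOf_dvd_pow_sub_one hu.symm hΦ))
    exact pow_dvd_pow 2 ((Nat.pow_le_pow_iff_right one_lt_two).mp (hk ▸ hd))
  have hact : ∀ z ∈ Subgroup.zpowers g, (orderOf z : ℤ) ∣ 2 ^ (i + j) →
      ∀ ε : ℤ, 2 ^ (i + j) ∣ u - ε → Φ z = z ^ ε := fun z hz hzo ε hε ↦ by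
    rw [map_eq_zpow_of_mem_zpowers hu.symm hz]
    exact zpow_eq_zpow_iff_modEq.mpr (Int.modEq_iff_dvd.mpr (hzo.trans hε)).symm
  have hx : (orderOf x : ℤ) ∣ 2 ^ (i + j) := by
    rw [hxi, pow_add]; exact_mod_cast dvd_mul_right _ _
  have hy : (orderOf y : ℤ) ∣ 2 ^ (i + j) := by
    rw [hyj, pow_add]; exact_mod_cast dvd_mul_left _ _
  rcases Int.two_pow_dvd_sub_one_or_add_one (i + j) m hdvd with h | h
  · left
    simpa using And.intro (hact x (hsub (by simp)) hx 1 h) (hact y (hsub (by simp)) hy 1 h)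
  · right
    have h : 2 ^ (i + j) ∣ u - -1 := by rwa [sub_neg_eq_add]
    simpa using And.intro (hact x (hsub (by simp)) hx (-1) h) (hact y (hsub (by simp)) hy (-1) h)

theorem commute_of_forall_eq_mul_zpow {G : Type*} [Group G] {A : Subgroup G} {b : G}
    (hA : ∀ x ∈ A, ∀ y ∈ A, Commute x y) (hb : ∀ a ∈ A, Commute a b)
    (hprod : ∀ g : G, ∃ a ∈ A, ∃ k : ℤ, g = a * b ^ k) (x y : G) : Commute x y := by
  obtain ⟨a₁, ha₁, k₁, rfl⟩ := hprod x
  obtain ⟨a₂, ha₂, k₂, rfl⟩ := hprod y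
  refine Commute.mul_left ?_ ?_
  · exact (hA a₁ ha₁ a₂ ha₂).mul_right ((hb a₁ ha₁).zpow_right k₂)
  · exact (((hb a₂ ha₂).zpow_right k₁).symm).mul_right (Commute.zpow_zpow_self b k₁ k₂)

/-- If a non-abelian `2`-group `G` is the product of a normal quasicyclic `2`-subgroup `A`
and a cyclic subgroup `⟨b⟩`, then `b` inverts every element of `A`. -/
theorem inverting_automorphism_on_quasicyclic {G : Type*} [Group G]
    (hG : IsPGroup 2 G) (hna : ¬ ∀ x y : G, x * y = y * x)
    (A : Subgroup G) (hAn : A.Normal) (hA : IsQuasicyclic 2 A) (b : G)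
    (hprod : ∀ g : G, ∃ a ∈ A, ∃ k : ℤ, g = a * b ^ k) :
    ∀ a ∈ A, b⁻¹ * a * b = a⁻¹ := by
  obtain ⟨m, hbm⟩ := hG b
  set Φ : MulAut A := MulAut.conjNormal b⁻¹
  have hΦ : Φ ^ 2 ^ m = 1 := by rw [← map_pow, inv_pow, hbm, inv_one, map_one]
  have hΦ_apply : ∀ a : A, (Φ a : G) = b⁻¹ * a * b := fun a ↦ by simp [Φ]
  obtain ⟨a₀, ha₀⟩ : ∃ a₀ : A, Φ a₀ ≠ a₀ := by
    by_contra! hfix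
    refine hna fun x y ↦ (commute_of_forall_eq_mul_zpow (A := A) ?_ ?_ hprod x y).eq
    · exact fun x hx y hy ↦ congrArg Subtype.val (hA.2.2.commute ⟨x, hx⟩ ⟨y, hy⟩)
    · intro a ha
      have hconj : b⁻¹ * a * b = a := hΦ_apply ⟨a, ha⟩ ▸ congrArg Subtype.val (hfix ⟨a, ha⟩)
      calc a * b = b * (b⁻¹ * a * b) := by group
        _ = b * a := by rw [hconj]
  intro a ha
  rcases hA.apply_eq_self_or_inv hΦ ⟨a, ha⟩ a₀ with ⟨-, h⟩ | ⟨h, -⟩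
  · exact absurd h ha₀
  · simpa [hΦ_apply] using congrArg Subtype.val h
end

section
/- Every finite group G that is the product G = AB of two cyclic subgroups A and B is supersoluble. -/
/-!
Induction on `|G|`: it suffices to find a nontrivial cyclic normal subgroup `N`, since `G ⧸ N`
is again a product of two cyclic subgroups and supersolubility lifts through cyclic kernels.
Say `|B| ≤ |A|` and `B = ⟨y⟩`. The subgroup `D = A ∩ yAy⁻¹` is normalised by `y`, because
`y⁻¹Dy ≤ A` has the same order as `D` and a cyclic group has one subgroup of each order; it is
normalised by the abelian group `A ⊇ D` too, so `D ⊴ AB = G` and `D` lies in the core of `A`.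
If that core were trivial, then `D = 1`, the cosets `ayA` (`a ∈ A`) would be pairwise distinct
and different from `A`, and `|B| ≥ |G : A| > |A|`.
-/

/-- A group is supersoluble if it has a finite normal series with cyclic factors. -/
def IsSupersolvable (G : Type*) [Group G] : Prop :=
  ∃ (n : ℕ) (s : Fin (n + 1) → Subgroup G),
    Monotone s ∧ s 0 = ⊥ ∧ s (Fin.last n) = ⊤ ∧
    (∀ i : Fin (n + 1), (s i).Normal) ∧
    (∀ i : Fin n, ∃ x ∈ s i.succ, ∀ y ∈ s i.succ, ∃ k : ℤ, y * (x ^ k)⁻¹ ∈ s i.castSucc)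

open Subgroup

theorem IsCyclic.eq_of_card_eq {C : Type*} [Group C] [Finite C] [IsCyclic C]
    {H K : Subgroup C} (h : Nat.card H = Nat.card K) : H = K := by
  let _ : CommGroup C := IsCyclic.commGroup
  have eq_ker : ∀ H : Subgroup C, H = (powMonoidHom (Nat.card H) : C →* C).ker := fun H ↦
    eq_of_le_of_card_ge (fun _ hx ↦ orderOf_dvd_iff_pow_eq_one.mp (H.orderOf_dvd_natCard hx))
      (by rw [IsCyclic.card_powMonoidHom_ker, Nat.gcd_eq_right (card_subgroup_dvd_card H)])
  rw [eq_ker H, eq_ker K, h]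

theorem Subgroup.eq_of_card_eq_of_le_of_isCyclic {G : Type*} [Group G] {A H K : Subgroup G}
    [Finite A] [IsCyclic A] (hH : H ≤ A) (hK : K ≤ A) (h : Nat.card H = Nat.card K) : H = K := by
  have hsub : H.subgroupOf A = K.subgroupOf A := IsCyclic.eq_of_card_eq <| by
    rwa [Nat.card_congr (subgroupOfEquivOfLe hH).toEquiv,
      Nat.card_congr (subgroupOfEquivOfLe hK).toEquiv]
  rwa [subgroupOf_inj, inf_of_le_left hH, inf_of_le_left hK] at hsub

section Product

variable {G : Type*} [Group G] {A B : Subgroup G}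

theorem forall_mem_mul_swap (hprod : ∀ g : G, ∃ a ∈ A, ∃ b ∈ B, g = a * b) :
    ∀ g : G, ∃ b ∈ B, ∃ a ∈ A, g = b * a := fun g ↦ by
  obtain ⟨a, ha, b, hb, hg⟩ := hprod g⁻¹
  exact ⟨b⁻¹, inv_mem hb, a⁻¹, inv_mem ha, by rw [← mul_inv_rev, ← hg, inv_inv]⟩

theorem eq_top_of_forall_mem_mul (hprod : ∀ g : G, ∃ a ∈ A, ∃ b ∈ B, g = a * b)
    {K : Subgroup G} (hA : A ≤ K) (hB : B ≤ K) : K = ⊤ :=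
  eq_top_iff.mpr fun g _ ↦ by
    obtain ⟨a, ha, b, hb, rfl⟩ := hprod g
    exact mul_mem (hA ha) (hB hb)

theorem forall_mem_map_mul {H : Type*} [Group H] {f : G →* H} (hf : Function.Surjective f)
    (hprod : ∀ g : G, ∃ a ∈ A, ∃ b ∈ B, g = a * b) :
    ∀ h : H, ∃ a ∈ A.map f, ∃ b ∈ B.map f, h = a * b := fun h ↦ by
  obtain ⟨g, rfl⟩ := hf h
  obtain ⟨a, ha, b, hb, rfl⟩ := hprod g
  exact ⟨f a, mem_map_of_mem f ha, f b, mem_map_of_mem f hb, map_mul f a b⟩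

theorem card_quotient_le_of_forall_mem_mul [Finite B]
    (hprod : ∀ g : G, ∃ b ∈ B, ∃ a ∈ A, g = b * a) : Nat.card (G ⧸ A) ≤ Nat.card B := by
  refine Nat.card_le_card_of_surjective (fun b : B ↦ ((b : G) : G ⧸ A)) fun q ↦ ?_
  induction q using QuotientGroup.induction_on with | H g => ?_
  obtain ⟨b, hb, a, ha, rfl⟩ := hprod g
  exact ⟨⟨b, hb⟩, QuotientGroup.eq.mpr (by simpa using ha)⟩

theorem card_lt_card_quotient_of_inf_map_conj_eq_bot [Finite G] {y : G}
    (hy : y ∉ A) (hD : A ⊓ A.map (MulAut.conj y).toMonoidHom = ⊥) :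
    Nat.card A < Nat.card (G ⧸ A) := by
  have := Fintype.ofFinite A
  have := Fintype.ofFinite (G ⧸ A)
  simp only [Nat.card_eq_fintype_card]
  refine Fintype.card_lt_of_injective_of_notMem (fun a : A ↦ ((a * y : G) : G ⧸ A))
    (b := ((1 : G) : G ⧸ A)) (fun a a' h ↦ ?_) ?_
  · have hmem : (a : G)⁻¹ * a' ∈ A ⊓ A.map (MulAut.conj y).toMonoidHom :=
      mem_inf.mpr ⟨mul_mem (inv_mem a.2) a'.2,
        Subgroup.mem_map_equiv.mpr (by simpa [mul_assoc] using QuotientGroup.eq.mp h)⟩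
    rw [hD, mem_bot, inv_mul_eq_one] at hmem
    exact Subtype.ext hmem
  · rintro ⟨a, ha⟩
    exact hy ((A.mul_mem_cancel_left a.2).mp (by simpa using inv_mem (QuotientGroup.eq.mp ha)))

theorem normal_inf_map_conj [Finite A] [IsCyclic A] {y : G}
    (hprod : ∀ g : G, ∃ a ∈ A, ∃ b ∈ zpowers y, g = a * b) :
    (A ⊓ A.map (MulAut.conj y).toMonoidHom).Normal := by
  set D := A ⊓ A.map (MulAut.conj y).toMonoidHom
  have hy : y⁻¹ ∈ normalizer (D : Set G) := by
    rw [mem_normalizer_iff_map_conj_eq]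
    refine eq_of_card_eq_of_le_of_isCyclic (A := A) ?_ inf_le_left
      (card_map_of_injective (MulEquiv.injective _))
    rintro _ ⟨d, hd, rfl⟩
    simpa using Subgroup.mem_map_equiv.mp (mem_inf.mp hd).2
  have hA : A ≤ normalizer (D : Set G) :=
    (le_centralizer A).trans <| (centralizer_le inf_le_left).trans (centralizer_le_normalizer _)
  exact normalizer_eq_top_iff.mp <|
    eq_top_of_forall_mem_mul hprod hA (zpowers_le.mpr (by simpa using inv_mem hy))

theorem normalCore_ne_bot_of_card_le [Finite G] [Nontrivial G] [IsCyclic A] [IsCyclic B]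
    (hprod : ∀ g : G, ∃ a ∈ A, ∃ b ∈ B, g = a * b) (hle : Nat.card B ≤ Nat.card A) :
    A.normalCore ≠ ⊥ := by
  obtain ⟨y, rfl⟩ := (B.isCyclic_iff_exists_zpowers_eq_top).mp ‹_›
  intro hcore
  have hy : y ∉ A := fun hy ↦ by
    rw [eq_top_of_forall_mem_mul hprod le_rfl (zpowers_le.mpr hy), normalCore_eq_self] at hcore
    exact top_ne_bot hcore
  have := normal_inf_map_conj hprod
  have hD : A ⊓ A.map (MulAut.conj y).toMonoidHom = ⊥ :=
    eq_bot_iff.mpr (hcore ▸ normal_le_normalCore.mpr inf_le_left)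
  have hlt := card_lt_card_quotient_of_inf_map_conj_eq_bot hy hD
  have hquot := card_quotient_le_of_forall_mem_mul (forall_mem_mul_swap hprod)
  omega

theorem exists_normal_isCyclic_ne_bot [Finite G] [Nontrivial G] [IsCyclic A] [IsCyclic B]
    (hprod : ∀ g : G, ∃ a ∈ A, ∃ b ∈ B, g = a * b) :
    ∃ N : Subgroup G, N.Normal ∧ IsCyclic N ∧ N ≠ ⊥ := by
  rcases le_total (Nat.card B) (Nat.card A) with hle | hle
  · exact ⟨A.normalCore, inferInstance, isCyclic_of_le A.normalCore_le,
      normalCore_ne_bot_of_card_le hprod hle⟩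
  · exact ⟨B.normalCore, inferInstance, isCyclic_of_le B.normalCore_le,
      normalCore_ne_bot_of_card_le (forall_mem_mul_swap hprod) hle⟩

end Product

section Supersolvable

variable {G H : Type*} [Group G] [Group H]

theorem isSupersolvable_of_subsingleton [Subsingleton G] : IsSupersolvable G :=
  ⟨0, fun _ ↦ ⊥, monotone_const, rfl, Subsingleton.elim _ _, fun _ ↦ inferInstance, Fin.elim0⟩

theorem exists_zpow_mul_inv_mem_bot {N : Subgroup G} (hN : IsCyclic N) :
    ∃ x ∈ N, ∀ y ∈ N, ∃ k : ℤ, y * (x ^ k)⁻¹ ∈ (⊥ : Subgroup G) := by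
  obtain ⟨x, rfl⟩ := (N.isCyclic_iff_exists_zpowers_eq_top).mp hN
  refine ⟨x, mem_zpowers x, fun y hy ↦ ?_⟩
  obtain ⟨k, rfl⟩ := mem_zpowers_iff.mp hy
  exact ⟨k, by simp⟩

theorem exists_zpow_mul_inv_mem_comap {f : G →* H} (hf : Function.Surjective f)
    {K L : Subgroup H} (h : ∃ x ∈ L, ∀ y ∈ L, ∃ k : ℤ, y * (x ^ k)⁻¹ ∈ K) :
    ∃ x ∈ L.comap f, ∀ y ∈ L.comap f, ∃ k : ℤ, y * (x ^ k)⁻¹ ∈ K.comap f := by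
  obtain ⟨_, hx, hgen⟩ := h
  obtain ⟨x, rfl⟩ := hf ‹_›
  refine ⟨x, hx, fun y hy ↦ ?_⟩
  obtain ⟨k, hk⟩ := hgen (f y) hy
  exact ⟨k, by simpa using hk⟩

theorem IsSupersolvable.of_surjective {f : G →* H} (hf : Function.Surjective f)
    (hker : IsCyclic f.ker) (h : IsSupersolvable H) : IsSupersolvable G := by
  obtain ⟨n, t, hmono, h0, hlast, hnormal, hcyc⟩ := h
  refine ⟨n + 1, Fin.cons ⊥ fun i ↦ (t i).comap f, ?_, rfl, ?_, ?_, ?_⟩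
  · refine Fin.monotone_iff_le_succ.mpr (Fin.cases bot_le fun i ↦ ?_)
    rw [← Fin.succ_castSucc, Fin.cons_succ, Fin.cons_succ]
    exact comap_mono (hmono (Fin.castSucc_le_succ i))
  · rw [← Fin.succ_last, Fin.cons_succ, hlast, comap_top]
  · refine Fin.cases normal_bot fun i ↦ ?_
    rw [Fin.cons_succ]
    exact (hnormal i).comap f
  · refine Fin.cases ?_ fun i ↦ ?_
    · rw [Fin.cons_succ, h0, MonoidHom.comap_bot]
      exact exists_zpow_mul_inv_mem_bot hker
    · rw [← Fin.succ_castSucc, Fin.cons_succ, Fin.cons_succ]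
      exact exists_zpow_mul_inv_mem_comap hf (hcyc i)

end Supersolvable

/-- A finite product of two cyclic subgroups is supersoluble. -/
theorem finite_product_of_cyclics_supersolvable {G : Type*} [Group G] [Finite G]
    (A B : Subgroup G) (hA : IsCyclic A) (hB : IsCyclic B)
    (hprod : ∀ g : G, ∃ a ∈ A, ∃ b ∈ B, g = a * b) :
    IsSupersolvable G := by
  induction hn : Nat.card G using Nat.strong_induction_on generalizing G with
  | _ n ih =>
    rcases subsingleton_or_nontrivial G with _ | _
    · exact isSupersolvable_of_subsingleton
    obtain ⟨N, hN, hNcyc, hNbot⟩ := exists_normal_isCyclic_ne_bot hprod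
    have hf := QuotientGroup.mk'_surjective N
    refine IsSupersolvable.of_surjective hf (by rwa [QuotientGroup.ker_mk']) ?_
    refine ih _ ?_ (A.map (QuotientGroup.mk' N)) (B.map (QuotientGroup.mk' N))
      (isCyclic_of_surjective _ ((QuotientGroup.mk' N).subgroupMap_surjective A))
      (isCyclic_of_surjective _ ((QuotientGroup.mk' N).subgroupMap_surjective B))
      (forall_mem_map_mul hf hprod) rfl
    exact hn ▸ index_bot (G := G) ▸ index_strictAnti (bot_lt_iff_ne_bot.mpr hNbot)
end

section
/- If a group G contains a central subgroup Z such that G/Z is locally finite, then the derived subgroup [G,G] is locally finite. -/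
/-!
A finitely generated subgroup of `[G, G]` involves only finitely many commutators, so it lies in
`[K, K]` for a finitely generated `K`. By hypothesis `K` meets only finitely many cosets of `Z`, and
`Z` is central, so the center of `K` has finite index in `K`. A commutator of `K` only depends on
the cosets of its entries modulo the center, hence `K` has finitely many commutators, and by
Schur's theorem in the form "finitely many commutators implies a finite derived subgroup"
`[K, K]` is finite.
-/

open scoped commutatorElement

namespace Subgroup

variable {G : Type*} [Group G]

theorem FG.exists_le_of_le_iSup {ι : Type*} [Nonempty ι] {K : ι → Subgroup G}
    (hK : Directed (· ≤ ·) K) {H : Subgroup G} (hH : H.FG) (hle : H ≤ ⨆ i, K i) :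
    ∃ i, H ≤ K i := by
  classical
  obtain ⟨T, rfl⟩ := hH
  have hT : ∀ t ∈ T, ∃ i, t ∈ K i := fun t ht =>
    (mem_iSup_of_directed hK).mp (hle (subset_closure ht))
  choose! i hi using hT
  obtain ⟨j, hj⟩ := hK.finset_le (T.image i)
  exact ⟨j, closure_le _ |>.mpr fun t ht => hj _ (Finset.mem_image_of_mem i ht) (hi t ht)⟩

theorem iSup_commutator_fg :
    ⨆ K : {K : Subgroup G // K.FG}, ⁅K.1, K.1⁆ = _root_.commutator G := by
  refine le_antisymm (iSup_le fun K => commutator_mono le_top le_top) ?_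
  classical
  rw [commutator_eq_closure, closure_le]
  rintro _ ⟨x, y, rfl⟩
  have hxy : (closure {x, y}).FG := ⟨{x, y}, by simp⟩
  exact le_iSup (fun K : {K : Subgroup G // K.FG} => ⁅K.1, K.1⁆) ⟨_, hxy⟩ <|
    commutator_mem_commutator (subset_closure (by simp)) (subset_closure (by simp))

theorem FG.exists_fg_le_commutator {H : Subgroup G} (hH : H.FG)
    (hle : H ≤ _root_.commutator G) : ∃ K : Subgroup G, K.FG ∧ H ≤ ⁅K, K⁆ := by
  have hdir : Directed (· ≤ ·) fun K : {K : Subgroup G // K.FG} => ⁅K.1, K.1⁆ :=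
    fun K L => ⟨⟨_, K.2.sup L.2⟩, commutator_mono le_sup_left le_sup_left,
      commutator_mono le_sup_right le_sup_right⟩
  have : Nonempty {K : Subgroup G // K.FG} := ⟨⟨⊥, FG.bot⟩⟩
  obtain ⟨K, hK⟩ := hH.exists_le_of_le_iSup hdir (hle.trans iSup_commutator_fg.ge)
  exact ⟨K.1, K.2, hK⟩

theorem finite_quotient_subgroupOf_of_finite_image {Z K : Subgroup G}
    (h : ((↑) '' (K : Set G) : Set (G ⧸ Z)).Finite) : Finite (K ⧸ Z.subgroupOf K) := by
  let e : K ⧸ Z.subgroupOf K → G ⧸ Z := Quotient.map' Subtype.val fun a b hab => by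
    simpa [QuotientGroup.leftRel_apply, mem_subgroupOf] using hab
  have he : Function.Injective e := by
    rintro ⟨a⟩ ⟨b⟩ hab
    exact QuotientGroup.eq.mpr (mem_subgroupOf.mpr (QuotientGroup.eq.mp hab))
  have : Finite (Set.range e) := by
    refine (h.subset ?_).to_subtype
    rintro _ ⟨⟨a⟩, rfl⟩
    exact ⟨a, a.2, rfl⟩
  exact Finite.of_injective_finite_range he

theorem subgroupOf_le_center {Z : Subgroup G} (hZ : Z ≤ center G) (K : Subgroup G) :
    Z.subgroupOf K ≤ center K := fun _ hz =>
  mem_center_iff.mpr fun g => Subtype.ext (mem_center_iff.mp (hZ (mem_subgroupOf.mp hz)) g)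

theorem commutatorElement_mul_mem_center {z w : G} (hz : z ∈ center G) (hw : w ∈ center G)
    (x y : G) : ⁅x * z, y * w⁆ = ⁅x, y⁆ := by
  rw [mem_center_iff] at hz hw
  have hz' : z * (y * w) * z⁻¹ = y * w := by rw [← hz, mul_inv_cancel_right]
  have hw' : w * x⁻¹ * w⁻¹ = x⁻¹ := by rw [← hw, mul_inv_cancel_right]
  calc ⁅x * z, y * w⁆ = x * (z * (y * w) * z⁻¹) * x⁻¹ * w⁻¹ * y⁻¹ := by
        rw [commutatorElement_def]; group
    _ = x * y * (w * x⁻¹ * w⁻¹) * y⁻¹ := by rw [hz']; group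
    _ = ⁅x, y⁆ := by rw [hw', commutatorElement_def]

theorem finite_commutatorSet_of_finiteIndex_center [(center G).FiniteIndex] :
    Finite (commutatorSet G) := by
  let c : G ⧸ center G → G ⧸ center G → G := Quotient.lift₂ (fun x y => ⁅x, y⁆)
    fun x₁ y₁ x₂ y₂ hx hy => by
      simpa using (commutatorElement_mul_mem_center (QuotientGroup.leftRel_apply.mp hx)
        (QuotientGroup.leftRel_apply.mp hy) x₁ y₁).symm
  refine Set.Finite.to_subtype <| (Set.finite_range fun p : _ × _ => c p.1 p.2).subset ?_
  rintro _ ⟨x, y, rfl⟩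
  exact ⟨(x, y), rfl⟩

theorem finite_commutator_of_finiteIndex_center {K : Subgroup G} [(center K).FiniteIndex] :
    Finite (⁅K, K⁆ : Subgroup G) := by
  have := finite_commutatorSet_of_finiteIndex_center (G := K)
  rw [← K.map_subtype_commutator]
  exact Finite.of_surjective _ (K.subtype.subgroupMap_surjective _)

end Subgroup

/-- Local version of Schur's theorem: if `G` has a central subgroup `Z` such that the
quotient `G/Z` is locally finite (every finitely generated subgroup of `G` has only
finitely many cosets modulo `Z`), then the derived subgroup of `G` is locally finite. -/
theorem schur_local {G : Type*} [Group G] (Z : Subgroup G)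
    (hZ : Z ≤ Subgroup.center G)
    (hquot : ∀ H : Subgroup G, H.FG →
      ∃ F : Finset G, ∀ h ∈ H, ∃ f ∈ F, f⁻¹ * h ∈ Z) :
    ∀ H : Subgroup G, H ≤ commutator G → H.FG → Finite H := by
  intro H hle hH
  obtain ⟨K, hK, hHK⟩ := hH.exists_fg_le_commutator hle
  obtain ⟨F, hF⟩ := hquot K hK
  have : Finite (K ⧸ Z.subgroupOf K) := by
    refine Subgroup.finite_quotient_subgroupOf_of_finite_image <|
      (F.finite_toSet.image (QuotientGroup.mk : G → G ⧸ Z)).subset ?_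
    rintro _ ⟨h, hh, rfl⟩
    obtain ⟨f, hf, hfh⟩ := hF h hh
    exact ⟨f, hf, QuotientGroup.eq.mpr hfh⟩
  have : (Z.subgroupOf K).FiniteIndex := Subgroup.finiteIndex_of_finite_quotient
  have : (Subgroup.center K).FiniteIndex :=
    Subgroup.finiteIndex_of_le (Subgroup.subgroupOf_le_center hZ K)
  have := Subgroup.finite_commutator_of_finiteIndex_center (K := K)
  exact Finite.of_injective _ (Subgroup.inclusion_injective hHK)
end

section
/- Let G = AB be a group with A periodic locally cyclic and B non-trivial torsion-free locally cyclic, and suppose every periodic normal subgroup of G is trivial. Then either A = 1 and G = B, or A = ⟨a⟩ with a² = 1 and G = B ⋊ ⟨a⟩ with b^a = b^{-1} for all b ∈ B. -/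
/-!
By Itô's argument the mixed commutators `⁅a, b⁆` (`a ∈ A`, `b ∈ B`) commute with each other, so
`K = ⁅A, B⁆` is an abelian normal subgroup; its torsion is a periodic normal subgroup, so `K` is
torsion-free. If `v = ab ∈ K`, then `a` acts on `K` as `b⁻¹`, so the norm `∏_{i<n} aⁱ v a⁻ⁱ`
(`n` the order of `a`) equals `bⁿ`. Hence `w = vⁿ b⁻ⁿ` has trivial `a`-norm; writing `w = a'b'`,
the commuting `a`- and `a'`-norms of `w` give `b'^(n n') = 1`, so `w = a'` is periodic and trivial.
Thus every element of `K` has a power in `B`, so `B` centralizes `K`. An element of `A` that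
centralizes `K` centralizes `B`, hence is central and periodic, hence trivial; therefore
`B = C_G(K)` is normal. Finally an element of finite order acts on the torsion-free locally cyclic
group `B` as `1` or as inversion, and the first case forces it to be central, hence trivial; so
every non-trivial element of `A` inverts `B`, which leaves room for only one of them.
-/

open Subgroup
open scoped IsMulCommutative

section

variable {G : Type*} [Group G]

theorem IsLocallyCyclic.exists_zpow_eq {H : Subgroup G} (hH : IsLocallyCyclic H) {x y : G}
    (hx : x ∈ H) (hy : y ∈ H) : ∃ g : G, ∃ p q : ℤ, g ^ p = x ∧ g ^ q = y := by
  let S : Subgroup H := closure {⟨x, hx⟩, ⟨y, hy⟩}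
  have : IsCyclic S := hH S ((fg_iff S).mpr ⟨_, rfl, Set.toFinite _⟩)
  obtain ⟨g, hg⟩ := IsCyclic.exists_generator (α := S)
  obtain ⟨p, hp⟩ := mem_zpowers_iff.mp (hg ⟨⟨x, hx⟩, subset_closure (by simp)⟩)
  obtain ⟨q, hq⟩ := mem_zpowers_iff.mp (hg ⟨⟨y, hy⟩, subset_closure (by simp)⟩)
  exact ⟨g, p, q, congrArg (fun z : S => ((z : H) : G)) hp,
    congrArg (fun z : S => ((z : H) : G)) hq⟩

theorem IsLocallyCyclic.isMulCommutative {H : Subgroup G} (hH : IsLocallyCyclic H) :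
    IsMulCommutative H := by
  refine isMulCommutative_iff.mpr fun x y => Subtype.ext ?_
  obtain ⟨g, p, q, hp, hq⟩ := hH.exists_zpow_eq x.2 y.2
  simp only [coe_mul, ← hp, ← hq]
  exact (Commute.zpow_zpow_self g p q).eq

theorem IsLocallyCyclic.exists_zpow_eq_zpow {H : Subgroup G} (hH : IsLocallyCyclic H) {x y : G}
    (hx : x ∈ H) (hy : y ∈ H) (hx1 : x ≠ 1) : ∃ p q : ℤ, p ≠ 0 ∧ y ^ p = x ^ q := by
  obtain ⟨g, p, q, rfl, rfl⟩ := hH.exists_zpow_eq hx hy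
  refine ⟨p, q, fun hp => hx1 (by rw [hp, zpow_zero]), ?_⟩
  rw [← zpow_mul, ← zpow_mul, mul_comm]

theorem eq_of_zpow_eq_zpow_of_mem {N : Subgroup G} [IsMulCommutative N]
    (hN : ∀ x ∈ N, IsOfFinOrder x → x = 1) {x y : G} (hx : x ∈ N) (hy : y ∈ N) {n : ℤ}
    (hn : n ≠ 0) (h : x ^ n = y ^ n) : x = y := by
  have hxy : (x * y⁻¹) ^ n = 1 := by
    rw [Commute.mul_zpow (setLike_mul_comm hx (inv_mem hy)), inv_zpow, h,
      mul_inv_cancel]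
  exact mul_inv_eq_one.mp
    (hN _ (mul_mem hx (inv_mem hy)) (isOfFinOrder_iff_zpow_eq_one.mpr ⟨n, hn, hxy⟩))

def PeriodicRadicalTrivial (G : Type*) [Group G] : Prop :=
  ∀ N : Subgroup G, N.Normal → (∀ x ∈ N, IsOfFinOrder x) → N = ⊥

theorem PeriodicRadicalTrivial.eq_one_of_isOfFinOrder {N : Subgroup G} [N.Normal]
    [IsMulCommutative N] (hrad : PeriodicRadicalTrivial G) :
    ∀ x ∈ N, IsOfFinOrder x → x = 1 := by
  let T : Subgroup G :=
    { carrier := {x | x ∈ N ∧ IsOfFinOrder x}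
      one_mem' := ⟨one_mem N, IsOfFinOrder.one⟩
      mul_mem' := fun hx hy =>
        ⟨mul_mem hx.1 hy.1,
          Commute.isOfFinOrder_mul (setLike_mul_comm hx.1 hy.1) hx.2 hy.2⟩
      inv_mem' := fun hx => ⟨inv_mem hx.1, hx.2.inv⟩ }
  have hT : T.Normal :=
    ⟨fun x hx g => ⟨Normal.conj_mem ‹_› x hx.1 g, (isConj_iff.mpr ⟨g, rfl⟩).isOfFinOrder hx.2⟩⟩
  intro x hx hfin
  simpa using (hrad T hT fun _ h => h.2).le ⟨hx, hfin⟩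

theorem PeriodicRadicalTrivial.eq_one_of_mem_center (hrad : PeriodicRadicalTrivial G) {a : G}
    (ha : IsOfFinOrder a) (hc : a ∈ center G) : a = 1 := by
  have : (zpowers a).Normal := ⟨fun x hx g => by
    rw [mem_center_iff.mp (zpowers_le.mpr hc hx) g, mul_inv_cancel_right]; exact hx⟩
  have := hrad _ this (fun x hx => by obtain ⟨k, rfl⟩ := mem_zpowers_iff.mp hx; exact ha.zpow)
  exact zpowers_eq_bot.mp this

open scoped commutatorElement

theorem conj_commutatorElement_eq_of_commute_left {a b b' g g' : G} (hg : Commute g a)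
    (hg' : Commute g' a) (h : g * b = b' * g') : g * ⁅a, b⁆ * g⁻¹ = ⁅a, b'⁆ := by
  obtain rfl : b' = g * b * g'⁻¹ := by rw [h, mul_inv_cancel_right]
  have h' : g'⁻¹ * a⁻¹ * g' = a⁻¹ := by rw [hg'.inv_inv.eq, inv_mul_cancel_right]
  calc g * ⁅a, b⁆ * g⁻¹ = a * g * b * (g'⁻¹ * a⁻¹ * g') * b⁻¹ * g⁻¹ := by
        rw [h', ← hg.eq, commutatorElement_def]; group
    _ = ⁅a, g * b * g'⁻¹⁆ := by rw [commutatorElement_def]; group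

theorem conj_commutatorElement_eq_of_commute_right {a a' b g g' : G} (hg : Commute g b)
    (hg' : Commute g' b) (h : g * a = a' * g') : g * ⁅a, b⁆ * g⁻¹ = ⁅a', b⁆ := by
  obtain rfl : a' = g * a * g'⁻¹ := by rw [h, mul_inv_cancel_right]
  have h' : g' * b * g'⁻¹ = b := by rw [hg'.eq, mul_inv_cancel_right]
  calc g * ⁅a, b⁆ * g⁻¹ = g * a * b * a⁻¹ * (b⁻¹ * g⁻¹) := by rw [commutatorElement_def]; group
    _ = g * a * g'⁻¹ * (g' * b * g'⁻¹) * g' * a⁻¹ * g⁻¹ * b⁻¹ := by rw [← hg.inv_inv.eq]; group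
    _ = ⁅g * a * g'⁻¹, b⁆ := by rw [h', commutatorElement_def]; group

theorem commute_of_commute_pow {N : Subgroup G} [N.Normal] [IsMulCommutative N]
    (hN : ∀ x ∈ N, IsOfFinOrder x → x = 1) {g k : G} (hk : k ∈ N) {n : ℕ} (hn : n ≠ 0)
    (h : Commute g (k ^ n)) : Commute g k := by
  have hpow : (g * k * g⁻¹) ^ (n : ℤ) = k ^ (n : ℤ) := by
    rw [conj_zpow, zpow_natCast, h.eq, mul_inv_cancel_right]
  exact mul_inv_eq_iff_eq_mul.mp <|
    eq_of_zpow_eq_zpow_of_mem hN (Normal.conj_mem ‹_› k hk g) hk (Int.natCast_ne_zero.mpr hn) hpow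

theorem commutatorElement_pow_left {a b : G} (h : Commute a ⁅a, b⁆) (n : ℕ) :
    ⁅a ^ n, b⁆ = ⁅a, b⁆ ^ n := by
  induction n with
  | zero => simp
  | succ n ih =>
    calc ⁅a ^ (n + 1), b⁆ = a * ⁅a ^ n, b⁆ * a⁻¹ * ⁅a, b⁆ := by
          simp only [commutatorElement_def]; group
      _ = ⁅a, b⁆ ^ (n + 1) := by rw [ih, (h.pow_right n).eq, mul_inv_cancel_right, pow_succ]

theorem commute_of_commutatorElement_mem_of_mem_centralizer {N : Subgroup G}
    (hN : ∀ x ∈ N, IsOfFinOrder x → x = 1) {a b : G} (ha : IsOfFinOrder a) (hab : ⁅a, b⁆ ∈ N)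
    (haN : a ∈ centralizer N) : Commute a b := by
  have h : Commute a ⁅a, b⁆ := (mem_centralizer_iff.mp haN _ hab).symm
  have hfin : ⁅a, b⁆ ^ orderOf a = 1 := by
    rw [← commutatorElement_pow_left h, pow_orderOf_eq_one, commutatorElement_one_left]
  exact commutatorElement_eq_one_iff_commute.mp <|
    hN _ hab (isOfFinOrder_iff_pow_eq_one.mpr ⟨_, ha.orderOf_pos, hfin⟩)

theorem conj_pow_zpow_pow_eq {a x : G} {p q : ℤ} (h : (a * x * a⁻¹) ^ p = x ^ q) (k : ℕ) :
    (a ^ k * x * (a ^ k)⁻¹) ^ (p ^ k) = x ^ (q ^ k) := by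
  induction k with
  | zero => simp
  | succ k ih =>
    calc (a ^ (k + 1) * x * (a ^ (k + 1))⁻¹) ^ (p ^ (k + 1))
        = a * ((a ^ k * x * (a ^ k)⁻¹) ^ p ^ k) ^ p * a⁻¹ := by
          rw [← zpow_mul, ← pow_succ, ← conj_zpow, pow_succ']; group
      _ = ((a * x * a⁻¹) ^ p) ^ q ^ k := by
          rw [ih, ← zpow_mul, mul_comm, zpow_mul, conj_zpow, conj_zpow]
      _ = x ^ (q ^ (k + 1)) := by rw [h, ← zpow_mul, pow_succ']

section ConjNorm

variable {N : Subgroup G} [N.Normal]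

theorem conjNormal_apply_eq_self {a b : G}
    (hab : MulAut.conjNormal a = MulAut.conjNormal (H := N) b⁻¹) {y : N} (hy : Commute b y) :
    MulAut.conjNormal a y = y := by
  rw [hab]
  ext
  rw [MulAut.conjNormal_apply, inv_inv, hy.inv_left.eq, inv_mul_cancel_right]

variable (N) [IsMulCommutative N]

def conjNorm (g : G) (n : ℕ) : N →* N :=
  ∏ i ∈ Finset.range n, (MulAut.conjNormal (g ^ i)).toMonoidHom

variable {N}

theorem conjNorm_apply (g : G) (n : ℕ) (x : N) :
    conjNorm N g n x = ∏ i ∈ Finset.range n, MulAut.conjNormal (g ^ i) x :=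
  MonoidHom.finsetProd_apply _ _ _

theorem mul_pow_eq_conjNorm_mul (x : N) (g : G) (n : ℕ) :
    ((x : G) * g) ^ n = conjNorm N g n x * g ^ n := by
  induction n with
  | zero => simp [conjNorm]
  | succ n ih =>
    rw [pow_succ, ih]
    simp only [conjNorm_apply, Finset.prod_range_succ, Subgroup.coe_mul, MulAut.conjNormal_apply]
    group

theorem conjNormal_eq_of_mul_mem {v a b : G} (hv : v ∈ N) (h : v = a * b) :
    MulAut.conjNormal a = MulAut.conjNormal (H := N) b⁻¹ := by
  ext x
  obtain rfl : a = v * b⁻¹ := by rw [h, mul_inv_cancel_right]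
  have hx : b⁻¹ * x * b⁻¹⁻¹ ∈ N := Normal.conj_mem ‹_› _ x.2 _
  have e : v * b⁻¹ * x * (v * b⁻¹)⁻¹ = v * (b⁻¹ * x * b⁻¹⁻¹) * v⁻¹ := by group
  rw [MulAut.conjNormal_apply, MulAut.conjNormal_apply, e, setLike_mul_comm hv hx,
    mul_inv_cancel_right]

theorem conjNorm_eq_pow_of_mul_mem {v a b : G} (hv : v ∈ N) (h : v = a * b) {n : ℕ}
    (ha : a ^ n = 1) : (conjNorm N a n ⟨v, hv⟩ : G) = b ^ n := by
  have hσ : conjNorm N a n = conjNorm N b⁻¹ n := by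
    simp only [conjNorm, map_pow, conjNormal_eq_of_mul_mem hv h]
  have := mul_pow_eq_conjNorm_mul ⟨v, hv⟩ b⁻¹ n
  rw [← hσ, show v * b⁻¹ = a by rw [h, mul_inv_cancel_right], ha, inv_pow] at this
  exact (eq_of_mul_inv_eq_one this.symm)

theorem conjNorm_eq_pow_of_conjNormal_eq {g : G} {y : N} (hy : MulAut.conjNormal g y = y)
    (n : ℕ) : conjNorm N g n y = y ^ n := by
  have hfix (i : ℕ) : MulAut.conjNormal (g ^ i) y = y := by
    induction i with
    | zero => simp
    | succ i ih => rw [pow_succ, map_mul, MulAut.mul_apply, hy, ih]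
  rw [conjNorm_apply, Finset.prod_congr rfl fun i _ => hfix i, Finset.prod_const, Finset.card_range]

theorem conjNorm_comm {g h : G} (hgh : Commute g h) (m n : ℕ) (x : N) :
    conjNorm N g m (conjNorm N h n x) = conjNorm N h n (conjNorm N g m x) := by
  simp only [conjNorm_apply, map_prod, ← MulAut.mul_apply, ← map_mul, (hgh.pow_pow _ _).eq]
  exact Finset.prod_comm

end ConjNorm

section Product

variable {A B : Subgroup G}

theorem exists_eq_mul_swap (hprod : ∀ g : G, ∃ a ∈ A, ∃ b ∈ B, g = a * b) (g : G) :
    ∃ b ∈ B, ∃ a ∈ A, g = b * a := by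
  obtain ⟨a, ha, b, hb, h⟩ := hprod g⁻¹
  exact ⟨b⁻¹, inv_mem hb, a⁻¹, inv_mem ha, by rw [← mul_inv_rev, ← h, inv_inv]⟩

theorem exists_conj_commutatorElement_eq [IsMulCommutative A] [IsMulCommutative B]
    (hprod : ∀ g : G, ∃ a ∈ A, ∃ b ∈ B, g = a * b) (g a : G) {b : G} (hb : b ∈ B) :
    ∃ a' ∈ A, ∃ b' ∈ B, g * ⁅a, b⁆ * g⁻¹ = ⁅a', b'⁆ := by
  obtain ⟨α, hα, β, hβ, rfl⟩ := hprod g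
  obtain ⟨a', ha', δ, hδ, hβa⟩ := hprod (β * a)
  obtain ⟨b', hb', γ, hγ, hαb⟩ := exists_eq_mul_swap hprod (α * b)
  refine ⟨a', ha', b', hb', ?_⟩
  rw [← conj_commutatorElement_eq_of_commute_left (setLike_mul_comm hα ha')
      (setLike_mul_comm hγ ha') hαb,
    ← conj_commutatorElement_eq_of_commute_right (setLike_mul_comm hβ hb)
      (setLike_mul_comm hδ hb) hβa]
  group

theorem commutator_normal_of_isMulCommutative [IsMulCommutative A] [IsMulCommutative B]
    (hprod : ∀ g : G, ∃ a ∈ A, ∃ b ∈ B, g = a * b) : ⁅A, B⁆.Normal := by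
  let base : Set G := {x | ∃ a ∈ A, ∃ b ∈ B, ⁅a, b⁆ = x}
  suffices h : base = Group.conjugatesOfSet base by
    change (closure base).Normal
    rw [h]
    exact normalClosure_normal
  refine Set.Subset.antisymm Group.subset_conjugatesOfSet fun x hx => ?_
  simp_rw [Group.mem_conjugatesOfSet_iff, isConj_iff] at hx
  obtain ⟨_, ⟨a, ha, b, hb, rfl⟩, g, rfl⟩ := hx
  obtain ⟨a', ha', b', hb', h⟩ := exists_conj_commutatorElement_eq hprod g a hb
  exact ⟨a', ha', b', hb', h.symm⟩

theorem commute_commutatorElement [IsMulCommutative A] [IsMulCommutative B]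
    (hprod : ∀ g : G, ∃ a ∈ A, ∃ b ∈ B, g = a * b) {a b c d : G}
    (ha : a ∈ A) (hb : b ∈ B) (hc : c ∈ A) (hd : d ∈ B) : Commute ⁅a, b⁆ ⁅c, d⁆ := by
  obtain ⟨a₁, ha₁, δ, hδ, hda⟩ := hprod (d⁻¹ * a)
  obtain ⟨b₁, hb₁, γ, hγ, hcb⟩ := exists_eq_mul_swap hprod (c⁻¹ * b)
  have h₁ : d⁻¹ * ⁅a, b⁆ * d⁻¹⁻¹ = ⁅a₁, b⁆ :=
    conj_commutatorElement_eq_of_commute_right (setLike_mul_comm (inv_mem hd) hb)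
      (setLike_mul_comm hδ hb) hda
  have h₂ : c⁻¹ * ⁅a₁, b⁆ * c⁻¹⁻¹ = ⁅a₁, b₁⁆ :=
    conj_commutatorElement_eq_of_commute_left (setLike_mul_comm (inv_mem hc) ha₁)
      (setLike_mul_comm hγ ha₁) hcb
  have h₃ : d * ⁅a₁, b₁⁆ * d⁻¹ = ⁅a, b₁⁆ :=
    conj_commutatorElement_eq_of_commute_right (setLike_mul_comm hd hb₁)
      (setLike_mul_comm (inv_mem hδ) hb₁)
      (by rw [← eq_mul_inv_iff_mul_eq.mpr (by rw [mul_assoc, ← hda, mul_inv_cancel_left])])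
  have h₄ : c * ⁅a, b₁⁆ * c⁻¹ = ⁅a, b⁆ :=
    conj_commutatorElement_eq_of_commute_left (setLike_mul_comm hc ha)
      (setLike_mul_comm (inv_mem hγ) ha)
      (by rw [← eq_mul_inv_iff_mul_eq.mpr (by rw [mul_assoc, ← hcb, mul_inv_cancel_left])])
  have : ⁅c, d⁆ * ⁅a, b⁆ * ⁅c, d⁆⁻¹ = ⁅a, b⁆ :=
    calc ⁅c, d⁆ * ⁅a, b⁆ * ⁅c, d⁆⁻¹
        = c * (d * (c⁻¹ * (d⁻¹ * ⁅a, b⁆ * d⁻¹⁻¹) * c⁻¹⁻¹) * d⁻¹) * c⁻¹ := by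
          rw [commutatorElement_def c d]; group
      _ = ⁅a, b⁆ := by rw [h₁, h₂, h₃, h₄]
  exact (mul_inv_eq_iff_eq_mul.mp this).symm

theorem isMulCommutative_commutator [IsMulCommutative A] [IsMulCommutative B]
    (hprod : ∀ g : G, ∃ a ∈ A, ∃ b ∈ B, g = a * b) :
    IsMulCommutative (⁅A, B⁆ : Subgroup G) := by
  rw [Subgroup.commutator_def]
  refine isMulCommutative_closure ?_
  rintro _ ⟨a, ha, b, hb, rfl⟩ _ ⟨c, hc, d, hd, rfl⟩
  exact commute_commutatorElement hprod ha hb hc hd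

theorem eq_one_of_conjNorm_eq_one [IsMulCommutative A] [IsMulCommutative B] {N : Subgroup G}
    [N.Normal] [IsMulCommutative N]
    (hAper : ∀ x ∈ A, IsOfFinOrder x) (hBtf : ∀ x ∈ B, IsOfFinOrder x → x = 1)
    (hN : ∀ x ∈ N, IsOfFinOrder x → x = 1) (hprod : ∀ g : G, ∃ a ∈ A, ∃ b ∈ B, g = a * b)
    {a b : G} (ha : a ∈ A) (hb : b ∈ B)
    (hab : MulAut.conjNormal a = MulAut.conjNormal (H := N) b⁻¹) {w : N}
    (hw : conjNorm N a (orderOf a) w = 1) : w = 1 := by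
  obtain ⟨a', ha', b', hb', hw'⟩ := hprod w
  have h₁ := conjNorm_eq_pow_of_mul_mem w.2 hw' (pow_orderOf_eq_one a')
  have hfix : MulAut.conjNormal a (conjNorm N a' (orderOf a') w) = conjNorm N a' (orderOf a') w :=
    conjNormal_apply_eq_self hab (by rw [h₁]; exact setLike_mul_comm hb (pow_mem hb' _))
  have h₂ : b' ^ (orderOf a' * orderOf a) = 1 := by
    have := conjNorm_comm (N := N) (setLike_mul_comm ha ha') (orderOf a) (orderOf a') w
    rw [hw, map_one, conjNorm_eq_pow_of_conjNormal_eq hfix] at this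
    rw [pow_mul, ← h₁, ← Subgroup.coe_pow, this, OneMemClass.coe_one]
  have hb'1 : b' = 1 := hBtf b' hb' <| isOfFinOrder_iff_pow_eq_one.mpr
    ⟨_, Nat.mul_pos (hAper a' ha').orderOf_pos (hAper a ha).orderOf_pos, h₂⟩
  rw [hb'1, mul_one] at hw'
  exact Subtype.ext (hN w w.2 (hw' ▸ hAper a' ha'))

theorem exists_pow_mem_of_mem [IsMulCommutative A] [IsMulCommutative B] {N : Subgroup G}
    [N.Normal] [IsMulCommutative N]
    (hAper : ∀ x ∈ A, IsOfFinOrder x) (hBtf : ∀ x ∈ B, IsOfFinOrder x → x = 1)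
    (hN : ∀ x ∈ N, IsOfFinOrder x → x = 1) (hprod : ∀ g : G, ∃ a ∈ A, ∃ b ∈ B, g = a * b)
    {v : G} (hv : v ∈ N) : ∃ n : ℕ, 0 < n ∧ v ^ n ∈ B := by
  obtain ⟨a, ha, b, hb, hvab⟩ := hprod v
  have hab := conjNormal_eq_of_mul_mem hv hvab
  have h₁ := conjNorm_eq_pow_of_mul_mem hv hvab (pow_orderOf_eq_one a)
  set y := conjNorm N a (orderOf a) ⟨v, hv⟩
  have hy : MulAut.conjNormal a y = y :=
    conjNormal_apply_eq_self hab (by rw [h₁]; exact Commute.self_pow b _)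
  have hw : conjNorm N a (orderOf a) (⟨v, hv⟩ ^ orderOf a * y⁻¹) = 1 := by
    rw [map_mul, map_pow, map_inv, conjNorm_eq_pow_of_conjNormal_eq hy, mul_inv_cancel]
  have hvn := congrArg Subtype.val <| mul_inv_eq_one.mp <|
    eq_one_of_conjNorm_eq_one hAper hBtf hN hprod ha hb hab hw
  rw [Subgroup.coe_pow, h₁] at hvn
  exact ⟨orderOf a, (hAper a ha).orderOf_pos, hvn ▸ pow_mem hb _⟩

theorem eq_one_of_forall_commute [IsMulCommutative A] (hrad : PeriodicRadicalTrivial G)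
    (hAper : ∀ x ∈ A, IsOfFinOrder x) (hprod : ∀ g : G, ∃ a ∈ A, ∃ b ∈ B, g = a * b) {a : G}
    (ha : a ∈ A) (h : ∀ b ∈ B, Commute a b) : a = 1 :=
  hrad.eq_one_of_mem_center (hAper a ha) <| mem_center_iff.mpr fun g => by
    obtain ⟨α, hα, β, hβ, rfl⟩ := hprod g
    exact (Commute.mul_right (setLike_mul_comm ha hα) (h β hβ)).eq.symm

theorem normal_of_forall_eq_mul [IsMulCommutative A] [IsMulCommutative B]
    (hrad : PeriodicRadicalTrivial G)
    (hAper : ∀ x ∈ A, IsOfFinOrder x) (hBtf : ∀ x ∈ B, IsOfFinOrder x → x = 1)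
    (hprod : ∀ g : G, ∃ a ∈ A, ∃ b ∈ B, g = a * b) : B.Normal := by
  have := commutator_normal_of_isMulCommutative hprod
  have := isMulCommutative_commutator hprod
  have hK := hrad.eq_one_of_isOfFinOrder (N := ⁅A, B⁆)
  have hBC : B ≤ centralizer (⁅A, B⁆ : Subgroup G) := fun β hβ =>
    mem_centralizer_iff.mpr fun k hk => by
      obtain ⟨n, hn, hkn⟩ := exists_pow_mem_of_mem hAper hBtf hK hprod hk
      exact (commute_of_commute_pow hK hk hn.ne' (setLike_mul_comm hβ hkn)).eq.symm
  have hCB : centralizer (⁅A, B⁆ : Subgroup G) ≤ B := fun v hv => by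
    obtain ⟨a, ha, b, hb, rfl⟩ := hprod v
    have haC : a ∈ centralizer (⁅A, B⁆ : Subgroup G) := by simpa using mul_mem hv (hBC (inv_mem hb))
    have ha1 := eq_one_of_forall_commute hrad hAper hprod ha fun β hβ =>
      commute_of_commutatorElement_mem_of_mem_centralizer hK (hAper a ha)
        (commutator_mem_commutator ha hβ) haC
    rwa [ha1, one_mul]
  rw [le_antisymm hBC hCB]
  exact normal_centralizer

theorem conj_eq_or_conj_eq_inv [IsMulCommutative B] (hBlc : IsLocallyCyclic B)
    (hBtf : ∀ x ∈ B, IsOfFinOrder x → x = 1) {a x : G} (ha : IsOfFinOrder a) (hx : x ∈ B)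
    (hax : a * x * a⁻¹ ∈ B) : a * x * a⁻¹ = x ∨ a * x * a⁻¹ = x⁻¹ := by
  by_cases hx1 : x = 1
  · simp [hx1]
  obtain ⟨p, q, hp, hpq⟩ := hBlc.exists_zpow_eq_zpow hx hax hx1
  have hn := conj_pow_zpow_pow_eq hpq (orderOf a)
  rw [pow_orderOf_eq_one, one_mul, inv_one, mul_one] at hn
  have hpq' := injective_zpow_iff_not_isOfFinOrder.mpr (fun h => hx1 (hBtf x hx h)) hn
  rcases (pow_eq_pow_iff_of_ne_zero ha.orderOf_pos.ne').mp hpq' with rfl | ⟨rfl, -⟩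
  · exact .inl (eq_of_zpow_eq_zpow_of_mem hBtf hax hx hp hpq)
  · refine .inr (eq_of_zpow_eq_zpow_of_mem hBtf hax (inv_mem hx) hp ?_)
    rw [hpq, inv_zpow', neg_neg]

theorem conj_eq_of_conj_eq [IsMulCommutative B] (hBlc : IsLocallyCyclic B)
    (hBtf : ∀ x ∈ B, IsOfFinOrder x → x = 1) {a x y : G} (ha : IsOfFinOrder a) (hx : x ∈ B)
    (hax : a * x * a⁻¹ ∈ B) (hy : y ∈ B) (hy1 : y ≠ 1) (hay : a * y * a⁻¹ = y) :
    a * x * a⁻¹ = x := by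
  refine (conj_eq_or_conj_eq_inv hBlc hBtf ha hx hax).elim id fun h => ?_
  obtain ⟨p, q, hp, hpq⟩ := hBlc.exists_zpow_eq_zpow hy hx hy1
  have : x⁻¹ ^ p = x ^ p := by rw [← h, conj_zpow, hpq, ← conj_zpow, hay]
  rw [h, eq_of_zpow_eq_zpow_of_mem hBtf (inv_mem hx) hx hp this]

theorem conj_eq_inv_of_ne_one [IsMulCommutative A] [IsMulCommutative B] [B.Normal]
    (hrad : PeriodicRadicalTrivial G) (hAper : ∀ x ∈ A, IsOfFinOrder x)
    (hBlc : IsLocallyCyclic B) (hBtf : ∀ x ∈ B, IsOfFinOrder x → x = 1)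
    (hprod : ∀ g : G, ∃ a ∈ A, ∃ b ∈ B, g = a * b) :
    ∀ a ∈ A, a ≠ 1 → ∀ x ∈ B, a * x * a⁻¹ = x⁻¹ := by
  intro a ha ha1
  have hconj (x : G) (hx : x ∈ B) : a * x * a⁻¹ ∈ B := Normal.conj_mem ‹_› x hx a
  by_contra! ⟨y, hy, hyinv⟩
  have hy1 : y ≠ 1 := by rintro rfl; simp at hyinv
  have hay := (conj_eq_or_conj_eq_inv hBlc hBtf (hAper a ha) hy (hconj y hy)).resolve_right hyinv
  refine ha1 (eq_one_of_forall_commute hrad hAper hprod ha fun x hx => ?_)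
  exact mul_inv_eq_iff_eq_mul.mp
    (conj_eq_of_conj_eq hBlc hBtf (hAper a ha) hx (hconj x hx) hy hy1 hay)

theorem sq_eq_one_and_eq_zpowers [IsMulCommutative A] (hrad : PeriodicRadicalTrivial G)
    (hAper : ∀ x ∈ A, IsOfFinOrder x) (hprod : ∀ g : G, ∃ a ∈ A, ∃ b ∈ B, g = a * b)
    (hinv : ∀ a ∈ A, a ≠ 1 → ∀ x ∈ B, a * x * a⁻¹ = x⁻¹) {a : G} (ha : a ∈ A) (ha1 : a ≠ 1) :
    a ^ 2 = 1 ∧ A = zpowers a := by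
  have hmul {a' : G} (ha' : a' ∈ A) (ha'1 : a' ≠ 1) : a * a' = 1 :=
    eq_one_of_forall_commute hrad hAper hprod (mul_mem ha ha') fun x hx => by
      refine mul_inv_eq_iff_eq_mul.mp ?_
      rw [mul_inv_rev, show a * a' * x * (a'⁻¹ * a⁻¹) = a * (a' * x * a'⁻¹) * a⁻¹ by group,
        hinv a' ha' ha'1 x hx, ← inv_inj, conj_inv, inv_inv, hinv a ha ha1 x hx]
  refine ⟨(sq a).trans (hmul ha ha1), le_antisymm (fun a' ha' => ?_) (zpowers_le.mpr ha)⟩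
  by_cases ha'1 : a' = 1
  · exact ha'1 ▸ one_mem _
  · exact eq_inv_of_mul_eq_one_right (hmul ha' ha'1) ▸ inv_mem (mem_zpowers a)

end Product

end

theorem product_with_trivial_periodic_radical_general {G : Type*} [Group G] (A B : Subgroup G)
    (hAper : ∀ x ∈ A, IsOfFinOrder x) (hAlc : IsLocallyCyclic A)
    (hBtf : ∀ x ∈ B, x ≠ 1 → ¬ IsOfFinOrder x) (hBlc : IsLocallyCyclic B)
    (hprod : ∀ g : G, ∃ a ∈ A, ∃ b ∈ B, g = a * b)
    (hrad : ∀ N : Subgroup G, N.Normal → (∀ x ∈ N, IsOfFinOrder x) → N = ⊥) :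
    (A = ⊥ ∧ B = ⊤) ∨
      ∃ a : G, a ∈ A ∧ a ^ 2 = 1 ∧ A = Subgroup.zpowers a ∧ B.Normal ∧
        B ⊔ Subgroup.zpowers a = ⊤ ∧ B ⊓ Subgroup.zpowers a = ⊥ ∧
        ∀ b ∈ B, a⁻¹ * b * a = b⁻¹ := by
  have := hAlc.isMulCommutative
  have := hBlc.isMulCommutative
  have hBtf' (x : G) (hx : x ∈ B) (hfin : IsOfFinOrder x) : x = 1 := by
    by_contra hx1; exact hBtf x hx hx1 hfin
  have hBn := normal_of_forall_eq_mul hrad hAper hBtf' hprod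
  obtain hA | ⟨a, ha, ha1⟩ := A.bot_or_exists_ne_one
  · refine .inl ⟨hA, eq_top_iff.mpr fun g _ => ?_⟩
    obtain ⟨a, ha, b, hb, rfl⟩ := hprod g
    rw [hA, mem_bot] at ha
    rwa [ha, one_mul]
  have hinv := conj_eq_inv_of_ne_one hrad hAper hBlc hBtf' hprod
  obtain ⟨hsq, hAa⟩ := sq_eq_one_and_eq_zpowers hrad hAper hprod hinv ha ha1
  refine .inr ⟨a, ha, hsq, hAa, hBn, eq_top_iff.mpr fun g _ => ?_,
    eq_bot_iff.mpr fun x ⟨hxB, hxA⟩ => hBtf' x hxB (hAper x (hAa ▸ hxA)), fun b hb => ?_⟩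
  · obtain ⟨a', ha', b, hb, rfl⟩ := hprod g
    exact mul_mem (mem_sup_right (hAa ▸ ha')) (mem_sup_left hb)
  · have h := hinv a ha ha1 b hb
    rwa [inv_eq_of_mul_eq_one_right ((sq a).symm.trans hsq)] at h ⊢

/-- Let `G = AB` with `A` periodic locally cyclic, `B` non-trivial torsion-free locally
cyclic, and suppose every periodic normal subgroup of `G` is trivial. Then either
`A = 1` and `G = B`, or `A = ⟨a⟩` with `a² = 1` and `G = B ⋊ ⟨a⟩` where `a` inverts `B`. -/
theorem product_with_trivial_periodic_radical {G : Type*} [Group G] (A B : Subgroup G)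
    (hAper : ∀ x ∈ A, IsOfFinOrder x) (hAlc : IsLocallyCyclic A)
    (hBtf : ∀ x ∈ B, x ≠ 1 → ¬ IsOfFinOrder x) (hBlc : IsLocallyCyclic B)
    (hBne : B ≠ ⊥)
    (hprod : ∀ g : G, ∃ a ∈ A, ∃ b ∈ B, g = a * b)
    (hrad : ∀ N : Subgroup G, N.Normal → (∀ x ∈ N, IsOfFinOrder x) → N = ⊥) :
    (A = ⊥ ∧ B = ⊤) ∨
      ∃ a : G, a ∈ A ∧ a ^ 2 = 1 ∧ A = Subgroup.zpowers a ∧ B.Normal ∧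
        B ⊔ Subgroup.zpowers a = ⊤ ∧ B ⊓ Subgroup.zpowers a = ⊥ ∧
        ∀ b ∈ B, a⁻¹ * b * a = b⁻¹ :=
  product_with_trivial_periodic_radical_general A B hAper hAlc hBtf hBlc hprod hrad
end
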